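/- arXiv:math/0412171 — 5 statements merged into one kernel-verified Lean document; each statement's English description precedes it below -/
import Mathlib

section
/- Let (e_n) be a seminormalized quasisubsymmetric basic sequence in a Banach space X. Then there exists a constant S > 0 such that for any two strictly increasing sequences (k_n) and (ℓ_n) of positive integers with k_n ≤ ℓ_n for all n, one has ‖Σ a_n e_{ℓ_n}‖ ≤ S‖Σ a_n e_{k_n}‖ for all finitely supported scalar sequences (a_n). -/
open Filter Topology

section Defs

variable {X : Type*} [NormedAddCommGroup X] [NormedSpace ℝ X]

/-- A sequence `(e n)` in a normed space is *seminormalized* if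
`0 < inf_n ‖e n‖` and `sup_n ‖e n‖ < ∞`. -/
def Seminormalized (e : ℕ → X) : Prop :=
  ∃ d D : ℝ, 0 < d ∧ ∀ n, d ≤ ‖e n‖ ∧ ‖e n‖ ≤ D

/-- `(e n)` is a *basic sequence*: each `e n` is nonzero and there is a basis
constant `B ≥ 1` such that `‖∑_{n<m} a n • e n‖ ≤ B * ‖∑_{n<M} a n • e n‖`
for all `m ≤ M` and all scalars. -/
def IsBasicSeq (e : ℕ → X) : Prop :=
  (∀ n, e n ≠ 0) ∧ ∃ B : ℝ, 1 ≤ B ∧ ∀ (a : ℕ → ℝ) (m M : ℕ), m ≤ M →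
    ‖∑ n ∈ Finset.range m, a n • e n‖ ≤ B * ‖∑ n ∈ Finset.range M, a n • e n‖

/-- `(x n)` *dominates* `(y n)`: there is `C > 0` with
`‖∑ a n • y n‖ ≤ C * ‖∑ a n • x n‖` for all finitely supported scalars. -/
def Dominates (x y : ℕ → X) : Prop :=
  ∃ C : ℝ, 0 < C ∧ ∀ (a : ℕ → ℝ) (F : Finset ℕ),
    ‖∑ n ∈ F, a n • y n‖ ≤ C * ‖∑ n ∈ F, a n • x n‖

/-- `(e n)` is *quasisubsymmetric*: for any two strictly increasing sequences
`k`, `l` of indices with `k n ≤ l n` for all `n`, `(e (k n))` dominates `(e (l n))`. -/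
def QuasiSubsymmetric (e : ℕ → X) : Prop :=
  ∀ k l : ℕ → ℕ, StrictMono k → StrictMono l → (∀ n, k n ≤ l n) →
    Dominates (fun n => e (k n)) (fun n => e (l n))

/-- `(e n)` is an *unconditional basic sequence*. -/
def IsUncondBasicSeq (e : ℕ → X) : Prop :=
  IsBasicSeq e ∧ ∃ K : ℝ, ∀ (a ε : ℕ → ℝ), (∀ n, ε n = 1 ∨ ε n = -1) →
    ∀ F : Finset ℕ, ‖∑ n ∈ F, (ε n * a n) • e n‖ ≤ K * ‖∑ n ∈ F, a n • e n‖

/-- `(e n)` is a *Schauder basis* of `X`: every `x ∈ X` has a unique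
representation `x = ∑ n, a n • e n` (convergence of partial sums in order). -/
def IsSchauderBasis (e : ℕ → X) : Prop :=
  ∀ x : X, ∃! a : ℕ → ℝ,
    Tendsto (fun M => ∑ n ∈ Finset.range M, a n • e n) atTop (𝓝 x)

/-- `(e n)` is equivalent to the unit vector basis of `ℓ¹`. -/
def EquivL1Basis (e : ℕ → X) : Prop :=
  ∃ c C : ℝ, 0 < c ∧ ∀ (a : ℕ → ℝ) (F : Finset ℕ),
    c * ∑ n ∈ F, |a n| ≤ ‖∑ n ∈ F, a n • e n‖ ∧
      ‖∑ n ∈ F, a n • e n‖ ≤ C * ∑ n ∈ F, |a n|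

end Defs

/-!
Either some tail of `e` is uniformly quasisubsymmetric (for some `R` and `m`, every spread of a
block supported on positions `≥ R` costs at most the factor `m`) or not. In the first case the at
most `R` remaining coefficients are bounded by the basis constant and the bounds on `‖e n‖`, which
gives a uniform constant. In the second case blocks with ratios `1, 2, 3, …` exist arbitrarily far
out; splicing them one after another yields a single spreading pair `(k, l)` for which `(e (k n))`
does not dominate `(e (l n))`.
-/

open Set

structure SpreadingPair where
  k : ℕ → ℕ
  l : ℕ → ℕ
  strictMono_k : StrictMono k
  strictMono_l : StrictMono l
  le : ∀ n, k n ≤ l n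

lemma strictMono_ite_lt {f g : ℕ → ℕ} (hf : StrictMono f) (hg : StrictMono g) {T : ℕ}
    (h : f T ≤ g T) : StrictMono fun n => if n < T then f n else g n := by
  refine strictMono_nat_of_lt_succ fun n => ?_
  split_ifs with h₁ h₂ h₂
  · exact hf (lt_add_one n)
  · obtain rfl : n + 1 = T := by omega
    exact (hf (lt_add_one n)).trans_le h
  · omega
  · exact hg (lt_add_one n)

lemma eqOn_Iio_of_le {α : Type*} {f : ℕ → ℕ → α} {T : ℕ → ℕ} (hT : Monotone T)
    (hf : ∀ j, EqOn (f (j + 1)) (f j) (Iio (T j))) {i j : ℕ} (hij : i ≤ j) :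
    EqOn (f j) (f i) (Iio (T i)) := by
  induction hij with
  | refl => exact eqOn_refl _ _
  | step hle ih => exact ((hf _).mono (Iio_subset_Iio (hT hle))).trans ih

lemma exists_forall_eqOn {α : Type*} {f : ℕ → ℕ → α} {T : ℕ → ℕ} (hT : StrictMono T)
    (hf : ∀ j, EqOn (f (j + 1)) (f j) (Iio (T j))) :
    ∃ g : ℕ → α, ∀ j, EqOn g (f j) (Iio (T j)) := by
  refine ⟨fun n => f (n + 1) n, fun j n (hn : n < T j) => ?_⟩
  have hn' : n < T (n + 1) := (lt_add_one n).trans_le hT.le_apply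
  exact (eqOn_Iio_of_le hT.monotone hf (le_max_right j (n + 1)) hn').symm.trans
    (eqOn_Iio_of_le hT.monotone hf (le_max_left j (n + 1)) hn)

namespace SpreadingPair

def comp (p : SpreadingPair) {φ : ℕ → ℕ} (hφ : StrictMono φ) : SpreadingPair where
  k := p.k ∘ φ
  l := p.l ∘ φ
  strictMono_k := p.strictMono_k.comp hφ
  strictMono_l := p.strictMono_l.comp hφ
  le n := p.le (φ n)

def splice (p q : SpreadingPair) (T : ℕ) (h : p.l T ≤ q.k T) : SpreadingPair where
  k n := if n < T then p.k n else q.k n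
  l n := if n < T then p.l n else q.l n
  strictMono_k := strictMono_ite_lt p.strictMono_k q.strictMono_k ((p.le T).trans h)
  strictMono_l := strictMono_ite_lt p.strictMono_l q.strictMono_l (h.trans (q.le T))
  le n := by split_ifs <;> [exact p.le n; exact q.le n]

lemma exists_limit {p : ℕ → SpreadingPair} {T : ℕ → ℕ} (hT : StrictMono T)
    (hk : ∀ j, EqOn (p (j + 1)).k (p j).k (Iio (T j)))
    (hl : ∀ j, EqOn (p (j + 1)).l (p j).l (Iio (T j))) :
    ∃ q : SpreadingPair, ∀ j, EqOn q.k (p j).k (Iio (T j)) ∧ EqOn q.l (p j).l (Iio (T j)) := by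
  obtain ⟨k, hk⟩ := exists_forall_eqOn (f := fun j => (p j).k) hT hk
  obtain ⟨l, hl⟩ := exists_forall_eqOn (f := fun j => (p j).l) hT hl
  have hmem : ∀ n, n + 1 ∈ Iio (T (n + 2)) := fun n =>
    (lt_add_one (n + 1)).trans_le hT.le_apply
  have hmem' : ∀ n, n ∈ Iio (T (n + 2)) := fun n => (lt_add_one n).trans (hmem n)
  refine ⟨⟨k, l, strictMono_nat_of_lt_succ fun n => ?_, strictMono_nat_of_lt_succ fun n => ?_,
    fun n => ?_⟩, fun j => ⟨hk j, hl j⟩⟩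
  · rw [hk _ (hmem' n), hk _ (hmem n)]; exact (p _).strictMono_k (lt_add_one n)
  · rw [hl _ (hmem' n), hl _ (hmem n)]; exact (p _).strictMono_l (lt_add_one n)
  · rw [hk _ (hmem' n), hl _ (hmem' n)]; exact (p _).le n

-- Each block is spliced in after the prefix `[0, T)` built so far; asking for `R ≤ p.k T` with
-- `R := p.l T` makes the splice strictly monotone.
theorem exists_forall_of_local {P : ℕ → SpreadingPair → Finset ℕ → Prop}
    (hP : ∀ j p q (F : Finset ℕ), EqOn p.k q.k F → EqOn p.l q.l F → P j p F → P j q F)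
    (h : ∀ j T R, ∃ p : SpreadingPair, R ≤ p.k T ∧ ∃ F : Finset ℕ, (∀ n ∈ F, T ≤ n) ∧ P j p F) :
    ∃ p : SpreadingPair, ∀ j, ∃ F, P j p F := by
  have step : ∀ j (p : SpreadingPair) (T : ℕ), ∃ (q : SpreadingPair) (T' : ℕ) (F : Finset ℕ),
      EqOn q.k p.k (Iio T) ∧ EqOn q.l p.l (Iio T) ∧ T < T' ∧ (∀ n ∈ F, n < T') ∧ P j q F := by
    intro j p T
    obtain ⟨q, hq, F, hFT, hPF⟩ := h j T (p.l T)
    refine ⟨p.splice q T hq, T + F.sup id + 1, F, fun n hn => if_pos hn, fun n hn => if_pos hn,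
      by omega, fun n hn => ?_, hP j q _ F (fun n hn => ?_) (fun n hn => ?_) hPF⟩
    · have := Finset.le_sup (f := id) hn
      simp only [id] at this
      omega
    · exact (if_neg (not_lt.2 (hFT n hn))).symm
    · exact (if_neg (not_lt.2 (hFT n hn))).symm
  choose next nextT nextF hk hl hT hF hPnext using step
  let stage : ℕ → SpreadingPair × ℕ := fun j =>
    Nat.rec (⟨id, id, strictMono_id, strictMono_id, fun _ => le_rfl⟩, 0)
      (fun j s => (next j s.1 s.2, nextT j s.1 s.2)) j
  obtain ⟨q, hq⟩ := exists_limit (p := fun j => (stage j).1) (T := fun j => (stage j).2)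
    (strictMono_nat_of_lt_succ fun j => hT j _ _) (fun j => hk j _ _) (fun j => hl j _ _)
  have hFj : ∀ j, (nextF j (stage j).1 (stage j).2 : Set ℕ) ⊆ Iio (stage (j + 1)).2 :=
    fun j n hn => hF j _ _ n hn
  exact ⟨q, fun j => ⟨_, hP j _ _ _ ((hq (j + 1)).1.symm.mono (hFj j))
    ((hq (j + 1)).2.symm.mono (hFj j)) (hPnext j _ _)⟩⟩

end SpreadingPair

section BasicSequence

open Finset

variable {X : Type*} [NormedAddCommGroup X] [NormedSpace ℝ X]

def HasBasisConstant (e : ℕ → X) (B : ℝ) : Prop :=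
  ∀ (a : ℕ → ℝ) (m M : ℕ), m ≤ M →
    ‖∑ n ∈ range m, a n • e n‖ ≤ B * ‖∑ n ∈ range M, a n • e n‖

lemma sum_range_sum_fiber_smul (v : ℕ → X) (k : ℕ → ℕ) (a : ℕ → ℝ) (F : Finset ℕ) (c : ℕ) :
    ∑ i ∈ range c, (∑ n ∈ F with k n = i, a n) • v i = ∑ n ∈ F with k n < c, a n • v (k n) := by
  simp_rw [sum_smul, sum_filter]
  rw [sum_comm]
  refine sum_congr rfl fun n _ => ?_
  simp

namespace HasBasisConstant

variable {e : ℕ → X} {B : ℝ} {k : ℕ → ℕ}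

lemma norm_sum_filter_lt_le (hB : HasBasisConstant e B) (hk : StrictMono k) (a : ℕ → ℝ)
    (F : Finset ℕ) (N : ℕ) :
    ‖∑ n ∈ F with n < N, a n • e (k n)‖ ≤ B * ‖∑ n ∈ F, a n • e (k n)‖ := by
  have key := hB (fun i => ∑ n ∈ F with k n = i, a n) (k N) (k N + F.sup k + 1) (by omega)
  have hall : F.filter (fun n => k n < k N + F.sup k + 1) = F :=
    filter_true_of_mem fun n hn => by have := le_sup (f := k) hn; omega
  simpa only [sum_range_sum_fiber_smul, hk.lt_iff_lt, hall] using key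

lemma norm_smul_le (hB : HasBasisConstant e B) (hk : StrictMono k) (a : ℕ → ℝ)
    {F : Finset ℕ} {p : ℕ} (hp : p ∈ F) :
    ‖a p • e (k p)‖ ≤ 2 * B * ‖∑ n ∈ F, a n • e (k n)‖ := by
  have hsplit : ∑ n ∈ F with n < p + 1, a n • e (k n) =
      ∑ n ∈ F with n < p, a n • e (k n) + a p • e (k p) := by
    rw [show F.filter (· < p + 1) = insert p (F.filter (· < p)) by ext; grind,
      sum_insert (by simp), add_comm]
  calc ‖a p • e (k p)‖
      = ‖∑ n ∈ F with n < p + 1, a n • e (k n) - ∑ n ∈ F with n < p, a n • e (k n)‖ := by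
        rw [hsplit, add_sub_cancel_left]
    _ ≤ B * ‖∑ n ∈ F, a n • e (k n)‖ + B * ‖∑ n ∈ F, a n • e (k n)‖ :=
        (norm_sub_le _ _).trans (add_le_add (hB.norm_sum_filter_lt_le hk a F _)
          (hB.norm_sum_filter_lt_le hk a F _))
    _ = 2 * B * ‖∑ n ∈ F, a n • e (k n)‖ := by ring

end HasBasisConstant

end BasicSequence

section QuasiSubsymmetric

open Finset

variable {X : Type*} [NormedAddCommGroup X] [NormedSpace ℝ X] {e : ℕ → X}

def QuasiSubsymmetricWith (e : ℕ → X) (R : ℕ) (C : ℝ) : Prop :=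
  ∀ (p : SpreadingPair) (a : ℕ → ℝ) (F : Finset ℕ), (∀ n ∈ F, R ≤ n) →
    ‖∑ n ∈ F, a n • e (p.l n)‖ ≤ C * ‖∑ n ∈ F, a n • e (p.k n)‖

theorem QuasiSubsymmetricWith.to_zero {R : ℕ} {m B d D : ℝ} (h : QuasiSubsymmetricWith e R m)
    (hm : 0 ≤ m) (hB : HasBasisConstant e B) (hB₀ : 0 ≤ B) (hd : 0 < d)
    (hde : ∀ n, d ≤ ‖e n‖) (hDe : ∀ n, ‖e n‖ ≤ D) :
    QuasiSubsymmetricWith e 0 (R * (2 * B * D / d) + m * (1 + B)) := by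
  intro p a F _
  set x := ∑ n ∈ F, a n • e (p.k n)
  have hD : 0 ≤ D := hd.le.trans ((hde 0).trans (hDe 0))
  have hcoef : ∀ n ∈ F, ‖a n • e (p.l n)‖ ≤ 2 * B * D / d * ‖x‖ := fun n hn => by
    calc ‖a n • e (p.l n)‖ ≤ ‖a n‖ * d * (D / d) := by
          rw [norm_smul, mul_assoc, mul_div_cancel₀ _ hd.ne']
          exact mul_le_mul_of_nonneg_left (hDe _) (norm_nonneg _)
      _ ≤ ‖a n • e (p.k n)‖ * (D / d) := by
          rw [norm_smul]; gcongr; exact hde _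
      _ ≤ 2 * B * ‖x‖ * (D / d) := by gcongr; exact hB.norm_smul_le p.strictMono_k a hn
      _ = 2 * B * D / d * ‖x‖ := by ring
  have hhead : ‖∑ n ∈ F with n < R, a n • e (p.l n)‖ ≤ R * (2 * B * D / d) * ‖x‖ := by
    have hcard : #(F.filter (· < R)) ≤ R :=
      (Finset.card_le_card fun n hn => by simpa using (mem_filter.1 hn).2).trans
        (card_range R).le
    calc ‖∑ n ∈ F with n < R, a n • e (p.l n)‖
        ≤ ∑ n ∈ F with n < R, ‖a n • e (p.l n)‖ := norm_sum_le _ _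
      _ ≤ #(F.filter (· < R)) • (2 * B * D / d * ‖x‖) :=
          sum_le_card_nsmul _ _ _ fun n hn => hcoef n (mem_filter.1 hn).1
      _ ≤ R * (2 * B * D / d) * ‖x‖ := by
          rw [nsmul_eq_mul, mul_assoc (R : ℝ)]
          gcongr
  have htail : ‖∑ n ∈ F with ¬n < R, a n • e (p.l n)‖ ≤ m * ((1 + B) * ‖x‖) := by
    refine (h p a _ fun n hn => not_lt.1 (mem_filter.1 hn).2).trans ?_
    gcongr
    rw [eq_sub_of_add_eq' (sum_filter_add_sum_filter_not F (· < R) fun n => a n • e (p.k n))]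
    calc ‖x - ∑ n ∈ F with n < R, a n • e (p.k n)‖ ≤ ‖x‖ + B * ‖x‖ :=
          (norm_sub_le _ _).trans
            (add_le_add le_rfl (hB.norm_sum_filter_lt_le p.strictMono_k a F R))
      _ = (1 + B) * ‖x‖ := by ring
  calc ‖∑ n ∈ F, a n • e (p.l n)‖
      = ‖∑ n ∈ F with n < R, a n • e (p.l n) + ∑ n ∈ F with ¬n < R, a n • e (p.l n)‖ := by
        rw [sum_filter_add_sum_filter_not]
    _ ≤ R * (2 * B * D / d) * ‖x‖ + m * ((1 + B) * ‖x‖) :=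
        (norm_add_le _ _).trans (add_le_add hhead htail)
    _ = (R * (2 * B * D / d) + m * (1 + B)) * ‖x‖ := by ring

-- Shifting positions down by `R` keeps the values of `k` on the block at least `R`.
lemma exists_lt_of_not_quasiSubsymmetricWith {R T : ℕ} {m : ℝ}
    (h : ¬QuasiSubsymmetricWith e (R + T) m) :
    ∃ p : SpreadingPair, R ≤ p.k T ∧ ∃ F : Finset ℕ, (∀ n ∈ F, T ≤ n) ∧
      ∃ a : ℕ → ℝ, m * ‖∑ n ∈ F, a n • e (p.k n)‖ < ‖∑ n ∈ F, a n • e (p.l n)‖ := by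
  simp only [QuasiSubsymmetricWith, not_forall, not_le, exists_prop] at h
  obtain ⟨p, a, F, hF, hlt⟩ := h
  have hshift : StrictMono (· + R) := strictMono_id.add_const R
  have hinj : Set.InjOn (· + R) ((· + R) ⁻¹' (F : Set ℕ)) := hshift.injective.injOn
  have hsum : ∀ v : ℕ → X, ∑ n ∈ F.preimage (· + R) hinj, a (n + R) • v (n + R) =
      ∑ n ∈ F, a n • v n := fun v =>
    sum_preimage (· + R) F hinj (fun n => a n • v n) fun n hn hR =>
      (hR ⟨n - R, by have := hF n hn; simp only; omega⟩).elim
  refine ⟨p.comp hshift, ?_, F.preimage (· + R) hinj, fun n hn => ?_, a ∘ (· + R), ?_⟩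
  · exact le_add_self.trans p.strictMono_k.le_apply
  · have := hF _ (mem_preimage.1 hn); omega
  · simpa only [SpreadingPair.comp, Function.comp_apply, hsum (fun n => e (p.k n)),
      hsum (fun n => e (p.l n))] using hlt

theorem QuasiSubsymmetric.exists_quasiSubsymmetricWith (h : QuasiSubsymmetric e) :
    ∃ R m, 0 < m ∧ QuasiSubsymmetricWith e R m := by
  by_contra! hbad
  obtain ⟨p, hp⟩ := SpreadingPair.exists_forall_of_local
    (P := fun j p F => ∃ a : ℕ → ℝ,
      (j + 1) * ‖∑ n ∈ F, a n • e (p.k n)‖ < ‖∑ n ∈ F, a n • e (p.l n)‖)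
    (fun j p q F hk hl ⟨a, ha⟩ => ⟨a, by
      rwa [sum_congr rfl fun n hn => congrArg (a n • e ·) (hk hn),
        sum_congr rfl fun n hn => congrArg (a n • e ·) (hl hn)] at ha⟩)
    (fun j T R => exists_lt_of_not_quasiSubsymmetricWith (hbad (R + T) _ (by positivity)))
  obtain ⟨C, -, hC⟩ := h p.k p.l p.strictMono_k p.strictMono_l p.le
  obtain ⟨j, hj⟩ := exists_nat_ge C
  obtain ⟨F, a, hlt⟩ := hp j
  have := hC a F
  have : C * ‖∑ n ∈ F, a n • e (p.k n)‖ ≤ (j + 1) * ‖∑ n ∈ F, a n • e (p.k n)‖ := by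
    gcongr; linarith
  linarith

end QuasiSubsymmetric

theorem uniform_quasisubsymmetry_constant_general
    {X : Type*} [NormedAddCommGroup X] [NormedSpace ℝ X]
    (e : ℕ → X) (hbasic : IsBasicSeq e) (hsemi : Seminormalized e)
    (hqss : QuasiSubsymmetric e) :
    ∃ S : ℝ, 0 < S ∧ ∀ k l : ℕ → ℕ, StrictMono k → StrictMono l →
      (∀ n, k n ≤ l n) → ∀ (a : ℕ → ℝ) (F : Finset ℕ),
        ‖∑ n ∈ F, a n • e (l n)‖ ≤ S * ‖∑ n ∈ F, a n • e (k n)‖ := by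
  obtain ⟨-, B, hB₁, hB⟩ := hbasic
  obtain ⟨d, D, hd, hdD⟩ := hsemi
  obtain ⟨R, m, hm, hRm⟩ := hqss.exists_quasiSubsymmetricWith
  have hB₀ : 0 ≤ B := zero_le_one.trans hB₁
  have hD : 0 ≤ D := hd.le.trans ((hdD 0).1.trans (hdD 0).2)
  refine ⟨R * (2 * B * D / d) + m * (1 + B), by positivity, fun k l hk hl hkl a F => ?_⟩
  exact hRm.to_zero hm.le hB hB₀ hd (fun n => (hdD n).1) (fun n => (hdD n).2)
    ⟨k, l, hk, hl, hkl⟩ a F fun n _ => Nat.zero_le n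

/-- **Lemma 2.2.** A seminormalized quasisubsymmetric basic sequence admits a
uniform quasisubsymmetry constant `S > 0`. -/
theorem uniform_quasisubsymmetry_constant
    {X : Type*} [NormedAddCommGroup X] [NormedSpace ℝ X] [CompleteSpace X]
    (e : ℕ → X) (hbasic : IsBasicSeq e) (hsemi : Seminormalized e)
    (hqss : QuasiSubsymmetric e) :
    ∃ S : ℝ, 0 < S ∧ ∀ k l : ℕ → ℕ, StrictMono k → StrictMono l →
      (∀ n, k n ≤ l n) → ∀ (a : ℕ → ℝ) (F : Finset ℕ),
        ‖∑ n ∈ F, a n • e (l n)‖ ≤ S * ‖∑ n ∈ F, a n • e (k n)‖ :=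
  uniform_quasisubsymmetry_constant_general e hbasic hsemi hqss
end

section
/- Let (e_n) be a seminormalized basic sequence in a Banach space, and suppose that for every S > 0 there exist strictly increasing sequences (k_n), (ℓ_n) of positive integers with k_n ≤ ℓ_n for all n and a finitely supported scalar sequence (a_n) such that ‖Σ a_n e_{ℓ_n}‖ > S‖Σ a_n e_{k_n}‖. Then for every S > 0 and every N ∈ ℕ there exist a finitely supported scalar sequence (a_n) with a_n = 0 for all n < N and strictly increasing sequences (k_n), (ℓ_n) of positive integers with k_n ≤ ℓ_n for all n, such that ‖Σ a_n e_{ℓ_n}‖ > S‖Σ a_n e_{k_n}‖. -/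
open Filter Topology

section Aux

variable {X : Type*} [NormedAddCommGroup X] [NormedSpace ℝ X]

lemma subseq_partial (e : ℕ → X) (B : ℝ)
    (hB : ∀ (a : ℕ → ℝ) (m M : ℕ), m ≤ M →
      ‖∑ n ∈ Finset.range m, a n • e n‖ ≤ B * ‖∑ n ∈ Finset.range M, a n • e n‖)
    (k : ℕ → ℕ) (hk : StrictMono k) (b : ℕ → ℝ) (m M : ℕ) (hmM : m ≤ M) :
    ‖∑ n ∈ Finset.range m, b n • e (k n)‖ ≤ B * ‖∑ n ∈ Finset.range M, b n • e (k n)‖ := by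
  set c : ℕ → ℝ := fun j => ∑ n ∈ (Finset.range M).filter (fun n => k n = j), b n with hc
  have key : ∀ m', m' ≤ M → ∑ j ∈ Finset.range (k m'), c j • e j
      = ∑ n ∈ Finset.range m', b n • e (k n) := by
    intro m' hm'
    have hsub : (Finset.range m').image k ⊆ Finset.range (k m') := by
      intro j hj
      simp only [Finset.mem_image, Finset.mem_range] at hj ⊢
      obtain ⟨n, hn, rfl⟩ := hj
      exact hk hn
    have h0 : ∀ j ∈ Finset.range (k m'), j ∉ (Finset.range m').image k → c j • e j = 0 := by
      intro j hj hjim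
      have : (Finset.range M).filter (fun n' => k n' = j) = ∅ := by
        ext n'
        simp only [Finset.mem_filter, Finset.mem_range, Finset.notMem_empty, iff_false, not_and]
        rintro hn' rfl
        exact hjim (Finset.mem_image.mpr ⟨n', Finset.mem_range.mpr
          (hk.lt_iff_lt.mp (Finset.mem_range.mp hj)), rfl⟩)
      simp [hc, this]
    rw [← Finset.sum_subset hsub h0]
    rw [Finset.sum_image (fun a _ b _ h => hk.injective h)]
    apply Finset.sum_congr rfl
    intro n hn
    simp only [Finset.mem_range] at hn
    have hone : (Finset.range M).filter (fun n' => k n' = k n) = {n} := by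
      ext n'
      simp only [Finset.mem_filter, Finset.mem_range, Finset.mem_singleton]
      constructor
      · rintro ⟨_, h⟩; exact hk.injective h
      · rintro rfl; exact ⟨lt_of_lt_of_le hn hm', rfl⟩
    simp [hc, hone]
  rw [← key m hmM, ← key M le_rfl]
  exact hB c (k m) (k M) (hk.monotone hmM)

end Aux

/-- **Claim in the proof of Lemma 2.2.** If a seminormalized basic sequence fails to
have a uniform quasisubsymmetry constant, the failure can be witnessed by finitely
supported sequences vanishing before any prescribed `N`. -/
theorem claim_failure_beyond_N
    {X : Type*} [NormedAddCommGroup X] [NormedSpace ℝ X] [CompleteSpace X]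
    (e : ℕ → X) (hbasic : IsBasicSeq e) (hsemi : Seminormalized e)
    (h : ∀ S : ℝ, 0 < S → ∃ k l : ℕ → ℕ, StrictMono k ∧ StrictMono l ∧
      (∀ n, k n ≤ l n) ∧ ∃ (a : ℕ → ℝ) (F : Finset ℕ),
        S * ‖∑ n ∈ F, a n • e (k n)‖ < ‖∑ n ∈ F, a n • e (l n)‖) :
    ∀ S : ℝ, 0 < S → ∀ N : ℕ, ∃ k l : ℕ → ℕ, StrictMono k ∧ StrictMono l ∧
      (∀ n, k n ≤ l n) ∧ ∃ (a : ℕ → ℝ) (F : Finset ℕ), (∀ n < N, a n = 0) ∧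
        S * ‖∑ n ∈ F, a n • e (k n)‖ < ‖∑ n ∈ F, a n • e (l n)‖ := by
  intro S hS N
  obtain ⟨-, B, hB1, hB⟩ := hbasic
  obtain ⟨d, D, hd, hdD⟩ := hsemi
  have hD : 0 < D := lt_of_lt_of_le hd (le_trans (hdD 0).1 (hdD 0).2)
  have hB0 : (0:ℝ) < B := lt_of_lt_of_le one_pos hB1
  set c0 : ℝ := 2 * N * B * D / d with hc0
  have hc0nonneg : 0 ≤ c0 := by positivity
  set S' : ℝ := S * (1 + B) + c0 + 1 with hS'def
  have hS'pos : 0 < S' := by positivity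
  obtain ⟨k, l, hk, hl, hkl, a, F, hwit⟩ := h S' hS'pos
  refine ⟨k, l, hk, hl, hkl, fun n => if n < N then 0 else a n,
    F.filter (fun n => ¬ n < N), fun n hn => by simp [hn], ?_⟩
  set F₂ := F.filter (fun n => ¬ n < N) with hF₂
  set F₁ := F.filter (fun n => n < N) with hF₁
  have hsum2 : ∀ g : ℕ → ℕ, ∑ n ∈ F₂, (if n < N then 0 else a n) • e (g n)
      = ∑ n ∈ F₂, a n • e (g n) := by
    intro g
    refine Finset.sum_congr rfl fun n hn => ?_
    have := (Finset.mem_filter.mp hn).2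
    simp [this]
  rw [hsum2 k, hsum2 l]
  -- notation
  set M := max (F.sup id + 1) N with hM
  have hFM : F ⊆ Finset.range M := by
    intro n hn
    exact Finset.mem_range.mpr (lt_of_le_of_lt
      (Finset.le_sup (f := id) hn) (lt_of_lt_of_le (Nat.lt_succ_self _) (le_max_left _ _)))
  set b : ℕ → ℝ := fun n => if n ∈ F then a n else 0 with hb
  have hxb : ∀ g : ℕ → ℕ, ∑ n ∈ F, a n • e (g n) = ∑ n ∈ Finset.range M, b n • e (g n) := by
    intro g
    rw [← Finset.sum_subset hFM (fun n _ hn => by simp [hb, hn])]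
    exact Finset.sum_congr rfl (fun n hn => by simp [hb, hn])
  set x := ∑ n ∈ F, a n • e (k n) with hx
  set y := ∑ n ∈ F, a n • e (l n) with hy
  -- coordinate bound
  have hcoord : ∀ n, n < M → |b n| * d ≤ 2 * B * ‖x‖ := by
    intro n hn
    have h1 := subseq_partial e B hB k hk b (n + 1) M hn
    have h2 := subseq_partial e B hB k hk b n M hn.le
    rw [← hxb k, ← hx] at h1 h2
    have hdiff : ‖b n • e (k n)‖ ≤ 2 * B * ‖x‖ := by
      have : b n • e (k n) = (∑ j ∈ Finset.range (n + 1), b j • e (k j))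
          - ∑ j ∈ Finset.range n, b j • e (k j) := by
        rw [Finset.sum_range_succ]; abel
      rw [this]
      calc ‖_ - _‖ ≤ ‖∑ j ∈ Finset.range (n + 1), b j • e (k j)‖
            + ‖∑ j ∈ Finset.range n, b j • e (k j)‖ := norm_sub_le _ _
        _ ≤ 2 * B * ‖x‖ := by linarith
    rw [norm_smul, Real.norm_eq_abs] at hdiff
    calc |b n| * d ≤ |b n| * ‖e (k n)‖ :=
          mul_le_mul_of_nonneg_left (hdD (k n)).1 (abs_nonneg _)
      _ ≤ 2 * B * ‖x‖ := hdiff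
  -- split sums
  have hxsplit : (∑ n ∈ F₁, a n • e (k n)) + ∑ n ∈ F₂, a n • e (k n) = x :=
    Finset.sum_filter_add_sum_filter_not F _ _
  have hysplit : (∑ n ∈ F₁, a n • e (l n)) + ∑ n ∈ F₂, a n • e (l n) = y :=
    Finset.sum_filter_add_sum_filter_not F _ _
  -- bound on x₁
  have hNM : N ≤ M := le_max_right _ _
  have hx1eq : ∑ n ∈ F₁, a n • e (k n) = ∑ n ∈ Finset.range N, b n • e (k n) := by
    have h1 : ∑ n ∈ F₁, a n • e (k n) = ∑ n ∈ F₁, b n • e (k n) :=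
      Finset.sum_congr rfl (fun n hn => by simp [hb, (Finset.mem_filter.mp hn).1])
    rw [h1]
    apply Finset.sum_subset
    · intro n hn; exact Finset.mem_range.mpr (Finset.mem_filter.mp hn).2
    · intro n hn hn'
      have : n ∉ F := fun hF => hn' (Finset.mem_filter.mpr ⟨hF, Finset.mem_range.mp hn⟩)
      simp [hb, this]
  have hx1 : ‖∑ n ∈ F₁, a n • e (k n)‖ ≤ B * ‖x‖ := by
    rw [hx1eq]
    have := subseq_partial e B hB k hk b N M hNM
    rwa [← hxb k, ← hx] at this
  have hx2 : ‖∑ n ∈ F₂, a n • e (k n)‖ ≤ (1 + B) * ‖x‖ := by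
    have : ∑ n ∈ F₂, a n • e (k n) = x - ∑ n ∈ F₁, a n • e (k n) := by
      rw [← hxsplit]; abel
    rw [this]
    calc ‖x - _‖ ≤ ‖x‖ + ‖∑ n ∈ F₁, a n • e (k n)‖ := norm_sub_le _ _
      _ ≤ (1 + B) * ‖x‖ := by linarith
  -- bound on y₁
  have hy1 : ‖∑ n ∈ F₁, a n • e (l n)‖ ≤ c0 * ‖x‖ := by
    have hterm : ∀ n ∈ F₁, ‖a n • e (l n)‖ ≤ 2 * B * ‖x‖ / d * D := by
      intro n hn
      obtain ⟨hnF, hnN⟩ := Finset.mem_filter.mp hn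
      have hnM : n < M := Finset.mem_range.mp (hFM hnF)
      have han : |a n| ≤ 2 * B * ‖x‖ / d := by
        have := hcoord n hnM
        rw [hb] at this
        simp only [hnF, if_true] at this
        rw [le_div_iff₀ hd]
        exact this
      rw [norm_smul, Real.norm_eq_abs]
      exact mul_le_mul han (hdD (l n)).2 (norm_nonneg _)
        (by positivity)
    have hcard : (F₁.card : ℝ) ≤ N := by
      have : F₁ ⊆ Finset.range N := fun n hn =>
        Finset.mem_range.mpr (Finset.mem_filter.mp hn).2
      exact_mod_cast le_trans (Nat.cast_le.mpr (Finset.card_le_card this))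
        (by simp [Finset.card_range])
    calc ‖∑ n ∈ F₁, a n • e (l n)‖ ≤ ∑ n ∈ F₁, ‖a n • e (l n)‖ := norm_sum_le _ _
      _ ≤ ∑ _n ∈ F₁, (2 * B * ‖x‖ / d * D) := Finset.sum_le_sum hterm
      _ = F₁.card * (2 * B * ‖x‖ / d * D) := by rw [Finset.sum_const, nsmul_eq_mul]
      _ ≤ N * (2 * B * ‖x‖ / d * D) := by
          apply mul_le_mul_of_nonneg_right hcard (by positivity)
      _ = c0 * ‖x‖ := by rw [hc0]; field_simp
  have hy2 : ‖y‖ - ‖∑ n ∈ F₁, a n • e (l n)‖ ≤ ‖∑ n ∈ F₂, a n • e (l n)‖ := by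
    have : ∑ n ∈ F₂, a n • e (l n) = y - ∑ n ∈ F₁, a n • e (l n) := by
      rw [← hysplit]; abel
    rw [this]
    exact le_trans (by linarith [norm_sub_norm_le y (∑ n ∈ F₁, a n • e (l n))])
      (le_refl _)
  have hxnn : (0:ℝ) ≤ ‖x‖ := norm_nonneg _
  nlinarith [mul_le_mul_of_nonneg_left hx2 hS.le]
end

section
/- If a Banach space X has a seminormalized Schauder basis (e_n) which dominates all of its subsequences (i.e., for every strictly increasing sequence (k_n) of positive integers there is a constant C > 0 with ‖Σ a_n e_{k_n}‖ ≤ C‖Σ a_n e_n‖ for all finitely supported scalar sequences (a_n)), then the space L(X) of all bounded linear operators on X, with the operator norm, is non-separable. -/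
open Filter Topology

section Aux
variable {X : Type*} [NormedAddCommGroup X] [NormedSpace ℝ X]

/-- The space of partial-sum sequences. -/
private def Ysub (e : ℕ → X) : Submodule ℝ (BoundedContinuousFunction ℕ X) where
  carrier := {g | g 0 = 0 ∧ (∀ n, ∃ c : ℝ, g (n+1) - g n = c • e n) ∧
      ∃ x : X, Tendsto (fun n => g n) atTop (𝓝 x)}
  zero_mem' := ⟨rfl, fun n => ⟨0, by simp⟩, ⟨0, by simpa using tendsto_const_nhds⟩⟩
  add_mem' := by
    rintro g h ⟨hg0, hgs, x, hgx⟩ ⟨hh0, hhs, y, hhy⟩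
    refine ⟨by simp [hg0, hh0], fun n => ?_, ⟨x + y, ?_⟩⟩
    · obtain ⟨c, hc⟩ := hgs n
      obtain ⟨c', hc'⟩ := hhs n
      refine ⟨c + c', ?_⟩
      have : (g + h) (n+1) - (g + h) n = (g (n+1) - g n) + (h (n+1) - h n) := by
        simp; abel
      rw [this, hc, hc', add_smul]
    · simpa using hgx.add hhy
  smul_mem' := by
    rintro r g ⟨hg0, hgs, x, hgx⟩
    refine ⟨by simp [hg0], fun n => ?_, ⟨r • x, ?_⟩⟩
    · obtain ⟨c, hc⟩ := hgs n
      refine ⟨r * c, ?_⟩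
      have : (r • g) (n+1) - (r • g) n = r • (g (n+1) - g n) := by
        simp [smul_sub]
      rw [this, hc, smul_smul]
    · simpa using hgx.const_smul r

private lemma mem_Ysub {e : ℕ → X} {g : BoundedContinuousFunction ℕ X} :
    g ∈ Ysub e ↔ g 0 = 0 ∧ (∀ n, ∃ c : ℝ, g (n+1) - g n = c • e n) ∧
      ∃ x : X, Tendsto (fun n => g n) atTop (𝓝 x) := Iff.rfl

private lemma isClosed_Ysub [CompleteSpace X] (e : ℕ → X) :
    IsClosed ((Ysub e : Set (BoundedContinuousFunction ℕ X))) := by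
  have h1 : IsClosed {g : BoundedContinuousFunction ℕ X | g 0 = 0} :=
    isClosed_singleton.preimage (continuous_eval_const (x := (0:ℕ)) (F := BoundedContinuousFunction ℕ X))
  have h2 : ∀ n : ℕ, IsClosed {g : BoundedContinuousFunction ℕ X |
      ∃ c : ℝ, g (n+1) - g n = c • e n} := by
    intro n
    have heq : {g : BoundedContinuousFunction ℕ X | ∃ c : ℝ, g (n+1) - g n = c • e n} =
        (fun g : BoundedContinuousFunction ℕ X => g (n+1) - g n) ⁻¹'
          (Submodule.span ℝ {e n} : Set X) := by
      ext g
      simp [Submodule.mem_span_singleton, eq_comm]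
    rw [heq]
    haveI := FiniteDimensional.span_of_finite ℝ (Set.finite_singleton (e n))
    exact (Submodule.closed_of_finiteDimensional _).preimage
      ((continuous_eval_const (x := n+1) (F := BoundedContinuousFunction ℕ X)).sub
        (continuous_eval_const (x := n) (F := BoundedContinuousFunction ℕ X)))
  have h3 : IsClosed {g : BoundedContinuousFunction ℕ X |
      ∃ x : X, Tendsto (fun n => g n) atTop (𝓝 x)} := by
    apply isClosed_of_closure_subset
    intro g hg
    apply cauchySeq_tendsto_of_complete
    rw [Metric.cauchySeq_iff]
    intro ε hε
    obtain ⟨h, hhs, hgh⟩ := Metric.mem_closure_iff.mp hg (ε/3) (by positivity)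
    obtain ⟨x, hx⟩ := hhs
    obtain ⟨N, hN⟩ := Metric.cauchySeq_iff.mp hx.cauchySeq (ε/3) (by positivity)
    refine ⟨N, fun m hm n hn => ?_⟩
    calc dist (g m) (g n) ≤ dist (g m) (h m) + dist (h m) (h n) + dist (h n) (g n) :=
          dist_triangle4 _ _ _ _
      _ < ε/3 + ε/3 + ε/3 := by
          have h1' := BoundedContinuousFunction.dist_coe_le_dist (f := g) (g := h) m
          have h2' := BoundedContinuousFunction.dist_coe_le_dist (f := h) (g := g) n
          rw [dist_comm h g] at h2'
          have h3' := hN m hm n hn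
          linarith
      _ = ε := by ring
  have hYeq : (Ysub e : Set (BoundedContinuousFunction ℕ X)) =
      {g : BoundedContinuousFunction ℕ X | g 0 = 0} ∩
      ((⋂ n, {g : BoundedContinuousFunction ℕ X | ∃ c : ℝ, g (n+1) - g n = c • e n}) ∩
        {g : BoundedContinuousFunction ℕ X | ∃ x : X, Tendsto (fun n => g n) atTop (𝓝 x)}) := by
    ext g
    simp only [SetLike.mem_coe, mem_Ysub, Set.mem_inter_iff, Set.mem_iInter, Set.mem_setOf_eq]

  rw [hYeq]
  exact h1.inter ((isClosed_iInter h2).inter h3)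

private lemma coeff_bound [CompleteSpace X] (e : ℕ → X) (hbasis : IsSchauderBasis e) :
    ∃ K : ℝ, 0 < K ∧ ∀ (x : X) (a : ℕ → ℝ),
      Tendsto (fun M => ∑ n ∈ Finset.range M, a n • e n) atTop (𝓝 x) →
      ∀ n, ‖a n • e n‖ ≤ K * ‖x‖ := by
  haveI : CompleteSpace (Ysub e) := (isClosed_Ysub e).completeSpace_coe
  have hlim : ∀ g : Ysub e, ∃ x : X,
      Tendsto (fun n => (g : BoundedContinuousFunction ℕ X) n) atTop (𝓝 x) :=
    fun g => g.2.2.2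
  choose lim hlimspec using hlim
  let L : Ysub e →ₗ[ℝ] X :=
    { toFun := lim
      map_add' := fun g h => tendsto_nhds_unique (hlimspec (g + h))
        (by simpa using (hlimspec g).add (hlimspec h))
      map_smul' := fun r g => tendsto_nhds_unique (hlimspec (r • g))
        (by simpa using (hlimspec g).const_smul r) }
  have hLbound : ∀ g : Ysub e, ‖L g‖ ≤ 1 * ‖g‖ := by
    intro g
    rw [one_mul]
    exact le_of_tendsto' (hlimspec g).norm
      (fun n => BoundedContinuousFunction.norm_coe_le_norm _ n)
  -- building an element of Ysub from a representation
  have hmk : ∀ (a : ℕ → ℝ) (x : X),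
      Tendsto (fun M => ∑ n ∈ Finset.range M, a n • e n) atTop (𝓝 x) →
      ∃ g : Ysub e,
        (∀ M : ℕ, (g : BoundedContinuousFunction ℕ X) M = ∑ n ∈ Finset.range M, a n • e n) ∧
        L g = x := by
    intro a x hx
    have hbdd : ∃ C : ℝ, ∀ M : ℕ, ‖∑ n ∈ Finset.range M, a n • e n‖ ≤ C := by
      obtain ⟨C, hC⟩ := hx.norm.bddAbove_range
      exact ⟨C, fun M => hC (Set.mem_range_self M)⟩
    obtain ⟨C, hC⟩ := hbdd
    let g0 : BoundedContinuousFunction ℕ X :=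
      BoundedContinuousFunction.ofNormedAddCommGroup
        (fun M => ∑ n ∈ Finset.range M, a n • e n) continuous_of_discreteTopology C hC
    have hg0 : ∀ M : ℕ, g0 M = ∑ n ∈ Finset.range M, a n • e n := fun M => rfl
    have hmem : g0 ∈ Ysub e := by
      refine ⟨by simp [hg0], fun n => ⟨a n, ?_⟩, ⟨x, by simpa only [hg0] using hx⟩⟩
      rw [hg0, hg0, Finset.sum_range_succ]
      abel
    refine ⟨⟨g0, hmem⟩, fun M => hg0 M, ?_⟩
    exact tendsto_nhds_unique (hlimspec ⟨g0, hmem⟩) (by simpa only [hg0] using hx)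
  -- bijectivity
  have hinj : Function.Injective L := by
    have hker : ∀ g : Ysub e, L g = 0 → g = 0 := by
      intro g hg0
      obtain ⟨hz, hspan, -⟩ := g.2
      choose c hc using hspan
      have hps : ∀ M : ℕ, (g : BoundedContinuousFunction ℕ X) M =
          ∑ n ∈ Finset.range M, c n • e n := by
        intro M
        induction M with
        | zero => simpa using hz
        | succ M ih =>
          rw [Finset.sum_range_succ, ← ih, ← hc M]
          abel
      have htend : Tendsto (fun M => ∑ n ∈ Finset.range M, c n • e n) atTop (𝓝 0) := by
        have h' := hlimspec g
        rw [show lim g = (0 : X) from hg0] at h'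
        exact h'.congr hps
      obtain ⟨a0, ha0, huniq⟩ := hbasis 0
      have hc0 : c = a0 := huniq c htend
      have hz0 : (0 : ℕ → ℝ) = a0 := huniq 0 (by simpa using (tendsto_const_nhds : Tendsto (fun _ : ℕ => (0:X)) atTop (𝓝 0)))
      have hcz : c = 0 := by rw [hc0, ← hz0]
      apply Subtype.ext
      ext M
      rw [hps M, hcz]
      simp
    intro g h hgh
    have : L (g - h) = 0 := by rw [map_sub, hgh, sub_self]
    have := hker _ this
    exact sub_eq_zero.mp this
  have hsurj : Function.Surjective L := by
    intro x
    obtain ⟨a, ha, -⟩ := hbasis x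
    obtain ⟨g, -, hg⟩ := hmk a x ha
    exact ⟨g, hg⟩
  let eqv : Ysub e ≃ₗ[ℝ] X := LinearEquiv.ofBijective L ⟨hinj, hsurj⟩
  have hcont : Continuous eqv := (L.mkContinuous 1 hLbound).continuous
  let ceqv := eqv.toContinuousLinearEquivOfContinuous hcont
  set K' : ℝ := ‖(ceqv.symm : X →L[ℝ] Ysub e)‖ with hK'
  refine ⟨2 * K' + 1, by positivity, ?_⟩
  intro x a hx n
  obtain ⟨g, hgM, hgx⟩ := hmk a x hx
  have hgsymm : g = ceqv.symm x := by
    symm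
    rw [ContinuousLinearEquiv.symm_apply_eq]
    exact hgx.symm
  have hgnorm : ‖g‖ ≤ K' * ‖x‖ := by
    rw [hgsymm]
    exact (ceqv.symm : X →L[ℝ] Ysub e).le_opNorm x
  have han : a n • e n = (g : BoundedContinuousFunction ℕ X) (n+1) -
      (g : BoundedContinuousFunction ℕ X) n := by
    rw [hgM, hgM, Finset.sum_range_succ]
    abel
  have hcoord : ∀ m : ℕ, ‖(g : BoundedContinuousFunction ℕ X) m‖ ≤ ‖g‖ :=
    fun m => BoundedContinuousFunction.norm_coe_le_norm _ m
  calc ‖a n • e n‖ ≤ ‖(g : BoundedContinuousFunction ℕ X) (n+1)‖ +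
        ‖(g : BoundedContinuousFunction ℕ X) n‖ := by rw [han]; exact norm_sub_le _ _
    _ ≤ ‖g‖ + ‖g‖ := add_le_add (hcoord _) (hcoord _)
    _ = 2 * ‖g‖ := by ring
    _ ≤ 2 * (K' * ‖x‖) := by linarith [hgnorm]
    _ ≤ (2 * K' + 1) * ‖x‖ := by nlinarith [norm_nonneg x]

private lemma exists_shift_op [CompleteSpace X] (e : ℕ → X) (hbasis : IsSchauderBasis e)
    (k : ℕ → ℕ) (C : ℝ) (hC : 0 < C)
    (hdomk : ∀ (a : ℕ → ℝ) (F : Finset ℕ),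
      ‖∑ n ∈ F, a n • e (k n)‖ ≤ C * ‖∑ n ∈ F, a n • e n‖) :
    ∃ T : X →L[ℝ] X, ∀ m, T (e m) = e (k m) := by
  have hbasis' : ∀ x : X, ∃ a : ℕ → ℝ,
      Tendsto (fun M => ∑ n ∈ Finset.range M, a n • e n) atTop (𝓝 x) ∧
      ∀ b : ℕ → ℝ,
        Tendsto (fun M => ∑ n ∈ Finset.range M, b n • e n) atTop (𝓝 x) → b = a :=
    hbasis
  choose α hα huniq using hbasis'
  -- Cauchy property of shifted partial sums
  have hcau : ∀ x : X,
      CauchySeq (fun M => ∑ n ∈ Finset.range M, α x n • e (k n)) := by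
    intro x
    rw [Metric.cauchySeq_iff]
    intro ε hε
    obtain ⟨N, hN⟩ := Metric.cauchySeq_iff.mp (hα x).cauchySeq (ε / C) (by positivity)
    have key : ∀ p q : ℕ, N ≤ p → p ≤ q →
        dist (∑ n ∈ Finset.range q, α x n • e (k n))
          (∑ n ∈ Finset.range p, α x n • e (k n)) < ε := by
      intro p q hp hpq
      rw [dist_eq_norm, ← Finset.sum_Ico_eq_sub _ hpq]
      calc ‖∑ n ∈ Finset.Ico p q, α x n • e (k n)‖
          ≤ C * ‖∑ n ∈ Finset.Ico p q, α x n • e n‖ := hdomk _ _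
        _ = C * dist (∑ n ∈ Finset.range q, α x n • e n)
              (∑ n ∈ Finset.range p, α x n • e n) := by
            rw [dist_eq_norm, ← Finset.sum_Ico_eq_sub _ hpq]
        _ < C * (ε / C) := by
            have := hN q (le_trans hp hpq) p hp
            exact (mul_lt_mul_iff_right₀ hC).mpr this
        _ = ε := by field_simp
    refine ⟨N, fun m hm M hM => ?_⟩
    rcases le_total m M with h | h
    · rw [dist_comm]; exact key m M hm h
    · exact key M m hM h
  choose T0 hT0 using fun x => cauchySeq_tendsto_of_complete (hcau x)
  -- linearity of coefficients
  have hadd : ∀ x y : X, α (x + y) = α x + α y := by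
    intro x y
    refine (huniq (x + y) (α x + α y) ?_).symm
    have : (fun M => ∑ n ∈ Finset.range M, (α x + α y) n • e n) =
        fun M => (∑ n ∈ Finset.range M, α x n • e n) +
          ∑ n ∈ Finset.range M, α y n • e n := by
      funext M
      rw [← Finset.sum_add_distrib]
      exact Finset.sum_congr rfl fun n _ => by simp [add_smul]
    rw [this]
    exact (hα x).add (hα y)
  have hsmul : ∀ (r : ℝ) (x : X), α (r • x) = r • α x := by
    intro r x
    refine (huniq (r • x) (r • α x) ?_).symm
    have : (fun M => ∑ n ∈ Finset.range M, (r • α x) n • e n) =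
        fun M => r • ∑ n ∈ Finset.range M, α x n • e n := by
      funext M
      rw [Finset.smul_sum]
      exact Finset.sum_congr rfl fun n _ => by simp [smul_smul]
    rw [this]
    exact (hα x).const_smul r
  -- T0 is linear
  have hT0add : ∀ x y : X, T0 (x + y) = T0 x + T0 y := by
    intro x y
    refine tendsto_nhds_unique (hT0 (x + y)) ?_
    have : (fun M => ∑ n ∈ Finset.range M, α (x + y) n • e (k n)) =
        fun M => (∑ n ∈ Finset.range M, α x n • e (k n)) +
          ∑ n ∈ Finset.range M, α y n • e (k n) := by
      funext M
      rw [hadd, ← Finset.sum_add_distrib]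
      exact Finset.sum_congr rfl fun n _ => by simp [add_smul]
    rw [this]
    exact (hT0 x).add (hT0 y)
  have hT0smul : ∀ (r : ℝ) (x : X), T0 (r • x) = r • T0 x := by
    intro r x
    refine tendsto_nhds_unique (hT0 (r • x)) ?_
    have : (fun M => ∑ n ∈ Finset.range M, α (r • x) n • e (k n)) =
        fun M => r • ∑ n ∈ Finset.range M, α x n • e (k n) := by
      funext M
      rw [hsmul, Finset.smul_sum]
      exact Finset.sum_congr rfl fun n _ => by simp [smul_smul]
    rw [this]
    exact (hT0 x).const_smul r
  have hT0bound : ∀ x : X, ‖T0 x‖ ≤ C * ‖x‖ := by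
    intro x
    refine le_of_tendsto_of_tendsto' (hT0 x).norm ((hα x).norm.const_mul C) fun M => ?_
    exact hdomk _ _
  let Tlin : X →ₗ[ℝ] X :=
    { toFun := T0
      map_add' := hT0add
      map_smul' := hT0smul }
  refine ⟨Tlin.mkContinuous C hT0bound, ?_⟩
  intro m
  have hαem : α (e m) = fun n => if n = m then (1 : ℝ) else 0 := by
    refine (huniq (e m) _ ?_).symm
    have hev : ∀ M : ℕ, m < M →
        (∑ n ∈ Finset.range M, (if n = m then (1:ℝ) else 0) • e n) = e m := by
      intro M hM
      simp only [ite_smul, one_smul, zero_smul]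
      rw [Finset.sum_ite_eq' (Finset.range M) m e]
      simp [hM]
    exact tendsto_atTop_of_eventually_const (i₀ := m + 1) (fun M hM => hev M hM)
  have : Tendsto (fun M => ∑ n ∈ Finset.range M, α (e m) n • e (k n)) atTop
      (𝓝 (e (k m))) := by
    have hev : ∀ M : ℕ, m < M →
        (∑ n ∈ Finset.range M, α (e m) n • e (k n)) = e (k m) := by
      intro M hM
      rw [hαem]
      simp only [ite_smul, one_smul, zero_smul]
      rw [Finset.sum_ite_eq' (Finset.range M) m (fun n => e (k n))]
      simp [hM]
    exact tendsto_atTop_of_eventually_const (i₀ := m + 1) (fun M hM => hev M hM)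
  exact tendsto_nhds_unique (hT0 (e m)) this

end Aux

/-- **Proposition 2.3.** If a Banach space `X` has a seminormalized Schauder basis
which dominates all of its subsequences, then `L(X)` is non-separable. -/
theorem operatorSpace_not_separable
    {X : Type*} [NormedAddCommGroup X] [NormedSpace ℝ X] [CompleteSpace X]
    (e : ℕ → X) (hbasis : IsSchauderBasis e) (hsemi : Seminormalized e)
    (hdom : ∀ k : ℕ → ℕ, StrictMono k → Dominates e (fun n => e (k n))) :
    ¬ TopologicalSpace.SeparableSpace (X →L[ℝ] X) := by
  classical
  intro hsep
  obtain ⟨d, D, hd, hdD⟩ := hsemi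
  obtain ⟨K, hK, hKb⟩ := coeff_bound e hbasis
  -- uniform lower bound on distances between distinct basis vectors
  have hlow : ∀ i j : ℕ, i ≠ j → d ≤ K * ‖e i - e j‖ := by
    intro i j hij
    have htend : Tendsto (fun M => ∑ n ∈ Finset.range M,
        (if n = i then (1:ℝ) else if n = j then -1 else 0) • e n) atTop
        (𝓝 (e i - e j)) := by
      have hev : ∀ M : ℕ, max i j + 1 ≤ M → (∑ n ∈ Finset.range M,
          (if n = i then (1:ℝ) else if n = j then -1 else 0) • e n) = e i - e j := by
        intro M hM
        have hsplit : ∀ n, (if n = i then (1:ℝ) else if n = j then -1 else 0) • e n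
            = (if n = i then e n else 0) + (if n = j then -e n else 0) := by
          intro n
          by_cases h1 : n = i
          · subst h1; simp [hij]
          · by_cases h2 : n = j <;> simp [h1, h2, Ne.symm hij]
        rw [Finset.sum_congr rfl fun n _ => hsplit n, Finset.sum_add_distrib,
          Finset.sum_ite_eq' (Finset.range M) i e,
          Finset.sum_ite_eq' (Finset.range M) j (fun n => -e n)]
        have hi : i ∈ Finset.range M := by simp; omega
        have hj : j ∈ Finset.range M := by simp; omega
        rw [if_pos hi, if_pos hj]
        abel
      exact tendsto_atTop_of_eventually_const (i₀ := max i j + 1) hev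
    have hb := hKb (e i - e j) _ htend i
    rw [if_pos rfl, one_smul] at hb
    exact le_trans (hdD i).1 hb
  -- the family of operators
  have hT : ∀ A : Set ℕ, ∃ T : X →L[ℝ] X,
      ∀ m, T (e m) = e (2*m + if m ∈ A then 1 else 0) := by
    intro A
    have hkmono : StrictMono (fun n => 2*n + if n ∈ A then 1 else 0) := by
      apply strictMono_nat_of_lt_succ
      intro n
      by_cases h1 : n ∈ A <;> by_cases h2 : n + 1 ∈ A <;> simp [h1, h2] <;> omega
    obtain ⟨C, hC, hdomk⟩ := hdom _ hkmono
    exact exists_shift_op e hbasis _ C hC hdomk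
  choose T hTspec using hT
  have hD0 : (0:ℝ) < D := lt_of_lt_of_le hd (le_trans (hdD 0).1 (hdD 0).2)
  set δ : ℝ := d / (K * D) with hδdef
  have hδ : 0 < δ := by positivity
  -- separation
  have hsepair : ∀ A B : Set ℕ, A ≠ B → δ ≤ dist (T A) (T B) := by
    intro A B hAB
    obtain ⟨m, hm⟩ : ∃ m, ¬(m ∈ A ↔ m ∈ B) := by
      by_contra h
      push_neg at h
      exact hAB (Set.ext h)
    have hvecdiff : (T A - T B) (e m) =
        e (2*m + if m ∈ A then 1 else 0) - e (2*m + if m ∈ B then 1 else 0) := by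
      simp [ContinuousLinearMap.sub_apply, hTspec]
    have hne : (2*m + if m ∈ A then 1 else 0) ≠ (2*m + if m ∈ B then 1 else 0) := by
      by_cases h1 : m ∈ A <;> by_cases h2 : m ∈ B <;> simp [h1, h2] at hm ⊢
    have hlow' := hlow _ _ hne
    have h1 : ‖(T A - T B) (e m)‖ ≤ ‖T A - T B‖ * ‖e m‖ := (T A - T B).le_opNorm _
    rw [hvecdiff] at h1
    have hnn : (0:ℝ) ≤ ‖T A - T B‖ := norm_nonneg _
    have h2 : ‖T A - T B‖ * ‖e m‖ ≤ ‖T A - T B‖ * D :=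
      mul_le_mul_of_nonneg_left (hdD m).2 hnn
    have h3 : d ≤ K * (‖T A - T B‖ * D) := by
      refine le_trans hlow' (mul_le_mul_of_nonneg_left (le_trans h1 h2) (le_of_lt hK))
    rw [dist_eq_norm]
    rw [hδdef, div_le_iff₀ (by positivity)]
    nlinarith
  -- contradiction with separability
  obtain ⟨s, hsc, hsd⟩ := TopologicalSpace.exists_countable_dense (X →L[ℝ] X)
  have hpick : ∀ A : Set ℕ, ∃ y ∈ s, dist (T A) y < δ / 2 := fun A =>
    Metric.mem_closure_iff.mp (hsd (T A)) (δ/2) (by positivity)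
  choose y hys hydist using hpick
  have hyinj : Function.Injective y := by
    intro A B hAB'
    by_contra hne
    have hge := hsepair A B hne
    have hlt : dist (T A) (T B) < δ := by
      calc dist (T A) (T B) ≤ dist (T A) (y B) + dist (y B) (T B) := dist_triangle _ _ _
        _ < δ/2 + δ/2 := by
            rw [← hAB', dist_comm (y A) (T B)]
            rw [hAB']
            exact add_lt_add (hAB' ▸ hydist A) (hydist B)
        _ = δ := by ring
    linarith
  haveI : Countable ↥s := hsc.to_subtype
  obtain ⟨gg, hgg⟩ := exists_injective_nat ↥s
  exact Function.cantor_injective (fun A => gg ⟨y A, hys A⟩)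
    (hgg.comp fun A B h => hyinj (congrArg Subtype.val h))
end

section
/- If a Banach space X has a seminormalized quasisubsymmetric Schauder basis, then ℓ∞ embeds isomorphically into L(X), the space of all bounded linear operators on X with the operator norm. -/
open Filter Topology

instance : Fact ((1 : ENNReal) ≤ ⊤) := ⟨le_top⟩

namespace QSSAux

variable {X : Type*} [NormedAddCommGroup X] [NormedSpace ℝ X]

noncomputable def coeff (e : ℕ → X) (hb : IsSchauderBasis e) (x : X) : ℕ → ℝ :=
  (hb x).choose

lemma coeff_tendsto (e : ℕ → X) (hb : IsSchauderBasis e) (x : X) :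
    Tendsto (fun M => ∑ n ∈ Finset.range M, coeff e hb x n • e n) atTop (𝓝 x) :=
  (hb x).choose_spec.1

lemma coeff_unique (e : ℕ → X) (hb : IsSchauderBasis e) (x : X) (a : ℕ → ℝ)
    (ha : Tendsto (fun M => ∑ n ∈ Finset.range M, a n • e n) atTop (𝓝 x)) :
    a = coeff e hb x :=
  (hb x).choose_spec.2 a ha

lemma coeff_zero (e : ℕ → X) (hb : IsSchauderBasis e) : coeff e hb 0 = 0 := by
  refine (coeff_unique e hb 0 0 ?_).symm
  simpa using (tendsto_const_nhds : Tendsto (fun _ : ℕ => (0 : X)) atTop (𝓝 0))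

lemma coeff_add (e : ℕ → X) (hb : IsSchauderBasis e) (x y : X) :
    coeff e hb (x + y) = coeff e hb x + coeff e hb y := by
  refine (coeff_unique e hb (x + y) _ ?_).symm
  have := (coeff_tendsto e hb x).add (coeff_tendsto e hb y)
  refine this.congr fun M => ?_
  rw [← Finset.sum_add_distrib]
  exact Finset.sum_congr rfl fun n _ => by simp [add_smul]

lemma coeff_smul (e : ℕ → X) (hb : IsSchauderBasis e) (c : ℝ) (x : X) :
    coeff e hb (c • x) = c • coeff e hb x := by
  refine (coeff_unique e hb (c • x) _ ?_).symm
  have := (coeff_tendsto e hb x).const_smul c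
  refine this.congr fun M => ?_
  rw [Finset.smul_sum]
  exact Finset.sum_congr rfl fun n _ => by simp [smul_smul]

lemma tendsto_finsum (e : ℕ → X) (a : ℕ → ℝ) (F : Finset ℕ) :
    Tendsto (fun M => ∑ n ∈ Finset.range M, (if n ∈ F then a n else 0) • e n) atTop
      (𝓝 (∑ n ∈ F, a n • e n)) := by
  apply tendsto_atTop_of_eventually_const (i₀ := (F.sup id) + 1)
  intro M hM
  have hFs : F ⊆ Finset.range M := by
    intro n hn
    exact Finset.mem_range.2 (lt_of_le_of_lt (Finset.le_sup (f := id) hn) hM)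
  rw [← Finset.sum_subset hFs (fun x _ hx => by simp [hx])]
  exact Finset.sum_congr rfl fun n hn => by simp [hn]

lemma coeff_finsum (e : ℕ → X) (hb : IsSchauderBasis e) (a : ℕ → ℝ) (F : Finset ℕ) :
    coeff e hb (∑ n ∈ F, a n • e n) = fun n => if n ∈ F then a n else 0 :=
  (coeff_unique e hb _ _ (tendsto_finsum e a F)).symm


/-- The space of partial-sum sequences. -/
noncomputable def Vsub (e : ℕ → X) : Submodule ℝ (BoundedContinuousFunction ℕ X) where
  carrier := {y | y 0 = 0 ∧ (∀ M, ∃ c : ℝ, y (M + 1) - y M = c • e M) ∧ CauchySeq ⇑y}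
  add_mem' := by
    rintro y z ⟨hy0, hy1, hy2⟩ ⟨hz0, hz1, hz2⟩
    refine ⟨by simp [hy0, hz0], fun M => ?_, ?_⟩
    · obtain ⟨c, hc⟩ := hy1 M; obtain ⟨c', hc'⟩ := hz1 M
      refine ⟨c + c', ?_⟩
      simp only [BoundedContinuousFunction.coe_add, Pi.add_apply]
      rw [add_smul, ← hc, ← hc']; abel
    · show CauchySeq ⇑(y + z)
      rw [BoundedContinuousFunction.coe_add]; exact hy2.add hz2
  zero_mem' := ⟨rfl, fun M => ⟨0, by simp⟩, cauchySeq_const 0⟩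
  smul_mem' := by
    rintro c y ⟨hy0, hy1, hy2⟩
    refine ⟨by simp [hy0], fun M => ?_, ?_⟩
    · obtain ⟨c', hc'⟩ := hy1 M
      refine ⟨c * c', ?_⟩
      simp only [BoundedContinuousFunction.coe_smul, Pi.smul_apply]
      rw [← smul_sub, hc', smul_smul]
    · show CauchySeq ⇑(c • y)
      rw [BoundedContinuousFunction.coe_smul]
      exact ((lipschitzWith_smul (β := X) c).uniformContinuous.comp_cauchySeq hy2)

lemma Vsub_closed (e : ℕ → X) [CompleteSpace X] :
    IsClosed ((Vsub e : Set (BoundedContinuousFunction ℕ X))) := by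
  have h0 : IsClosed {y : BoundedContinuousFunction ℕ X | y 0 = 0} :=
    isClosed_eq (continuous_eval_const (x := 0)) continuous_const
  have h1 : ∀ M : ℕ, IsClosed {y : BoundedContinuousFunction ℕ X | ∃ c : ℝ, y (M+1) - y M = c • e M} := by
    intro M
    have : {y : BoundedContinuousFunction ℕ X | ∃ c : ℝ, y (M+1) - y M = c • e M}
        = (fun y : BoundedContinuousFunction ℕ X => y (M+1) - y M) ⁻¹'
          (Submodule.span ℝ {e M} : Set X) := by
      ext y
      simp only [Set.mem_setOf_eq, Set.mem_preimage, SetLike.mem_coe, Submodule.mem_span_singleton]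
      constructor
      · rintro ⟨c, hc⟩; exact ⟨c, hc.symm⟩
      · rintro ⟨c, hc⟩; exact ⟨c, hc.symm⟩
    rw [this]
    exact IsClosed.preimage
      (((continuous_eval_const (x := M+1)).sub
        (continuous_eval_const (x := M))))
      (Submodule.closed_of_finiteDimensional _)
  have h2 : IsClosed {y : BoundedContinuousFunction ℕ X | CauchySeq ⇑y} := by
    apply IsSeqClosed.isClosed
    intro ys y hmem hy
    rw [Set.mem_setOf_eq, Metric.cauchySeq_iff]
    intro ε hε
    obtain ⟨k, hk⟩ := (Metric.tendsto_atTop.1 hy) (ε/3) (by positivity)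
    have hyk : CauchySeq ⇑(ys k) := hmem k
    obtain ⟨N, hN⟩ := (Metric.cauchySeq_iff.1 hyk) (ε/3) (by positivity)
    refine ⟨N, fun m hm n hn => ?_⟩
    have d1 : dist (y m) (ys k m) ≤ ε/3 := by
      refine le_trans ?_ (le_of_lt (hk k le_rfl))
      rw [dist_comm (ys k) y]
      exact BoundedContinuousFunction.dist_coe_le_dist m
    have d2 : dist (ys k n) (y n) ≤ ε/3 :=
      le_trans (BoundedContinuousFunction.dist_coe_le_dist n) (hk k le_rfl).le
    calc dist (y m) (y n) ≤ dist (y m) (ys k m) + dist (ys k m) (ys k n) + dist (ys k n) (y n) :=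
          dist_triangle4 _ _ _ _
      _ < ε/3 + ε/3 + ε/3 := by
          have := hN m hm n hn
          linarith [d1, d2]
      _ = ε := by ring
  have heq : ((Vsub e : Set (BoundedContinuousFunction ℕ X)))
      = {y : BoundedContinuousFunction ℕ X | y 0 = 0} ∩
        ((⋂ M : ℕ, {y : BoundedContinuousFunction ℕ X | ∃ c : ℝ, y (M+1) - y M = c • e M}) ∩
          {y : BoundedContinuousFunction ℕ X | CauchySeq ⇑y}) := by
    ext y
    simp only [Vsub, Submodule.coe_set_mk, AddSubmonoid.coe_set_mk, AddSubsemigroup.coe_set_mk,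
      Set.mem_setOf_eq, Set.mem_inter_iff, Set.mem_iInter]
  rw [heq]
  exact h0.inter ((isClosed_iInter h1).inter h2)


section P3
variable {X : Type*} [NormedAddCommGroup X] [NormedSpace ℝ X]

lemma mem_Vsub_iff (e : ℕ → X) (y : BoundedContinuousFunction ℕ X) :
    y ∈ Vsub e ↔ y 0 = 0 ∧ (∀ M, ∃ c : ℝ, y (M + 1) - y M = c • e M) ∧ CauchySeq ⇑y :=
  Iff.rfl

variable [CompleteSpace X]

lemma Vsub_cauchy (e : ℕ → X) (y : ↥(Vsub e)) : CauchySeq ⇑(y : BoundedContinuousFunction ℕ X) :=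
  ((mem_Vsub_iff e _).1 y.2).2.2

noncomputable def limFun (e : ℕ → X) (y : ↥(Vsub e)) : X :=
  (cauchySeq_tendsto_of_complete (Vsub_cauchy e y)).choose

lemma limFun_spec (e : ℕ → X) (y : ↥(Vsub e)) :
    Tendsto (⇑(y : BoundedContinuousFunction ℕ X)) atTop (𝓝 (limFun e y)) :=
  (cauchySeq_tendsto_of_complete (Vsub_cauchy e y)).choose_spec

noncomputable def Phi (e : ℕ → X) : ↥(Vsub e) →L[ℝ] X :=
  LinearMap.mkContinuous
    { toFun := limFun e
      map_add' := fun y z => by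
        refine tendsto_nhds_unique (limFun_spec e (y + z)) ?_
        have h := (limFun_spec e y).add (limFun_spec e z)
        refine Tendsto.congr (fun M => ?_) h
        simp
      map_smul' := fun c y => by
        refine tendsto_nhds_unique (limFun_spec e (c • y)) ?_
        have h := (limFun_spec e y).const_smul c
        refine Tendsto.congr (fun M => ?_) h
        simp }
    1
    (fun y => by
      rw [one_mul]
      exact le_of_tendsto' (limFun_spec e y).norm
        (fun M => BoundedContinuousFunction.norm_coe_le_norm _ M))

lemma Phi_apply (e : ℕ → X) (y : ↥(Vsub e)) : Phi e y = limFun e y := rfl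

lemma Vsub_partial_sums (e : ℕ → X) (y : ↥(Vsub e)) :
    ∃ a : ℕ → ℝ, ∀ M, (y : BoundedContinuousFunction ℕ X) M = ∑ n ∈ Finset.range M, a n • e n := by
  have hmem := (mem_Vsub_iff e _).1 y.2
  refine ⟨fun M => (hmem.2.1 M).choose, fun M => ?_⟩
  induction M with
  | zero => simpa using hmem.1
  | succ M ih =>
    have h := (hmem.2.1 M).choose_spec
    rw [Finset.sum_range_succ, ← ih]
    have : (y : BoundedContinuousFunction ℕ X) (M + 1)
        = (y : BoundedContinuousFunction ℕ X) M
          + ((y : BoundedContinuousFunction ℕ X) (M + 1) - (y : BoundedContinuousFunction ℕ X) M) := by abel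
    rw [this, h]

lemma Phi_ker (e : ℕ → X) (hb : IsSchauderBasis e) : (Phi e).ker = ⊥ := by
  rw [LinearMap.ker_eq_bot']
  intro y hy
  obtain ⟨a, ha⟩ := Vsub_partial_sums e y
  have ht : Tendsto (fun M => ∑ n ∈ Finset.range M, a n • e n) atTop (𝓝 (0 : X)) := by
    have h := limFun_spec e y
    rw [← Phi_apply, ← ContinuousLinearMap.coe_coe (Phi e), hy] at h
    exact h.congr ha
  have h0 : a = coeff e hb 0 := coeff_unique e hb 0 a ht
  rw [coeff_zero] at h0
  apply Subtype.ext
  apply BoundedContinuousFunction.ext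
  intro M
  rw [ha M, h0]
  simp

lemma Phi_range (e : ℕ → X) (hb : IsSchauderBasis e) : (Phi e).range = ⊤ := by
  rw [LinearMap.range_eq_top]
  intro x
  set S : ℕ → X := fun M => ∑ n ∈ Finset.range M, coeff e hb x n • e n with hS
  have hten : Tendsto S atTop (𝓝 x) := coeff_tendsto e hb x
  have hbdd : BddAbove (Set.range fun M => ‖S M‖) := hten.norm.bddAbove_range
  obtain ⟨C, hC⟩ := hbdd
  have hCb : ∀ M, ‖S M‖ ≤ C := fun M => hC (Set.mem_range_self M)
  set y : BoundedContinuousFunction ℕ X :=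
    BoundedContinuousFunction.ofNormedAddCommGroup S continuous_of_discreteTopology C hCb with hy
  have hyapp : ∀ M, y M = S M := fun M => rfl
  have hmem : y ∈ Vsub e := by
    rw [mem_Vsub_iff]
    refine ⟨by simp [hyapp, hS], fun M => ⟨coeff e hb x M, ?_⟩, ?_⟩
    · rw [hyapp, hyapp, hS]
      simp [Finset.sum_range_succ]
    · exact (hten.congr (fun M => (hyapp M).symm)).cauchySeq
  refine ⟨⟨y, hmem⟩, ?_⟩
  rw [ContinuousLinearMap.coe_coe, Phi_apply]
  exact tendsto_nhds_unique (limFun_spec e ⟨y, hmem⟩) ((hten.congr (fun M => (hyapp M).symm)))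

/-- The basis constant. -/
lemma basis_constant (e : ℕ → X) (hb : IsSchauderBasis e) :
    ∃ B : ℝ, 1 ≤ B ∧ ∀ (x : X) (M : ℕ),
      ‖∑ n ∈ Finset.range M, coeff e hb x n • e n‖ ≤ B * ‖x‖ := by
  haveI : CompleteSpace ↥(Vsub e) := (Vsub_closed e).completeSpace_coe
  set equiv := ContinuousLinearEquiv.ofBijective (Phi e) (Phi_ker e hb) (Phi_range e hb) with he
  set K := ‖(equiv.symm : X →L[ℝ] ↥(Vsub e))‖ with hK
  refine ⟨max K 1, le_max_right _ _, fun x M => ?_⟩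
  set y := equiv.symm x with hy
  have hyx : Phi e y = x :=
    ContinuousLinearEquiv.ofBijective_apply_symm_apply (Phi e) (Phi_ker e hb) (Phi_range e hb) x
  obtain ⟨a, ha⟩ := Vsub_partial_sums e y
  have ht : Tendsto (fun M => ∑ n ∈ Finset.range M, a n • e n) atTop (𝓝 x) := by
    have h := limFun_spec e y
    rw [← Phi_apply, hyx] at h
    exact h.congr ha
  have hax : a = coeff e hb x := coeff_unique e hb x a ht
  have h1 : ‖∑ n ∈ Finset.range M, coeff e hb x n • e n‖
      = ‖(y : BoundedContinuousFunction ℕ X) M‖ := by rw [ha M, hax]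
  rw [h1]
  calc ‖(y : BoundedContinuousFunction ℕ X) M‖
      ≤ ‖(y : BoundedContinuousFunction ℕ X)‖ :=
        BoundedContinuousFunction.norm_coe_le_norm _ M
    _ = ‖y‖ := rfl
    _ ≤ K * ‖x‖ := (equiv.symm : X →L[ℝ] ↥(Vsub e)).le_opNorm x
    _ ≤ max K 1 * ‖x‖ := by
        exact mul_le_mul_of_nonneg_right (le_max_left _ _) (norm_nonneg x)

end P3

lemma coeff_norm_bound (e : ℕ → X) [CompleteSpace X] (hb : IsSchauderBasis e) (B : ℝ)
    (hB : ∀ (x : X) (M : ℕ), ‖∑ n ∈ Finset.range M, coeff e hb x n • e n‖ ≤ B * ‖x‖)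
    (x : X) (n : ℕ) : |coeff e hb x n| * ‖e n‖ ≤ 2 * B * ‖x‖ := by
  have h : coeff e hb x n • e n
      = (∑ k ∈ Finset.range (n+1), coeff e hb x k • e k)
        - ∑ k ∈ Finset.range n, coeff e hb x k • e k := by
    rw [Finset.sum_range_succ]; abel
  calc |coeff e hb x n| * ‖e n‖ = ‖coeff e hb x n • e n‖ := by
        rw [norm_smul, Real.norm_eq_abs]
    _ ≤ ‖∑ k ∈ Finset.range (n+1), coeff e hb x k • e k‖
        + ‖∑ k ∈ Finset.range n, coeff e hb x k • e k‖ := by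
        rw [h]; exact norm_sub_le _ _
    _ ≤ B * ‖x‖ + B * ‖x‖ := add_le_add (hB x (n+1)) (hB x n)
    _ = 2 * B * ‖x‖ := by ring

/-- A *pattern*: a map sending `n` to either `2n` or `2n+1`. -/
def IsPattern (p : ℕ → ℕ) : Prop := ∀ n, p n = 2 * n ∨ p n = 2 * n + 1

lemma IsPattern.le_self {p : ℕ → ℕ} (hp : IsPattern p) (n : ℕ) : n ≤ p n := by
  rcases hp n with h | h <;> omega

lemma IsPattern.strictMono {p : ℕ → ℕ} (hp : IsPattern p) : StrictMono p := by
  apply strictMono_nat_of_lt_succ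
  intro n
  rcases hp n with h | h <;> rcases hp (n+1) with h' | h' <;> omega

lemma pattern_dominates (e : ℕ → X) (hqss : QuasiSubsymmetric e)
    {p : ℕ → ℕ} (hp : IsPattern p) :
    ∃ C : ℝ, 0 < C ∧ ∀ (a : ℕ → ℝ) (F : Finset ℕ),
      ‖∑ n ∈ F, a n • e (p n)‖ ≤ C * ‖∑ n ∈ F, a n • e n‖ := by
  obtain ⟨C, hC, hdom⟩ := hqss id p strictMono_id hp.strictMono hp.le_self
  exact ⟨C, hC, fun a F => hdom a F⟩

/-- Uniform bound over all patterns, by a gliding hump argument. -/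
lemma pattern_uniform (e : ℕ → X) [CompleteSpace X] (hb : IsSchauderBasis e)
    (hsemi : Seminormalized e) (hqss : QuasiSubsymmetric e) :
    ∃ C : ℝ, 0 < C ∧ ∀ p : ℕ → ℕ, IsPattern p → ∀ (a : ℕ → ℝ) (F : Finset ℕ),
      ‖∑ n ∈ F, a n • e (p n)‖ ≤ C * ‖∑ n ∈ F, a n • e n‖ := by
  classical
  obtain ⟨B, hB1, hB⟩ := basis_constant e hb
  obtain ⟨d, D, hd0, hdD⟩ := hsemi
  by_contra hcon
  push_neg at hcon
  -- badness for every positive constant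
  have hbad : ∀ C : ℝ, 0 < C → ∃ p : ℕ → ℕ, IsPattern p ∧ ∃ (a : ℕ → ℝ) (F : Finset ℕ),
      C * ‖∑ n ∈ F, a n • e n‖ < ‖∑ n ∈ F, a n • e (p n)‖ := by
    intro C hC
    obtain ⟨p, hp, a, F, h⟩ := hcon C hC
    exact ⟨p, hp, a, F, h⟩
  -- coefficients of finitely supported vectors are controlled
  have hcoeffb : ∀ (a : ℕ → ℝ) (F : Finset ℕ) (n : ℕ), n ∈ F →
      |a n| ≤ (2 * B / d) * ‖∑ k ∈ F, a k • e k‖ := by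
    intro a F n hn
    have h1 := coeff_norm_bound e hb B hB (∑ k ∈ F, a k • e k) n
    rw [coeff_finsum e hb a F] at h1
    simp only [hn, if_pos] at h1
    have h2 : |a n| * d ≤ |a n| * ‖e n‖ :=
      mul_le_mul_of_nonneg_left (hdD n).1 (abs_nonneg _)
    rw [div_mul_eq_mul_div, le_div_iff₀ hd0]
    linarith
  -- far-out badness
  have hD0 : 0 < D := lt_of_lt_of_le hd0 (le_trans (hdD 0).1 (hdD 0).2)
  have hκ : 0 ≤ 2 * B / d := by positivity
  have farout : ∀ (M : ℕ) (C : ℝ), 0 < C → ∃ p : ℕ → ℕ, IsPattern p ∧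
      ∃ (a : ℕ → ℝ) (F : Finset ℕ), (∀ n ∈ F, M ≤ n) ∧
        C * ‖∑ n ∈ F, a n • e n‖ < ‖∑ n ∈ F, a n • e (p n)‖ := by
    intro M C hC
    by_contra hfar
    push_neg at hfar
    -- then a global bound holds, contradicting hbad
    set κ := 2 * B / d with hκdef
    set C' := (M : ℝ) * κ * D + C * (1 + (M : ℝ) * κ * D) with hC'
    have hC'pos : 0 < C' := by
      have : 0 ≤ (M : ℝ) * κ * D := by positivity
      nlinarith
    obtain ⟨p, hp, a, F, hlt⟩ := hbad C' hC'pos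
    set x := ∑ n ∈ F, a n • e n with hx
    set F₁ := F.filter (fun n => n < M) with hF₁
    set F₂ := F.filter (fun n => ¬ n < M) with hF₂
    have hsplit : ∀ g : ℕ → X, ∑ n ∈ F, g n = ∑ n ∈ F₁, g n + ∑ n ∈ F₂, g n := by
      intro g
      rw [hF₁, hF₂, Finset.sum_filter_add_sum_filter_not]
    have hcard₁ : F₁.card ≤ M := by
      have : F₁ ⊆ Finset.range M := by
        intro n hn
        rw [Finset.mem_range]
        exact (Finset.mem_filter.1 hn).2
      calc F₁.card ≤ (Finset.range M).card := Finset.card_le_card this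
        _ = M := Finset.card_range M
    have hxcoeff : ∀ n ∈ F, |a n| ≤ κ * ‖x‖ := fun n hn => hcoeffb a F n hn
    -- bound on any e-valued sum over F₁ with vectors of norm ≤ D
    have hF₁bound : ∀ v : ℕ → X, (∀ n, ‖v n‖ ≤ D) →
        ‖∑ n ∈ F₁, a n • v n‖ ≤ (M : ℝ) * κ * D * ‖x‖ := by
      intro v hv
      calc ‖∑ n ∈ F₁, a n • v n‖ ≤ ∑ n ∈ F₁, ‖a n • v n‖ := norm_sum_le _ _
        _ ≤ ∑ n ∈ F₁, κ * ‖x‖ * D := by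
            refine Finset.sum_le_sum fun n hn => ?_
            rw [norm_smul, Real.norm_eq_abs]
            have h1 : |a n| ≤ κ * ‖x‖ := hxcoeff n (Finset.mem_of_mem_filter n hn)
            exact mul_le_mul h1 (hv n) (norm_nonneg _) (by positivity)
        _ = F₁.card * (κ * ‖x‖ * D) := by rw [Finset.sum_const, nsmul_eq_mul]
        _ ≤ (M : ℝ) * (κ * ‖x‖ * D) := by
            refine mul_le_mul_of_nonneg_right ?_ (by positivity)
            exact_mod_cast hcard₁
        _ = (M : ℝ) * κ * D * ‖x‖ := by ring
    have htail : ‖∑ n ∈ F₂, a n • e n‖ ≤ (1 + (M : ℝ) * κ * D) * ‖x‖ := by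
      have h1 : ∑ n ∈ F₂, a n • e n = x - ∑ n ∈ F₁, a n • e n := by
        rw [hx, hsplit (fun n => a n • e n)]; abel
      rw [h1]
      calc ‖x - ∑ n ∈ F₁, a n • e n‖ ≤ ‖x‖ + ‖∑ n ∈ F₁, a n • e n‖ := norm_sub_le _ _
        _ ≤ ‖x‖ + (M : ℝ) * κ * D * ‖x‖ := by
            have := hF₁bound e (fun n => (hdD n).2)
            linarith
        _ = (1 + (M : ℝ) * κ * D) * ‖x‖ := by ring
    have hquote : ‖∑ n ∈ F₂, a n • e (p n)‖ ≤ C * ‖∑ n ∈ F₂, a n • e n‖ := by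
      refine hfar p hp a F₂ fun n hn => ?_
      have := (Finset.mem_filter.1 hn).2
      omega
    have hfinal : ‖∑ n ∈ F, a n • e (p n)‖ ≤ C' * ‖x‖ := by
      rw [hsplit (fun n => a n • e (p n))]
      calc ‖∑ n ∈ F₁, a n • e (p n) + ∑ n ∈ F₂, a n • e (p n)‖
          ≤ ‖∑ n ∈ F₁, a n • e (p n)‖ + ‖∑ n ∈ F₂, a n • e (p n)‖ := norm_add_le _ _
        _ ≤ (M : ℝ) * κ * D * ‖x‖ + C * ((1 + (M : ℝ) * κ * D) * ‖x‖) := by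
            have h1 := hF₁bound (fun n => e (p n)) (fun n => (hdD (p n)).2)
            have h2 := le_trans hquote (mul_le_mul_of_nonneg_left htail hC.le)
            exact add_le_add h1 h2
        _ = C' * ‖x‖ := by rw [hC']; ring
    exact absurd hfinal (not_le.2 hlt)
  -- recursively choose far-out bad blocks and glue
  have pick : ∀ (M i : ℕ), ∃ paF : (ℕ → ℕ) × (ℕ → ℝ) × Finset ℕ,
      IsPattern paF.1 ∧ (∀ n ∈ paF.2.2, M ≤ n) ∧
      ((i : ℝ) + 1) * ‖∑ n ∈ paF.2.2, paF.2.1 n • e n‖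
        < ‖∑ n ∈ paF.2.2, paF.2.1 n • e (paF.1 n)‖ := by
    intro M i
    obtain ⟨p, hp, a, F, h1, h2⟩ := farout M ((i : ℝ) + 1) (by positivity)
    exact ⟨⟨p, a, F⟩, hp, h1, h2⟩
  choose pk hpk1 hpk2 hpk3 using pick
  set Ms : ℕ → ℕ := fun i =>
    Nat.rec (motive := fun _ => ℕ) 0 (fun j Mj => ((pk Mj j).2.2.sup id) + 1) i with hMsdef
  have hMs : ∀ i, Ms (i + 1) = ((pk (Ms i) i).2.2.sup id) + 1 := fun i => rfl
  set Fb : ℕ → Finset ℕ := fun i => (pk (Ms i) i).2.2 with hFb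
  set pb : ℕ → ℕ → ℕ := fun i => (pk (Ms i) i).1 with hpb
  set ab : ℕ → ℕ → ℝ := fun i => (pk (Ms i) i).2.1 with hab
  have hFlo : ∀ i, ∀ n ∈ Fb i, Ms i ≤ n := fun i => hpk2 (Ms i) i
  have hFhi : ∀ i, ∀ n ∈ Fb i, n < Ms (i + 1) := by
    intro i n hn
    rw [hMs i]
    exact Nat.lt_succ_of_le (Finset.le_sup (f := id) hn)
  have hne : ∀ i, (Fb i).Nonempty := by
    intro i
    rcases Finset.eq_empty_or_nonempty (Fb i) with h | h
    · exfalso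
      have := hpk3 (Ms i) i
      rw [show (pk (Ms i) i).2.2 = Fb i from rfl, h] at this
      simp at this
    · exact h
  have hMsmono : StrictMono Ms := by
    apply strictMono_nat_of_lt_succ
    intro i
    obtain ⟨n, hn⟩ := hne i
    exact lt_of_le_of_lt (hFlo i n hn) (hFhi i n hn)
  have hdisj : ∀ i j n, i < j → n ∈ Fb i → n ∈ Fb j → False := by
    intro i j n hij hni hnj
    have h1 : n < Ms (i + 1) := hFhi i n hni
    have h2 : Ms (i + 1) ≤ Ms j := hMsmono.monotone hij
    have h3 : Ms j ≤ n := hFlo j n hnj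
    omega
  set P : ℕ → ℕ := fun n => if h : ∃ i, n ∈ Fb i then pb h.choose n else 2 * n with hP
  have hPdef : ∀ n, P n = if h : ∃ i, n ∈ Fb i then pb h.choose n else 2 * n := fun n => rfl
  have hPpat : IsPattern P := by
    intro n
    rw [hPdef n]
    by_cases h : ∃ i, n ∈ Fb i
    · rw [dif_pos h]
      exact hpk1 (Ms h.choose) h.choose n
    · rw [dif_neg h]
      left; rfl
  have huniq : ∀ n i j, n ∈ Fb i → n ∈ Fb j → i = j := by
    intro n i j hi hj
    rcases Nat.lt_trichotomy i j with h | h | h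
    · exact (hdisj i j n h hi hj).elim
    · exact h
    · exact (hdisj j i n h hj hi).elim
  have hPagree : ∀ i, ∀ n ∈ Fb i, P n = pb i n := by
    intro i n hn
    have h : ∃ j, n ∈ Fb j := ⟨i, hn⟩
    have hch : h.choose = i := huniq n h.choose i h.choose_spec hn
    rw [hPdef n, dif_pos h, hch]
  obtain ⟨Cp, hCp, hdomP⟩ := pattern_dominates e hqss hPpat
  obtain ⟨i, hi⟩ := exists_nat_gt Cp
  have hbase : (0 : ℝ) ≤ ‖∑ n ∈ Fb i, ab i n • e n‖ := norm_nonneg _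
  have h1 : ‖∑ n ∈ Fb i, ab i n • e (pb i n)‖ = ‖∑ n ∈ Fb i, ab i n • e (P n)‖ := by
    congr 1
    exact Finset.sum_congr rfl fun n hn => by rw [hPagree i n hn]
  have h2 := hdomP (ab i) (Fb i)
  have h3 := hpk3 (Ms i) i
  have h4 : Cp ≤ (i : ℝ) + 1 := le_trans hi.le (by linarith)
  have h5 : ‖∑ n ∈ Fb i, ab i n • e (P n)‖ ≤ ((i : ℝ) + 1) * ‖∑ n ∈ Fb i, ab i n • e n‖ :=
    le_trans h2 (mul_le_mul_of_nonneg_right h4 hbase)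
  rw [← h1] at h5
  exact absurd h5 (not_le.2 h3)


lemma sign_convexity (v : ℕ → X) (F : Finset ℕ) (K : ℝ)
    (hK : ∀ ε : ℕ → ℝ, (∀ n, ε n = 1 ∨ ε n = -1) → ‖∑ n ∈ F, ε n • v n‖ ≤ K) :
    ∀ f : ℕ → ℝ, (∀ n ∈ F, |f n| ≤ 1) → ‖∑ n ∈ F, f n • v n‖ ≤ K := by
  classical
  suffices H : ∀ (k : ℕ) (f : ℕ → ℝ), (F.filter (fun n => ¬(f n = 1 ∨ f n = -1))).card = k →
      (∀ n ∈ F, |f n| ≤ 1) → ‖∑ n ∈ F, f n • v n‖ ≤ K by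
    intro f hf; exact H _ f rfl hf
  intro k
  induction k using Nat.strong_induction_on with
  | _ k ih =>
    intro f hcard hf
    rcases Nat.eq_zero_or_pos k with hk0 | hkpos
    · subst hk0
      have hemp : F.filter (fun n => ¬(f n = 1 ∨ f n = -1)) = ∅ := Finset.card_eq_zero.1 hcard
      have hsigns : ∀ n ∈ F, f n = 1 ∨ f n = -1 := by
        intro n hn
        by_contra h
        have hmem : n ∈ F.filter (fun n => ¬(f n = 1 ∨ f n = -1)) :=
          Finset.mem_filter.2 ⟨hn, h⟩
        rw [hemp] at hmem
        exact absurd hmem (Finset.notMem_empty n)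
      have h1 : ∀ n, (fun m => if m ∈ F then f m else 1) n = 1
          ∨ (fun m => if m ∈ F then f m else 1) n = -1 := by
        intro n; by_cases hn : n ∈ F
        · simpa [hn] using hsigns n hn
        · simp [hn]
      have h2 : ∑ n ∈ F, f n • v n = ∑ n ∈ F, (fun m => if m ∈ F then f m else 1) n • v n :=
        Finset.sum_congr rfl fun n hn => by simp [hn]
      rw [h2]; exact hK _ h1
    · have hne : (F.filter (fun n => ¬(f n = 1 ∨ f n = -1))).Nonempty := by
        rw [← Finset.card_pos, hcard]; exact hkpos
      obtain ⟨n₀, hn₀⟩ := hne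
      have hn₀F : n₀ ∈ F := (Finset.mem_filter.1 hn₀).1
      have hfn₀ : |f n₀| ≤ 1 := hf n₀ hn₀F
      have habs := abs_le.1 hfn₀
      set t := (1 + f n₀) / 2 with ht
      have ht0 : 0 ≤ t := by rw [ht]; linarith [habs.1]
      have ht1 : t ≤ 1 := by rw [ht]; linarith [habs.2]
      have hsub : ∀ c : ℝ, (c = 1 ∨ c = -1) →
          (F.filter (fun n => ¬(Function.update f n₀ c n = 1 ∨ Function.update f n₀ c n = -1))).card < k := by
        intro c hc
        have hss : F.filter (fun n => ¬(Function.update f n₀ c n = 1 ∨ Function.update f n₀ c n = -1))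
            ⊆ (F.filter (fun n => ¬(f n = 1 ∨ f n = -1))).erase n₀ := by
          intro m hm
          obtain ⟨hmF, hms⟩ := Finset.mem_filter.1 hm
          have hmn₀ : m ≠ n₀ := by
            intro hmeq; subst hmeq
            rw [Function.update_self] at hms
            exact hms hc
          refine Finset.mem_erase.2 ⟨hmn₀, Finset.mem_filter.2 ⟨hmF, ?_⟩⟩
          rwa [Function.update_of_ne hmn₀] at hms
        calc (F.filter _).card
            ≤ ((F.filter (fun n => ¬(f n = 1 ∨ f n = -1))).erase n₀).card :=
              Finset.card_le_card hss
          _ < (F.filter (fun n => ¬(f n = 1 ∨ f n = -1))).card :=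
              Finset.card_erase_lt_of_mem hn₀
          _ = k := hcard
      have hupd_le : ∀ c : ℝ, |c| ≤ 1 → ∀ n ∈ F, |Function.update f n₀ c n| ≤ 1 := by
        intro c hc n hn
        by_cases hn' : n = n₀
        · subst hn'; rw [Function.update_self]; exact hc
        · rw [Function.update_of_ne hn']; exact hf n hn
      have hcomb : ∑ n ∈ F, f n • v n
          = t • ∑ n ∈ F, Function.update f n₀ 1 n • v n
            + (1 - t) • ∑ n ∈ F, Function.update f n₀ (-1) n • v n := by
        rw [Finset.smul_sum, Finset.smul_sum, ← Finset.sum_add_distrib]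
        refine Finset.sum_congr rfl fun n hn => ?_
        rw [smul_smul, smul_smul, ← add_smul]
        congr 1
        by_cases hn' : n = n₀
        · subst hn'; rw [Function.update_self, Function.update_self, ht]; ring
        · rw [Function.update_of_ne hn', Function.update_of_ne hn']; ring
      have hb1 : ‖∑ n ∈ F, Function.update f n₀ 1 n • v n‖ ≤ K :=
        ih _ (hsub 1 (Or.inl rfl)) _ rfl (hupd_le 1 (by norm_num))
      have hb2 : ‖∑ n ∈ F, Function.update f n₀ (-1) n • v n‖ ≤ K :=
        ih _ (hsub (-1) (Or.inr rfl)) _ rfl (hupd_le (-1) (by norm_num))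
      rw [hcomb]
      calc ‖t • ∑ n ∈ F, Function.update f n₀ 1 n • v n
            + (1 - t) • ∑ n ∈ F, Function.update f n₀ (-1) n • v n‖
          ≤ ‖t • ∑ n ∈ F, Function.update f n₀ 1 n • v n‖
            + ‖(1 - t) • ∑ n ∈ F, Function.update f n₀ (-1) n • v n‖ := norm_add_le _ _
        _ = t * ‖∑ n ∈ F, Function.update f n₀ 1 n • v n‖
            + (1 - t) * ‖∑ n ∈ F, Function.update f n₀ (-1) n • v n‖ := by
            rw [norm_smul, norm_smul, Real.norm_eq_abs, Real.norm_eq_abs,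
              abs_of_nonneg ht0, abs_of_nonneg (by linarith : (0:ℝ) ≤ 1 - t)]
        _ ≤ t * K + (1 - t) * K := by
            refine add_le_add ?_ ?_
            · exact mul_le_mul_of_nonneg_left hb1 ht0
            · exact mul_le_mul_of_nonneg_left hb2 (by linarith)
        _ = K := by ring

lemma multiplier_bound (e : ℕ → X) (C : ℝ)
    (hpat : ∀ p : ℕ → ℕ, IsPattern p → ∀ (a : ℕ → ℝ) (F : Finset ℕ),
      ‖∑ n ∈ F, a n • e (p n)‖ ≤ C * ‖∑ n ∈ F, a n • e n‖)
    (f a : ℕ → ℝ) (c₀ : ℝ) (hf : ∀ n, |f n| ≤ c₀) (F : Finset ℕ) :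
    ‖∑ n ∈ F, (f n * a n) • (e (2*n) - e (2*n+1))‖
      ≤ 2 * C * c₀ * ‖∑ n ∈ F, a n • e n‖ := by
  classical
  have hc₀ : 0 ≤ c₀ := le_trans (abs_nonneg _) (hf 0)
  rcases eq_or_lt_of_le hc₀ with h0 | h0
  · have hf0 : ∀ n, f n = 0 := fun n =>
      abs_eq_zero.1 (le_antisymm (le_of_le_of_eq (hf n) h0.symm) (abs_nonneg _))
    simp [hf0, ← h0]
  · set v : ℕ → X := fun n => a n • (e (2*n) - e (2*n+1)) with hv
    have hvn : ∀ n, v n = a n • (e (2*n) - e (2*n+1)) := fun _ => rfl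
    have hsign : ∀ ε : ℕ → ℝ, (∀ n, ε n = 1 ∨ ε n = -1) →
        ‖∑ n ∈ F, ε n • v n‖ ≤ 2 * C * ‖∑ n ∈ F, a n • e n‖ := by
      intro ε hε
      have hpp : IsPattern (fun n => if ε n = 1 then 2*n else 2*n+1) := by
        intro n; by_cases h : ε n = 1 <;> simp [h]
      have hqp : IsPattern (fun n => if ε n = 1 then 2*n+1 else 2*n) := by
        intro n; by_cases h : ε n = 1 <;> simp [h]
      have key : ∀ n, ε n • v n
          = a n • e (if ε n = 1 then 2*n else 2*n+1) - a n • e (if ε n = 1 then 2*n+1 else 2*n) := by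
        intro n
        rcases hε n with h | h
        · have h1 : (if ε n = 1 then 2*n else 2*n+1) = 2*n := if_pos h
          have h2 : (if ε n = 1 then 2*n+1 else 2*n) = 2*n+1 := if_pos h
          rw [hvn n, h1, h2, h, one_smul, smul_sub]
        · have hne : ¬ ε n = 1 := by rw [h]; norm_num
          have h1 : (if ε n = 1 then 2*n else 2*n+1) = 2*n+1 := if_neg hne
          have h2 : (if ε n = 1 then 2*n+1 else 2*n) = 2*n := if_neg hne
          rw [hvn n, h1, h2, h, neg_one_smul, smul_sub]
          abel
      rw [Finset.sum_congr rfl (fun n _ => key n), Finset.sum_sub_distrib]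
      calc ‖(∑ n ∈ F, a n • e (if ε n = 1 then 2*n else 2*n+1))
            - ∑ n ∈ F, a n • e (if ε n = 1 then 2*n+1 else 2*n)‖
          ≤ ‖∑ n ∈ F, a n • e (if ε n = 1 then 2*n else 2*n+1)‖
            + ‖∑ n ∈ F, a n • e (if ε n = 1 then 2*n+1 else 2*n)‖ := norm_sub_le _ _
        _ ≤ C * ‖∑ n ∈ F, a n • e n‖ + C * ‖∑ n ∈ F, a n • e n‖ :=
            add_le_add (hpat _ hpp a F) (hpat _ hqp a F)
        _ = 2 * C * ‖∑ n ∈ F, a n • e n‖ := by ring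
    have hfone : ∀ n ∈ F, |f n / c₀| ≤ 1 := by
      intro n _
      rw [abs_div, abs_of_pos h0]
      exact div_le_one_of_le₀ (hf n) hc₀
    have hfin := sign_convexity v F (2 * C * ‖∑ n ∈ F, a n • e n‖) hsign (fun n => f n / c₀) hfone
    have heq : ∑ n ∈ F, (f n * a n) • (e (2*n) - e (2*n+1))
        = c₀ • ∑ n ∈ F, (f n / c₀) • v n := by
      rw [Finset.smul_sum]
      refine Finset.sum_congr rfl fun n _ => ?_
      rw [hvn n, smul_smul, smul_smul]
      congr 1
      field_simp
    rw [heq, norm_smul, Real.norm_eq_abs, abs_of_pos h0]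
    calc c₀ * ‖∑ n ∈ F, (f n / c₀) • v n‖
        ≤ c₀ * (2 * C * ‖∑ n ∈ F, a n • e n‖) := mul_le_mul_of_nonneg_left hfin hc₀
      _ = 2 * C * c₀ * ‖∑ n ∈ F, a n • e n‖ := by ring

section Operator

variable (e : ℕ → X) [CompleteSpace X] (hb : IsSchauderBasis e)

/-- Partial sums of the diagonal-type operator. -/
noncomputable def Tpart (f : ℕ → ℝ) (x : X) (M : ℕ) : X :=
  ∑ n ∈ Finset.range M, (f n * coeff e hb x n) • (e (2*n) - e (2*n+1))

/-- The diagonal-type operator. -/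
noncomputable def Tlim (f : ℕ → ℝ) (x : X) : X := limUnder atTop (Tpart e hb f x)

lemma Tpart_diff (C : ℝ)
    (hpat : ∀ p : ℕ → ℕ, IsPattern p → ∀ (a : ℕ → ℝ) (F : Finset ℕ),
      ‖∑ n ∈ F, a n • e (p n)‖ ≤ C * ‖∑ n ∈ F, a n • e n‖) (f : ℕ → ℝ) (c₀ : ℝ) (hf : ∀ n, |f n| ≤ c₀) (x : X)
    {m M : ℕ} (h : m ≤ M) :
    ‖Tpart e hb f x M - Tpart e hb f x m‖
      ≤ 2 * C * c₀ * ‖(∑ n ∈ Finset.range M, coeff e hb x n • e n)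
          - ∑ n ∈ Finset.range m, coeff e hb x n • e n‖ := by
  have hsub : Finset.range m ⊆ Finset.range M := Finset.range_subset_range.2 h
  have h1 : Tpart e hb f x M - Tpart e hb f x m
      = ∑ n ∈ Finset.range M \ Finset.range m, (f n * coeff e hb x n) • (e (2*n) - e (2*n+1)) :=
    (Finset.sum_sdiff_eq_sub hsub).symm
  have h2 : (∑ n ∈ Finset.range M, coeff e hb x n • e n)
      - ∑ n ∈ Finset.range m, coeff e hb x n • e n
      = ∑ n ∈ Finset.range M \ Finset.range m, coeff e hb x n • e n :=
    (Finset.sum_sdiff_eq_sub hsub).symm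
  rw [h1, h2]
  exact multiplier_bound e C hpat f (coeff e hb x) c₀ hf _

lemma Tpart_cauchy (C : ℝ) (hC : 0 ≤ C)
    (hpat : ∀ p : ℕ → ℕ, IsPattern p → ∀ (a : ℕ → ℝ) (F : Finset ℕ),
      ‖∑ n ∈ F, a n • e (p n)‖ ≤ C * ‖∑ n ∈ F, a n • e n‖) (f : ℕ → ℝ) (c₀ : ℝ) (hc₀ : 0 ≤ c₀) (hf : ∀ n, |f n| ≤ c₀) (x : X) :
    CauchySeq (Tpart e hb f x) := by
  set K := 2 * C * c₀ with hKdef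
  have hK0 : 0 ≤ K := by positivity
  have hScau : CauchySeq (fun M => ∑ n ∈ Finset.range M, coeff e hb x n • e n) :=
    (coeff_tendsto e hb x).cauchySeq
  rw [Metric.cauchySeq_iff]
  intro ε hε
  obtain ⟨N, hN⟩ := Metric.cauchySeq_iff.1 hScau (ε / (K + 1)) (by positivity)
  refine ⟨N, fun m hm n hn => ?_⟩
  have key : ∀ m' n' : ℕ, m' ≥ N → n' ≥ N → n' ≤ m' →
      dist (Tpart e hb f x m') (Tpart e hb f x n') < ε := by
    intro m' n' hm' hn' hle
    rw [dist_eq_norm]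
    calc ‖Tpart e hb f x m' - Tpart e hb f x n'‖
        ≤ K * ‖(∑ k ∈ Finset.range m', coeff e hb x k • e k)
            - ∑ k ∈ Finset.range n', coeff e hb x k • e k‖ :=
          Tpart_diff e hb C hpat f c₀ hf x hle
      _ = K * dist (∑ k ∈ Finset.range m', coeff e hb x k • e k)
            (∑ k ∈ Finset.range n', coeff e hb x k • e k) := by rw [dist_eq_norm]
      _ ≤ K * (ε / (K + 1)) := by
          refine mul_le_mul_of_nonneg_left ?_ hK0
          exact (hN m' hm' n' hn').le
      _ < ε := by
          rw [mul_div_assoc']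
          rw [div_lt_iff₀ (by positivity : (0:ℝ) < K + 1)]
          nlinarith
  rcases le_total m n with h | h
  · rw [dist_comm]; exact key n m hn hm h
  · exact key m n hm hn h

lemma Tlim_tendsto (C : ℝ) (hC : 0 ≤ C)
    (hpat : ∀ p : ℕ → ℕ, IsPattern p → ∀ (a : ℕ → ℝ) (F : Finset ℕ),
      ‖∑ n ∈ F, a n • e (p n)‖ ≤ C * ‖∑ n ∈ F, a n • e n‖) (f : ℕ → ℝ) (c₀ : ℝ) (hc₀ : 0 ≤ c₀) (hf : ∀ n, |f n| ≤ c₀) (x : X) :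
    Tendsto (Tpart e hb f x) atTop (𝓝 (Tlim e hb f x)) :=
  (Tpart_cauchy e hb C hC hpat f c₀ hc₀ hf x).tendsto_limUnder

lemma Tlim_norm_le (C : ℝ) (hC : 0 ≤ C)
    (hpat : ∀ p : ℕ → ℕ, IsPattern p → ∀ (a : ℕ → ℝ) (F : Finset ℕ),
      ‖∑ n ∈ F, a n • e (p n)‖ ≤ C * ‖∑ n ∈ F, a n • e n‖) (B : ℝ)
    (hB : ∀ (x : X) (M : ℕ), ‖∑ n ∈ Finset.range M, coeff e hb x n • e n‖ ≤ B * ‖x‖)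
    (f : ℕ → ℝ) (c₀ : ℝ) (hc₀ : 0 ≤ c₀) (hf : ∀ n, |f n| ≤ c₀) (x : X) :
    ‖Tlim e hb f x‖ ≤ 2 * C * c₀ * B * ‖x‖ := by
  refine le_of_tendsto' (Tlim_tendsto e hb C hC hpat f c₀ hc₀ hf x).norm fun M => ?_
  calc ‖Tpart e hb f x M‖
      ≤ 2 * C * c₀ * ‖∑ n ∈ Finset.range M, coeff e hb x n • e n‖ :=
        multiplier_bound e C hpat f (coeff e hb x) c₀ hf _
    _ ≤ 2 * C * c₀ * (B * ‖x‖) := by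
        refine mul_le_mul_of_nonneg_left (hB x M) ?_
        positivity
    _ = 2 * C * c₀ * B * ‖x‖ := by ring

lemma Tlim_add (C : ℝ) (hC : 0 ≤ C)
    (hpat : ∀ p : ℕ → ℕ, IsPattern p → ∀ (a : ℕ → ℝ) (F : Finset ℕ),
      ‖∑ n ∈ F, a n • e (p n)‖ ≤ C * ‖∑ n ∈ F, a n • e n‖) (f : ℕ → ℝ) (c₀ : ℝ) (hc₀ : 0 ≤ c₀) (hf : ∀ n, |f n| ≤ c₀) (x y : X) :
    Tlim e hb f (x + y) = Tlim e hb f x + Tlim e hb f y := by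
  refine tendsto_nhds_unique (Tlim_tendsto e hb C hC hpat f c₀ hc₀ hf (x + y)) ?_
  have h := (Tlim_tendsto e hb C hC hpat f c₀ hc₀ hf x).add
    (Tlim_tendsto e hb C hC hpat f c₀ hc₀ hf y)
  refine h.congr fun M => ?_
  rw [Tpart, Tpart, Tpart, ← Finset.sum_add_distrib]
  refine Finset.sum_congr rfl fun n _ => ?_
  rw [coeff_add, Pi.add_apply, ← add_smul]
  congr 1
  ring

lemma Tlim_smul (C : ℝ) (hC : 0 ≤ C)
    (hpat : ∀ p : ℕ → ℕ, IsPattern p → ∀ (a : ℕ → ℝ) (F : Finset ℕ),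
      ‖∑ n ∈ F, a n • e (p n)‖ ≤ C * ‖∑ n ∈ F, a n • e n‖) (f : ℕ → ℝ) (c₀ : ℝ) (hc₀ : 0 ≤ c₀) (hf : ∀ n, |f n| ≤ c₀) (c : ℝ) (x : X) :
    Tlim e hb f (c • x) = c • Tlim e hb f x := by
  refine tendsto_nhds_unique (Tlim_tendsto e hb C hC hpat f c₀ hc₀ hf (c • x)) ?_
  have h := (Tlim_tendsto e hb C hC hpat f c₀ hc₀ hf x).const_smul c
  refine h.congr fun M => ?_
  rw [Tpart, Tpart, Finset.smul_sum]
  refine Finset.sum_congr rfl fun n _ => ?_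
  rw [coeff_smul, Pi.smul_apply, smul_smul, smul_eq_mul]
  congr 1
  ring

lemma Tlim_addf (C : ℝ) (hC : 0 ≤ C)
    (hpat : ∀ p : ℕ → ℕ, IsPattern p → ∀ (a : ℕ → ℝ) (F : Finset ℕ),
      ‖∑ n ∈ F, a n • e (p n)‖ ≤ C * ‖∑ n ∈ F, a n • e n‖) (f g : ℕ → ℝ) (cf cg : ℝ) (hcf : 0 ≤ cf) (hcg : 0 ≤ cg)
    (hf : ∀ n, |f n| ≤ cf) (hg : ∀ n, |g n| ≤ cg) (x : X) :
    Tlim e hb (f + g) x = Tlim e hb f x + Tlim e hb g x := by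
  have hfg : ∀ n, |(f + g) n| ≤ cf + cg := fun n =>
    le_trans (abs_add_le _ _) (add_le_add (hf n) (hg n))
  refine tendsto_nhds_unique (Tlim_tendsto e hb C hC hpat (f + g) (cf + cg) (by linarith) hfg x) ?_
  have h := (Tlim_tendsto e hb C hC hpat f cf hcf hf x).add
    (Tlim_tendsto e hb C hC hpat g cg hcg hg x)
  refine h.congr fun M => ?_
  rw [Tpart, Tpart, Tpart, ← Finset.sum_add_distrib]
  refine Finset.sum_congr rfl fun n _ => ?_
  rw [Pi.add_apply, ← add_smul]
  congr 1
  ring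

lemma Tlim_smulf (C : ℝ) (hC : 0 ≤ C)
    (hpat : ∀ p : ℕ → ℕ, IsPattern p → ∀ (a : ℕ → ℝ) (F : Finset ℕ),
      ‖∑ n ∈ F, a n • e (p n)‖ ≤ C * ‖∑ n ∈ F, a n • e n‖) (f : ℕ → ℝ) (c₀ : ℝ) (hc₀ : 0 ≤ c₀) (hf : ∀ n, |f n| ≤ c₀)
    (c : ℝ) (x : X) :
    Tlim e hb (c • f) x = c • Tlim e hb f x := by
  have hcf : ∀ n, |(c • f) n| ≤ |c| * c₀ := fun n => by
    rw [Pi.smul_apply, smul_eq_mul, abs_mul]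
    exact mul_le_mul_of_nonneg_left (hf n) (abs_nonneg c)
  refine tendsto_nhds_unique
    (Tlim_tendsto e hb C hC hpat (c • f) (|c| * c₀) (by positivity) hcf x) ?_
  have h := (Tlim_tendsto e hb C hC hpat f c₀ hc₀ hf x).const_smul c
  refine h.congr fun M => ?_
  rw [Tpart, Tpart, Finset.smul_sum]
  refine Finset.sum_congr rfl fun n _ => ?_
  rw [Pi.smul_apply, smul_smul, smul_eq_mul]
  congr 1
  ring

lemma Tlim_basis (C : ℝ) (hC : 0 ≤ C)
    (hpat : ∀ p : ℕ → ℕ, IsPattern p → ∀ (a : ℕ → ℝ) (F : Finset ℕ),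
      ‖∑ n ∈ F, a n • e (p n)‖ ≤ C * ‖∑ n ∈ F, a n • e n‖) (f : ℕ → ℝ) (c₀ : ℝ) (hc₀ : 0 ≤ c₀) (hf : ∀ n, |f n| ≤ c₀) (k : ℕ) :
    Tlim e hb f (e k) = f k • (e (2*k) - e (2*k+1)) := by
  classical
  refine tendsto_nhds_unique (Tlim_tendsto e hb C hC hpat f c₀ hc₀ hf (e k)) ?_
  have hek : e k = ∑ n ∈ ({k} : Finset ℕ), (fun _ => (1:ℝ)) n • e n := by
    rw [Finset.sum_singleton, one_smul]
  have hcoeffk : coeff e hb (e k) = fun n => if n ∈ ({k} : Finset ℕ) then (1:ℝ) else 0 := by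
    rw [hek]
    exact coeff_finsum e hb _ _
  apply tendsto_atTop_of_eventually_const (i₀ := k + 1)
  intro M hM
  rw [Tpart, hcoeffk]
  have hterm : ∀ n, (f n * if n ∈ ({k} : Finset ℕ) then (1:ℝ) else 0) • (e (2*n) - e (2*n+1))
      = if n = k then f k • (e (2*k) - e (2*k+1)) else 0 := by
    intro n
    by_cases h : n = k
    · subst h; simp
    · simp [h, Finset.mem_singleton]
  rw [Finset.sum_congr rfl fun n _ => hterm n, Finset.sum_ite_eq' (Finset.range M) k]
  simp [Finset.mem_range.2 (Nat.lt_of_lt_of_le (Nat.lt_succ_self k) hM)]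

end Operator

lemma dv_norm_lower (e : ℕ → X) [CompleteSpace X] (hb : IsSchauderBasis e) (B : ℝ)
    (hB : ∀ (x : X) (M : ℕ), ‖∑ n ∈ Finset.range M, coeff e hb x n • e n‖ ≤ B * ‖x‖)
    (k : ℕ) : ‖e (2*k)‖ ≤ 2 * B * ‖e (2*k) - e (2*k+1)‖ := by
  classical
  have hne : (2*k : ℕ) ≠ 2*k+1 := by omega
  have hx : e (2*k) - e (2*k+1)
      = ∑ n ∈ ({2*k, 2*k+1} : Finset ℕ), (if n = 2*k then (1:ℝ) else -1) • e n := by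
    rw [Finset.sum_insert (by simp [hne]), Finset.sum_singleton]
    rw [if_pos rfl, if_neg (by omega : ¬ (2*k+1 = 2*k))]
    rw [one_smul, neg_one_smul, sub_eq_add_neg]
  have hc := coeff_finsum e hb (fun n => if n = 2*k then (1:ℝ) else -1) ({2*k, 2*k+1} : Finset ℕ)
  have hval : coeff e hb (e (2*k) - e (2*k+1)) (2*k) = 1 := by
    rw [hx, hc]
    simp
  have hcb := coeff_norm_bound e hb B hB (e (2*k) - e (2*k+1)) (2*k)
  rw [hval] at hcb
  simpa using hcb

section BigOperator

variable (e : ℕ → X) [CompleteSpace X] (hb : IsSchauderBasis e)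

lemma lp_coe_abs (f : lp (fun _ : ℕ => ℝ) ⊤) (n : ℕ) : |f n| ≤ ‖f‖ := by
  have h := lp.norm_apply_le_norm (E := fun _ : ℕ => ℝ) ENNReal.top_ne_zero f n
  rwa [Real.norm_eq_abs] at h

variable (C B : ℝ) (hC : 0 ≤ C)
  (hpat : ∀ p : ℕ → ℕ, IsPattern p → ∀ (a : ℕ → ℝ) (F : Finset ℕ),
    ‖∑ n ∈ F, a n • e (p n)‖ ≤ C * ‖∑ n ∈ F, a n • e n‖)
  (hB : ∀ (x : X) (M : ℕ), ‖∑ n ∈ Finset.range M, coeff e hb x n • e n‖ ≤ B * ‖x‖)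

/-- The operator associated to a bounded sequence. -/
noncomputable def TfL (f : lp (fun _ : ℕ => ℝ) ⊤) : X →L[ℝ] X :=
  LinearMap.mkContinuous
    { toFun := fun x => Tlim e hb (⇑f) x
      map_add' := fun x y =>
        Tlim_add e hb C hC hpat (⇑f) ‖f‖ (norm_nonneg f) (lp_coe_abs f) x y
      map_smul' := fun c x =>
        Tlim_smul e hb C hC hpat (⇑f) ‖f‖ (norm_nonneg f) (lp_coe_abs f) c x }
    (2 * C * ‖f‖ * B)
    (fun x => Tlim_norm_le e hb C hC hpat B hB (⇑f) ‖f‖ (norm_nonneg f) (lp_coe_abs f) x)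

lemma TfL_apply (f : lp (fun _ : ℕ => ℝ) ⊤) (x : X) :
    TfL e hb C B hC hpat hB f x = Tlim e hb (⇑f) x := rfl

lemma TfL_norm (hB0 : 0 ≤ B) (f : lp (fun _ : ℕ => ℝ) ⊤) :
    ‖TfL e hb C B hC hpat hB f‖ ≤ 2 * C * B * ‖f‖ := by
  have h : ‖TfL e hb C B hC hpat hB f‖ ≤ 2 * C * ‖f‖ * B :=
    LinearMap.mkContinuous_norm_le _
      (mul_nonneg (mul_nonneg (by positivity) (norm_nonneg f)) hB0) _
  calc ‖TfL e hb C B hC hpat hB f‖ ≤ 2 * C * ‖f‖ * B := h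
    _ = 2 * C * B * ‖f‖ := by ring

/-- The embedding of `ℓ∞` into `L(X)`. -/
noncomputable def Tbig (hB0 : 0 ≤ B) : lp (fun _ : ℕ => ℝ) ⊤ →L[ℝ] (X →L[ℝ] X) :=
  LinearMap.mkContinuous
    { toFun := TfL e hb C B hC hpat hB
      map_add' := fun f g => by
        apply ContinuousLinearMap.ext
        intro x
        show Tlim e hb (⇑(f + g)) x = Tlim e hb (⇑f) x + Tlim e hb (⇑g) x
        rw [lp.coeFn_add f g]
        exact Tlim_addf e hb C hC hpat (⇑f) (⇑g) ‖f‖ ‖g‖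
          (norm_nonneg f) (norm_nonneg g) (lp_coe_abs f) (lp_coe_abs g) x
      map_smul' := fun c f => by
        apply ContinuousLinearMap.ext
        intro x
        show Tlim e hb (⇑(c • f)) x = c • Tlim e hb (⇑f) x
        rw [lp.coeFn_smul c f]
        exact Tlim_smulf e hb C hC hpat (⇑f) ‖f‖
          (norm_nonneg f) (lp_coe_abs f) c x }
    (2 * C * B) (fun f => TfL_norm e hb C B hC hpat hB hB0 f)

lemma Tbig_apply (hB0 : 0 ≤ B) (f : lp (fun _ : ℕ => ℝ) ⊤) (x : X) :
    Tbig e hb C B hC hpat hB hB0 f x = Tlim e hb (⇑f) x := rfl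

lemma Tbig_basis (hB0 : 0 ≤ B) (f : lp (fun _ : ℕ => ℝ) ⊤) (k : ℕ) :
    Tbig e hb C B hC hpat hB hB0 f (e k) = f k • (e (2*k) - e (2*k+1)) := by
  rw [Tbig_apply]
  exact Tlim_basis e hb C hC hpat (⇑f) ‖f‖ (norm_nonneg f) (lp_coe_abs f) k

end BigOperator

end QSSAux

set_option maxHeartbeats 1000000 in
/-- **Theorem 2.4.** If a Banach space `X` has a seminormalized quasisubsymmetric
Schauder basis, then `ℓ∞` embeds isomorphically into `L(X)`. -/
theorem linfty_embeds_in_LX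
    {X : Type*} [NormedAddCommGroup X] [NormedSpace ℝ X] [CompleteSpace X]
    (e : ℕ → X) (hbasis : IsSchauderBasis e) (hsemi : Seminormalized e)
    (hqss : QuasiSubsymmetric e) :
    ∃ T : lp (fun _ : ℕ => ℝ) ⊤ →L[ℝ] (X →L[ℝ] X),
      Function.Injective T ∧ ∃ c : ℝ, 0 < c ∧ ∀ f, c * ‖f‖ ≤ ‖T f‖ := by
  classical
  obtain ⟨B, hB1, hB⟩ := QSSAux.basis_constant e hbasis
  obtain ⟨C, hC0, hpat⟩ := QSSAux.pattern_uniform e hbasis hsemi hqss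
  obtain ⟨d, D, hd0, hdD⟩ := hsemi
  have hC : (0:ℝ) ≤ C := hC0.le
  have hB0 : (0:ℝ) < B := lt_of_lt_of_le one_pos hB1
  have hD0 : (0:ℝ) < D := lt_of_lt_of_le hd0 (le_trans (hdD 0).1 (hdD 0).2)
  set T := QSSAux.Tbig e hbasis C B hC hpat hB hB0.le with hT
  have hTbasis : ∀ (f : lp (fun _ : ℕ => ℝ) ⊤) (k : ℕ),
      T f (e k) = f k • (e (2*k) - e (2*k+1)) :=
    fun f k => QSSAux.Tbig_basis e hbasis C B hC hpat hB hB0.le f k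
  clear_value T
  have key : ∀ f, (d / (2 * B * D)) * ‖f‖ ≤ ‖T f‖ := by
    intro f
    have hmain : ∀ k : ℕ, |f k| ≤ (2 * B * D / d) * ‖T f‖ := by
      intro k
      have h1 : T f (e k) = f k • (e (2*k) - e (2*k+1)) := hTbasis f k
      have h2 : ‖e (2*k)‖ ≤ 2 * B * ‖e (2*k) - e (2*k+1)‖ :=
        QSSAux.dv_norm_lower e hbasis B hB k
      have h3 : d ≤ ‖e (2*k)‖ := (hdD (2*k)).1
      have h4 : ‖T f (e k)‖ ≤ ‖T f‖ * ‖e k‖ := (T f).le_opNorm (e k)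
      have h5 : ‖e k‖ ≤ D := (hdD k).2
      have h6 : ‖T f (e k)‖ = |f k| * ‖e (2*k) - e (2*k+1)‖ := by
        rw [h1, norm_smul, Real.norm_eq_abs]
      have hbk0 : (0:ℝ) ≤ |f k| := abs_nonneg _
      have i1 : |f k| * d ≤ |f k| * ‖e (2*k)‖ := mul_le_mul_of_nonneg_left h3 hbk0
      have i2 : |f k| * ‖e (2*k)‖ ≤ |f k| * (2 * B * ‖e (2*k) - e (2*k+1)‖) :=
        mul_le_mul_of_nonneg_left h2 hbk0
      have i3 : |f k| * (2 * B * ‖e (2*k) - e (2*k+1)‖) = 2 * B * ‖T f (e k)‖ := by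
        rw [h6]; ring
      have i4 : 2 * B * ‖T f (e k)‖ ≤ 2 * B * (‖T f‖ * D) := by
        have h7 := le_trans h4 (mul_le_mul_of_nonneg_left h5 (norm_nonneg (T f)))
        exact mul_le_mul_of_nonneg_left h7 (by positivity)
      rw [div_mul_eq_mul_div, le_div_iff₀ hd0]
      linarith
    have h8 : ‖f‖ ≤ (2 * B * D / d) * ‖T f‖ := by
      apply lp.norm_le_of_forall_le (by positivity)
      intro k
      rw [Real.norm_eq_abs]
      exact hmain k
    have h2BD : (0:ℝ) < 2 * B * D := by positivity
    rw [div_mul_eq_mul_div, div_le_iff₀ h2BD]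
    have h9 : d * ((2 * B * D / d) * ‖T f‖) = ‖T f‖ * (2 * B * D) := by
      field_simp
      try ring
    have h10 := mul_le_mul_of_nonneg_left h8 hd0.le
    linarith
  refine ⟨T, ?_, d / (2 * B * D), by positivity, key⟩
  intro f g hfg
  have h1 : T (f - g) = 0 := by rw [map_sub, hfg, sub_self]
  have h2 := key (f - g)
  rw [h1, norm_zero] at h2
  have hcpos : (0:ℝ) < d / (2 * B * D) := by positivity
  have h3 : ‖f - g‖ ≤ 0 := by nlinarith [norm_nonneg (f - g)]
  have h4 : f - g = 0 := norm_le_zero_iff.1 h3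
  exact sub_eq_zero.1 h4
end

section
/- If (e_n) is a seminormalized quasisubsymmetric basic sequence in a Banach space, then either (e_n) is equivalent to the unit vector basis of ℓ1, or there exists a strictly increasing sequence (k_n) of positive integers such that the difference sequence (e_{k_{2n}} − e_{k_{2n−1}})_{n∈ℕ} is an unconditional basic sequence. -/
open Filter Topology

set_option linter.unusedSectionVars false
set_option linter.unusedVariables false
set_option maxHeartbeats 1000000

section ProofSection

variable {X : Type*} [NormedAddCommGroup X] [NormedSpace ℝ X]




lemma qsm_le {k : ℕ → ℕ} (hk : StrictMono k) : ∀ n, n ≤ k n := by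
  intro n
  induction n with
  | zero => exact Nat.zero_le _
  | succ n ih => exact Nat.succ_le_of_lt (lt_of_le_of_lt ih (hk (Nat.lt_succ_self n)))

/-- coefficients of the "pair pattern": `-b n` at position `2n`, `b n` at `2n+1`. -/
def qpc (b : ℕ → ℝ) (i : ℕ) : ℝ := if i % 2 = 0 then -(b (i / 2)) else b (i / 2)

def qpairF (F : Finset ℕ) : Finset ℕ := F.biUnion fun n => {2 * n, 2 * n + 1}

lemma qmem_pairF {F : Finset ℕ} {n : ℕ} (hn : n ∈ F) : 2 * n + 1 ∈ qpairF F := by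
  simp only [qpairF, Finset.mem_biUnion]
  exact ⟨n, hn, by simp⟩

lemma qpc_odd (b : ℕ → ℝ) (n : ℕ) : qpc b (2 * n + 1) = b n := by
  have h1 : (2 * n + 1) % 2 = 1 := by omega
  have h2 : (2 * n + 1) / 2 = n := by omega
  simp [qpc, h1, h2]

lemma qpc_even (b : ℕ → ℝ) (n : ℕ) : qpc b (2 * n) = -(b n) := by
  have h1 : (2 * n) % 2 = 0 := by omega
  have h2 : (2 * n) / 2 = n := by omega
  simp [qpc, h1, h2]

lemma qsum_pairF (e : ℕ → X) (κ : ℕ → ℕ) (b : ℕ → ℝ) (F : Finset ℕ) :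
    ∑ i ∈ qpairF F, qpc b i • e (κ i)
      = ∑ n ∈ F, b n • (e (κ (2 * n + 1)) - e (κ (2 * n))) := by
  rw [qpairF, Finset.sum_biUnion]
  · refine Finset.sum_congr rfl fun n hn => ?_
    have h2 : (2*n : ℕ) ∉ ({2*n+1} : Finset ℕ) := by simp
    rw [show ({2*n, 2*n+1} : Finset ℕ) = insert (2*n) {2*n+1} from rfl,
      Finset.sum_insert h2, Finset.sum_singleton, qpc_even, qpc_odd]
    rw [smul_sub]
    module
  · intro a _ b' _ hab
    simp only [Finset.disjoint_left, Finset.mem_insert, Finset.mem_singleton]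
    omega

lemma qpairF_range (m : ℕ) : qpairF (Finset.range m) = Finset.range (2 * m) := by
  ext i
  simp only [qpairF, Finset.mem_biUnion, Finset.mem_range, Finset.mem_insert,
    Finset.mem_singleton]
  constructor
  · rintro ⟨n, hn, h | h⟩ <;> omega
  · intro h; exact ⟨i / 2, by omega, by omega⟩

lemma qmodsum (v : ℕ → X) (c m : ℕ) :
    ∑ t ∈ Finset.range (m * c), v (t % c) = m • ∑ j ∈ Finset.range c, v j := by
  induction m with
  | zero => simp
  | succ m ih =>
    have h1 : (m+1)*c = m*c + c := by ring
    have h2 : ∑ t ∈ Finset.range (m*c + c), v (t % c)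
        = ∑ t ∈ Finset.range (m*c), v (t % c)
          + ∑ t ∈ Finset.Ico (m*c) (m*c + c), v (t % c) := by
      simp only [Finset.range_eq_Ico]
      exact (Finset.sum_Ico_consecutive _ (Nat.zero_le _) (Nat.le_add_right _ _)).symm
    have h3 : ∑ t ∈ Finset.Ico (m*c) (m*c+c), v (t % c)
        = ∑ j ∈ Finset.range c, v j := by
      rw [Finset.sum_Ico_eq_sum_range]
      simp only [Nat.add_sub_cancel_left]
      refine Finset.sum_congr rfl fun j hj => ?_
      have hj' := Finset.mem_range.mp hj
      have h5 : (m * c + j) % c = j := by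
        rw [Nat.add_comm, Nat.add_mul_mod_self_right, Nat.mod_eq_of_lt hj']
      rw [h5]
    rw [h1, h2, ih, h3, succ_nsmul]

lemma qgeomBound (H : Finset ℕ) : ∑ n ∈ H, ((1:ℝ)/2)^n ≤ 2 := by
  have hsub : H ⊆ Finset.range (H.sup id + 1) := fun n hn =>
    Finset.mem_range.2 (Nat.lt_succ_of_le (Finset.le_sup (f := id) hn))
  calc ∑ n ∈ H, ((1:ℝ)/2)^n
      ≤ ∑ n ∈ Finset.range (H.sup id + 1), ((1:ℝ)/2)^n :=
        Finset.sum_le_sum_of_subset_of_nonneg hsub (fun _ _ _ => by positivity)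
    _ ≤ 2 := by
        rw [geom_sum_eq (by norm_num)]
        have h1 : ((1/2:ℝ)^(H.sup id + 1) - 1)/((1/2:ℝ) - 1) = 2*(1 - (1/2)^(H.sup id + 1)) := by ring
        have : (0:ℝ) ≤ (1/2)^(H.sup id + 1) := by positivity
        rw [h1]; nlinarith



/-- basic-sequence inequality passes to subsequences (with the same constant). -/
lemma qsubBasic (e : ℕ → X) (B : ℝ)
    (hB : ∀ (a : ℕ → ℝ) (m M : ℕ), m ≤ M →
      ‖∑ n ∈ Finset.range m, a n • e n‖ ≤ B * ‖∑ n ∈ Finset.range M, a n • e n‖)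
    {k : ℕ → ℕ} (hk : StrictMono k) (c : ℕ → ℝ) {m M : ℕ} (hmM : m ≤ M) :
    ‖∑ i ∈ Finset.range m, c i • e (k i)‖ ≤ B * ‖∑ i ∈ Finset.range M, c i • e (k i)‖ := by
  set c' : ℕ → ℝ := Function.extend k c 0 with hc'
  have key : ∀ t : ℕ, ∑ i ∈ Finset.range t, c i • e (k i)
      = ∑ j ∈ Finset.range (k t), c' j • e j := by
    intro t
    have h1 : ∑ j ∈ Finset.range (k t), c' j • e j
        = ∑ j ∈ (Finset.range t).image k, c' j • e j := by
      refine (Finset.sum_subset ?_ ?_).symm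
      · intro j hj
        obtain ⟨i, hi, rfl⟩ := Finset.mem_image.mp hj
        exact Finset.mem_range.2 (hk (Finset.mem_range.mp hi))
      · intro j hj hj'
        have hz : c' j = 0 := by
          by_cases hr : ∃ i, k i = j
          · obtain ⟨i, rfl⟩ := hr
            have : i < t := hk.lt_iff_lt.mp (Finset.mem_range.mp hj)
            exact absurd (Finset.mem_image.2 ⟨i, Finset.mem_range.2 this, rfl⟩) hj'
          · rw [hc', Function.extend_apply' _ _ _ hr]; rfl
        rw [hz, zero_smul]
    rw [h1, Finset.sum_image (fun a _ b _ h => hk.injective h)]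
    refine Finset.sum_congr rfl fun i _ => ?_
    rw [hc', hk.injective.extend_apply]
  rw [key m, key M]
  exact hB c' (k m) (k M) (hk.monotone hmM)

/-- sum over a finset as a sum over a range with extended coefficients. -/
lemma qext_sum (e : ℕ → X) (k : ℕ → ℕ) (c : ℕ → ℝ) (F : Finset ℕ) {M : ℕ}
    (hFM : ∀ n ∈ F, n < M) :
    ∑ i ∈ Finset.range M, (if i ∈ F then c i else 0) • e (k i)
      = ∑ i ∈ F, c i • e (k i) := by
  rw [← Finset.sum_subset (f := fun i => (if i ∈ F then c i else 0) • e (k i))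
    (fun n hn => Finset.mem_range.2 (hFM n hn)) (by intro x _ hx; simp [hx])]
  exact Finset.sum_congr rfl fun i hi => by simp [hi]

/-- coefficient functional bound for a subsequence of a basic sequence. -/
lemma qcoefBound (e : ℕ → X) (B d₀ : ℝ)
    (hB : ∀ (a : ℕ → ℝ) (m M : ℕ), m ≤ M →
      ‖∑ n ∈ Finset.range m, a n • e n‖ ≤ B * ‖∑ n ∈ Finset.range M, a n • e n‖)
    (hd₀ : ∀ n, d₀ ≤ ‖e n‖)
    {k : ℕ → ℕ} (hk : StrictMono k) (c : ℕ → ℝ) {F : Finset ℕ} {n : ℕ} (hn : n ∈ F) :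
    |c n| * d₀ ≤ 2 * B * ‖∑ i ∈ F, c i • e (k i)‖ := by
  set M := F.sup id + 1 with hM
  have hFM : ∀ j ∈ F, j < M := fun j hj => Nat.lt_succ_of_le (Finset.le_sup (f := id) hj)
  set c' : ℕ → ℝ := fun i => if i ∈ F then c i else 0 with hc'
  have hsum : ∑ i ∈ Finset.range M, c' i • e (k i) = ∑ i ∈ F, c i • e (k i) :=
    qext_sum e k c F hFM
  have hnM : n < M := hFM n hn
  have h1 : c' n • e (k n) = ∑ i ∈ Finset.range (n+1), c' i • e (k i)
      - ∑ i ∈ Finset.range n, c' i • e (k i) := by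
    rw [Finset.sum_range_succ]; abel
  have h2 : ‖c' n • e (k n)‖ ≤ 2 * B * ‖∑ i ∈ Finset.range M, c' i • e (k i)‖ := by
    rw [h1]
    calc ‖_ - _‖ ≤ ‖∑ i ∈ Finset.range (n+1), c' i • e (k i)‖
        + ‖∑ i ∈ Finset.range n, c' i • e (k i)‖ := norm_sub_le _ _
      _ ≤ B * ‖∑ i ∈ Finset.range M, c' i • e (k i)‖
          + B * ‖∑ i ∈ Finset.range M, c' i • e (k i)‖ := by
          gcongr
          · exact qsubBasic e B hB hk c' hnM
          · exact qsubBasic e B hB hk c' (le_of_lt hnM)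
      _ = 2 * B * ‖∑ i ∈ Finset.range M, c' i • e (k i)‖ := by ring
  have h3 : c' n = c n := by simp [hc', hn]
  have h4 : |c n| * d₀ ≤ ‖c' n • e (k n)‖ := by
    rw [h3, norm_smul, Real.norm_eq_abs]
    exact mul_le_mul_of_nonneg_left (hd₀ (k n)) (abs_nonneg _)
  rw [hsum] at h2
  exact h4.trans h2

/-- property: domination with constant `C` for all index pairs entirely above `N`. -/
def QP (e : ℕ → X) (N : ℕ) (C : ℝ) : Prop :=
  ∀ k l : ℕ → ℕ, StrictMono k → StrictMono l → (∀ n, N < k n) → (∀ n, k n ≤ l n) →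
    ∀ (a : ℕ → ℝ) (F : Finset ℕ),
      ‖∑ n ∈ F, a n • e (l n)‖ ≤ C * ‖∑ n ∈ F, a n • e (k n)‖

/-- **Uniformity lemma**: a quasisubsymmetric basic sequence admits one domination
constant working for all pairs of index sequences. -/
lemma quniform (e : ℕ → X) (hqss : QuasiSubsymmetric e) (B d₀ D : ℝ) (hd₀pos : 0 < d₀)
    (hB1 : 1 ≤ B)
    (hB : ∀ (a : ℕ → ℝ) (m M : ℕ), m ≤ M →
      ‖∑ n ∈ Finset.range m, a n • e n‖ ≤ B * ‖∑ n ∈ Finset.range M, a n • e n‖)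
    (hd₀ : ∀ n, d₀ ≤ ‖e n‖) (hD : ∀ n, ‖e n‖ ≤ D) :
    ∃ C : ℝ, 1 ≤ C ∧ ∀ (k l : ℕ → ℕ), StrictMono k → StrictMono l → (∀ n, k n ≤ l n) →
      ∀ (a : ℕ → ℝ) (F : Finset ℕ),
        ‖∑ n ∈ F, a n • e (l n)‖ ≤ C * ‖∑ n ∈ F, a n • e (k n)‖ := by
  by_cases h : ∃ (N : ℕ) (C : ℝ), 0 ≤ C ∧ QP e N C
  · obtain ⟨N₀, C₀, hC₀, hP⟩ := h
    set n₀ := N₀ + 1 with hn₀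
    refine ⟨max 1 (D * n₀ * (2*B/d₀) + C₀ * (1+B)), le_max_left _ _, ?_⟩
    intro k l hk hl hkl a F
    set Xk := ∑ n ∈ F, a n • e (k n) with hXk
    have hnn : (0:ℝ) ≤ ‖Xk‖ := norm_nonneg _
    have hcoef : ∀ n ∈ F, |a n| ≤ 2*B/d₀ * ‖Xk‖ := by
      intro n hn
      have := qcoefBound e B d₀ hB hd₀ hk a hn
      rw [div_mul_eq_mul_div, le_div_iff₀ hd₀pos]
      linarith [this]
    set Flow := F.filter (fun n => n < n₀) with hFlow
    set Fhigh := F.filter (fun n => ¬ n < n₀) with hFhigh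
    have hsplitl : ∑ n ∈ F, a n • e (l n)
        = ∑ n ∈ Flow, a n • e (l n) + ∑ n ∈ Fhigh, a n • e (l n) :=
      (Finset.sum_filter_add_sum_filter_not F _ _).symm
    have hsplitk : Xk = ∑ n ∈ Flow, a n • e (k n) + ∑ n ∈ Fhigh, a n • e (k n) :=
      (Finset.sum_filter_add_sum_filter_not F _ _).symm
    have hDpos : (0:ℝ) < D := lt_of_lt_of_le hd₀pos (le_trans (hd₀ 0) (hD 0))
    -- the low part (for any index map j ≥ id)
    have hlowbound : ∀ j : ℕ → ℕ, ‖∑ n ∈ Flow, a n • e (j n)‖ ≤ D * n₀ * (2*B/d₀) * ‖Xk‖ := by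
      intro j
      calc ‖∑ n ∈ Flow, a n • e (j n)‖ ≤ ∑ n ∈ Flow, ‖a n • e (j n)‖ := norm_sum_le _ _
        _ ≤ ∑ _n ∈ Flow, D * (2*B/d₀ * ‖Xk‖) := by
            refine Finset.sum_le_sum fun n hn => ?_
            rw [norm_smul, Real.norm_eq_abs]
            have h1 : |a n| ≤ 2*B/d₀ * ‖Xk‖ :=
              hcoef n (Finset.mem_of_mem_filter n hn)
            have h2 : ‖e (j n)‖ ≤ D := hD _
            calc |a n| * ‖e (j n)‖ ≤ (2*B/d₀ * ‖Xk‖) * D := by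
                  apply mul_le_mul h1 h2 (norm_nonneg _)
                  positivity
              _ = D * (2*B/d₀ * ‖Xk‖) := by ring
        _ ≤ n₀ * (D * (2*B/d₀ * ‖Xk‖)) := by
            rw [Finset.sum_const, nsmul_eq_mul]
            have hcard : (Flow.card : ℝ) ≤ n₀ := by
              have : Flow ⊆ Finset.range n₀ := by
                intro x hx
                simp only [hFlow, Finset.mem_filter] at hx
                exact Finset.mem_range.2 hx.2
              have h9 : Flow.card ≤ n₀ :=
                le_trans (Finset.card_le_card this) (le_of_eq (Finset.card_range n₀))
              exact_mod_cast h9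
            have hpos : (0:ℝ) ≤ D * (2*B/d₀ * ‖Xk‖) := by positivity
            exact mul_le_mul_of_nonneg_right hcard hpos
        _ = D * n₀ * (2*B/d₀) * ‖Xk‖ := by ring
    -- the low part of Xk is bounded via the basis constant
    have hlowk : ‖∑ n ∈ Flow, a n • e (k n)‖ ≤ B * ‖Xk‖ := by
      set M := F.sup id + 1 + n₀ with hM
      have hFM : ∀ n ∈ F, n < M := fun n hn => by
        have h9 := Finset.le_sup (f := id) hn
        simp only [id_eq] at h9
        omega
      have h1 : ∑ i ∈ Finset.range n₀, (if i ∈ F then a i else 0) • e (k i)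
          = ∑ n ∈ Flow, a n • e (k n) := by
        rw [show (∑ i ∈ Finset.range n₀, (if i ∈ F then a i else 0) • e (k i))
            = ∑ i ∈ Finset.range n₀, (if i ∈ F then a i • e (k i) else 0) from
          Finset.sum_congr rfl fun i _ => by split <;> simp]
        rw [← Finset.sum_filter]
        apply Finset.sum_congr _ (fun i _ => rfl)
        ext i
        simp only [Finset.mem_filter, Finset.mem_range, hFlow]
        tauto
      have h2 := qsubBasic e B hB hk (fun i => if i ∈ F then a i else 0)
        (show n₀ ≤ M by omega)
      rw [h1, qext_sum e k a F hFM] at h2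
      exact h2
    -- the high part: use QP with shifted sequences
    have hhigh : ‖∑ n ∈ Fhigh, a n • e (l n)‖ ≤ C₀ * ‖∑ n ∈ Fhigh, a n • e (k n)‖ := by
      set k' := fun i => k (n₀ + i) with hk'd
      set l' := fun i => l (n₀ + i) with hl'd
      have hk' : StrictMono k' := fun i j hij => hk (by omega)
      have hl' : StrictMono l' := fun i j hij => hl (by omega)
      have hNk' : ∀ i, N₀ < k' i := fun i => by
        have := qsm_le hk (n₀ + i); simp only [hk'd]; omega
      have hkl' : ∀ i, k' i ≤ l' i := fun i => hkl _
      set F' := Fhigh.image (fun n => n - n₀) with hF'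
      have hmemhigh : ∀ n ∈ Fhigh, n₀ ≤ n := by
        intro n hn
        simp only [hFhigh, Finset.mem_filter, not_lt] at hn
        exact hn.2
      have htr : ∀ g : ℕ → X, ∑ i ∈ F', g (n₀ + i) = ∑ n ∈ Fhigh, g n := by
        intro g
        rw [hF', Finset.sum_image (by
          intro x hx y hy hxy
          have := hmemhigh x hx; have := hmemhigh y hy; simp only at hxy; omega)]
        refine Finset.sum_congr rfl fun n hn => ?_
        have := hmemhigh n hn
        congr 1; omega
      have hQ := hP k' l' hk' hl' hNk' hkl' (fun i => a (n₀ + i)) F'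
      have e1 : ∑ i ∈ F', a (n₀ + i) • e (l' i) = ∑ n ∈ Fhigh, a n • e (l n) :=
        htr (fun n => a n • e (l n))
      have e2 : ∑ i ∈ F', a (n₀ + i) • e (k' i) = ∑ n ∈ Fhigh, a n • e (k n) :=
        htr (fun n => a n • e (k n))
      rw [e1, e2] at hQ
      exact hQ
    have hhighk : ‖∑ n ∈ Fhigh, a n • e (k n)‖ ≤ (1 + B) * ‖Xk‖ := by
      have : ∑ n ∈ Fhigh, a n • e (k n) = Xk - ∑ n ∈ Flow, a n • e (k n) := by
        rw [hsplitk]; abel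
      rw [this]
      calc ‖Xk - ∑ n ∈ Flow, a n • e (k n)‖
          ≤ ‖Xk‖ + ‖∑ n ∈ Flow, a n • e (k n)‖ := norm_sub_le _ _
        _ ≤ ‖Xk‖ + B * ‖Xk‖ := by linarith [hlowk]
        _ = (1 + B) * ‖Xk‖ := by ring
    calc ‖∑ n ∈ F, a n • e (l n)‖
        ≤ ‖∑ n ∈ Flow, a n • e (l n)‖ + ‖∑ n ∈ Fhigh, a n • e (l n)‖ := by
          rw [hsplitl]; exact norm_add_le _ _
      _ ≤ D * n₀ * (2*B/d₀) * ‖Xk‖ + C₀ * ((1 + B) * ‖Xk‖) := by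
          have := hlowbound l
          have h2 := le_trans hhigh (mul_le_mul_of_nonneg_left hhighk hC₀)
          linarith
      _ = (D * n₀ * (2*B/d₀) + C₀ * (1+B)) * ‖Xk‖ := by ring
      _ ≤ max 1 (D * n₀ * (2*B/d₀) + C₀ * (1+B)) * ‖Xk‖ :=
          mul_le_mul_of_nonneg_right (le_max_right _ _) hnn
  · -- gliding-hump contradiction
    exfalso
    push_neg at h
    have hW : ∀ (N j : ℕ), ∃ w : (ℕ → ℕ) × (ℕ → ℕ) × (ℕ → ℝ) × Finset ℕ,
        StrictMono w.1 ∧ StrictMono w.2.1 ∧ (∀ n, N < w.1 n) ∧ (∀ n, w.1 n ≤ w.2.1 n) ∧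
        ((j:ℝ)+1) * ‖∑ n ∈ w.2.2.2, w.2.2.1 n • e (w.1 n)‖
          < ‖∑ n ∈ w.2.2.2, w.2.2.1 n • e (w.2.1 n)‖ := by
      intro N j
      have hnP := h N ((j:ℝ)+1) (by positivity)
      unfold QP at hnP
      push_neg at hnP
      obtain ⟨k, l, hk, hl, hN, hkl, a, F, hviol⟩ := hnP
      exact ⟨⟨k, l, a, F⟩, hk, hl, hN, hkl, hviol⟩
    set bigIdx : (ℕ → ℕ) × (ℕ → ℕ) × (ℕ → ℝ) × Finset ℕ → ℕ :=
      fun w => w.2.1 (w.2.2.2.sup id) with hbig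
    set w : ℕ → (ℕ → ℕ) × (ℕ → ℕ) × (ℕ → ℝ) × Finset ℕ :=
      fun j => Nat.rec (Classical.choose (hW 0 0))
        (fun j prev => Classical.choose (hW (bigIdx prev) (j+1))) j with hwdef
    set NN : ℕ → ℕ := fun j => Nat.rec 0 (fun j _ => bigIdx (w j)) j with hNN
    set kk : ℕ → ℕ → ℕ := fun j => (w j).1 with hkkd
    set ll : ℕ → ℕ → ℕ := fun j => (w j).2.1 with hlld
    set aa : ℕ → ℕ → ℝ := fun j => (w j).2.2.1 with haad
    set FF : ℕ → Finset ℕ := fun j => (w j).2.2.2 with hFFd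
    set mm : ℕ → ℕ := fun j => (FF j).sup id with hmmd
    have hspec : ∀ j, StrictMono (kk j) ∧ StrictMono (ll j) ∧ (∀ n, NN j < kk j n) ∧
        (∀ n, kk j n ≤ ll j n) ∧
        ((j:ℝ)+1) * ‖∑ n ∈ FF j, aa j n • e (kk j n)‖
          < ‖∑ n ∈ FF j, aa j n • e (ll j n)‖ := by
      intro j
      cases j with
      | zero => exact Classical.choose_spec (hW 0 0)
      | succ j => exact Classical.choose_spec (hW (bigIdx (w j)) (j+1))
    have hNNsucc : ∀ j, NN (j+1) = ll j (mm j) := fun j => rfl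
    set o : ℕ → ℕ := fun j => Nat.rec 0 (fun i prev => prev + (mm i + 1)) j with hod
    have hoS : ∀ j, o (j+1) = o j + (mm j + 1) := fun j => rfl
    have homono : StrictMono o := strictMono_nat_of_lt_succ (fun j => by rw [hoS]; omega)
    have hoge : ∀ j, j ≤ o j := qsm_le homono
    set J : ℕ → ℕ := fun n => Nat.findGreatest (fun j => o j ≤ n) n with hJd
    have hJ1 : ∀ n, o (J n) ≤ n := fun n =>
      Nat.findGreatest_spec (P := fun j => o j ≤ n) (m := 0) (Nat.zero_le n)
        (show o 0 ≤ n from Nat.zero_le n)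
    have hJ2 : ∀ n, n < o (J n + 1) := by
      intro n
      by_contra hcon
      push_neg at hcon
      have h1 : J n + 1 ≤ n := le_trans (hoge _) hcon
      exact Nat.findGreatest_is_greatest (Nat.lt_succ_self (J n)) h1 hcon
    have hJuniq : ∀ n j, o j ≤ n → n < o (j+1) → J n = j := by
      intro n j h1 h2
      have hle : J n ≤ j := by
        by_contra hgt
        push_neg at hgt
        have h3 : o (j+1) ≤ o (J n) := homono.monotone hgt
        have h4 := hJ1 n
        omega
      have hge : j ≤ J n := Nat.le_findGreatest (le_trans (hoge j) h1) h1
      omega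
    set K : ℕ → ℕ := fun n => kk (J n) (n - o (J n)) with hKd
    set L : ℕ → ℕ := fun n => ll (J n) (n - o (J n)) with hLd
    have hJblock : ∀ j i, i ≤ mm j → J (o j + i) = j := by
      intro j i hi
      exact hJuniq _ _ (Nat.le_add_right _ _) (by rw [hoS]; omega)
    have hKblock : ∀ j i, i ≤ mm j → K (o j + i) = kk j i := by
      intro j i hi
      simp only [hKd, hJblock j i hi, Nat.add_sub_cancel_left]
    have hLblock : ∀ j i, i ≤ mm j → L (o j + i) = ll j i := by
      intro j i hi
      simp only [hLd, hJblock j i hi, Nat.add_sub_cancel_left]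
    have hsub_le : ∀ n, n - o (J n) ≤ mm (J n) := by
      intro n
      have h1 := hJ1 n; have h2 := hJ2 n
      rw [hoS] at h2
      omega
    have hchain : ∀ n, kk (J n) (n - o (J n)) ≤ ll (J n) (mm (J n)) := by
      intro n
      calc kk (J n) (n - o (J n)) ≤ kk (J n) (mm (J n)) :=
            (hspec (J n)).1.monotone (hsub_le n)
        _ ≤ ll (J n) (mm (J n)) := (hspec (J n)).2.2.2.1 _
    have hchainL : ∀ n, ll (J n) (n - o (J n)) ≤ ll (J n) (mm (J n)) := fun n =>
      (hspec (J n)).2.1.monotone (hsub_le n)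
    have hJsucc : ∀ n, n + 1 = o (J n + 1) → J (n+1) = J n + 1 := by
      intro n heq
      refine hJuniq _ _ (le_of_eq heq.symm) ?_
      rw [hoS (J n + 1)]
      omega
    have hKmono : StrictMono K := by
      apply strictMono_nat_of_lt_succ
      intro n
      have h1 := hJ1 n; have h2 := hJ2 n
      rcases Nat.lt_or_ge (n+1) (o (J n + 1)) with hc | hc
      · have hJn1 : J (n+1) = J n := hJuniq _ _ (le_trans h1 (Nat.le_succ n)) hc
        show kk (J n) (n - o (J n)) < kk (J (n+1)) (n + 1 - o (J (n+1)))
        rw [hJn1]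
        exact (hspec (J n)).1 (by omega)
      · have heq : n + 1 = o (J n + 1) := by omega
        have hJn1 := hJsucc n heq
        show kk (J n) (n - o (J n)) < kk (J (n+1)) (n + 1 - o (J (n+1)))
        rw [hJn1, heq, Nat.sub_self]
        calc kk (J n) (n - o (J n)) ≤ ll (J n) (mm (J n)) := hchain n
          _ = NN (J n + 1) := (hNNsucc (J n)).symm
          _ < kk (J n + 1) 0 := (hspec (J n + 1)).2.2.1 0
    have hLmono : StrictMono L := by
      apply strictMono_nat_of_lt_succ
      intro n
      have h1 := hJ1 n; have h2 := hJ2 n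
      rcases Nat.lt_or_ge (n+1) (o (J n + 1)) with hc | hc
      · have hJn1 : J (n+1) = J n := hJuniq _ _ (le_trans h1 (Nat.le_succ n)) hc
        show ll (J n) (n - o (J n)) < ll (J (n+1)) (n + 1 - o (J (n+1)))
        rw [hJn1]
        exact (hspec (J n)).2.1 (by omega)
      · have heq : n + 1 = o (J n + 1) := by omega
        have hJn1 := hJsucc n heq
        show ll (J n) (n - o (J n)) < ll (J (n+1)) (n + 1 - o (J (n+1)))
        rw [hJn1, heq, Nat.sub_self]
        calc ll (J n) (n - o (J n)) ≤ ll (J n) (mm (J n)) := hchainL n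
          _ = NN (J n + 1) := (hNNsucc (J n)).symm
          _ < kk (J n + 1) 0 := (hspec (J n + 1)).2.2.1 0
          _ ≤ ll (J n + 1) 0 := (hspec (J n + 1)).2.2.2.1 0
    have hKL : ∀ n, K n ≤ L n := fun n => (hspec (J n)).2.2.2.1 _
    obtain ⟨Cs, hCspos, hdom⟩ := hqss K L hKmono hLmono hKL
    set j := ⌈Cs⌉₊ with hjd
    set F' := (FF j).image (fun i => o j + i) with hF'd
    set a' : ℕ → ℝ := fun n => aa j (n - o j) with ha'd
    have htrK : ∑ n ∈ F', a' n • e (K n) = ∑ i ∈ FF j, aa j i • e (kk j i) := by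
      rw [hF'd, Finset.sum_image (by intro x _ y _ hxy; simp only at hxy; omega)]
      refine Finset.sum_congr rfl fun i hi => ?_
      have hi' : i ≤ mm j := Finset.le_sup (f := id) hi
      rw [hKblock j i hi', ha'd]
      simp [Nat.add_sub_cancel_left]
    have htrL : ∑ n ∈ F', a' n • e (L n) = ∑ i ∈ FF j, aa j i • e (ll j i) := by
      rw [hF'd, Finset.sum_image (by intro x _ y _ hxy; simp only at hxy; omega)]
      refine Finset.sum_congr rfl fun i hi => ?_
      have hi' : i ≤ mm j := Finset.le_sup (f := id) hi
      rw [hLblock j i hi', ha'd]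
      simp [Nat.add_sub_cancel_left]
    have hd := hdom a' F'
    rw [htrK, htrL] at hd
    have hvj := (hspec j).2.2.2.2
    have hCs_le : Cs ≤ (j:ℝ)+1 := by
      have h1 := Nat.le_ceil Cs
      have h2 : ((j:ℕ):ℝ) ≤ (j:ℝ) + 1 := by linarith
      exact le_trans h1 (by exact_mod_cast Nat.le_succ j)
    have hnn : (0:ℝ) ≤ ‖∑ i ∈ FF j, aa j i • e (kk j i)‖ := norm_nonneg _
    have : Cs * ‖∑ i ∈ FF j, aa j i • e (kk j i)‖
        ≤ ((j:ℝ)+1) * ‖∑ i ∈ FF j, aa j i • e (kk j i)‖ :=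
      mul_le_mul_of_nonneg_right hCs_le hnn
    linarith

/-- differences along a subsequence of a basic sequence form a basic sequence. -/
lemma qdiffBasic (e : ℕ → X) (B d₀ : ℝ) (hd₀pos : 0 < d₀) (hB1 : 1 ≤ B)
    (hB : ∀ (a : ℕ → ℝ) (m M : ℕ), m ≤ M →
      ‖∑ n ∈ Finset.range m, a n • e n‖ ≤ B * ‖∑ n ∈ Finset.range M, a n • e n‖)
    (hd₀ : ∀ n, d₀ ≤ ‖e n‖)
    {k : ℕ → ℕ} (hk : StrictMono k) :
    IsBasicSeq (fun n => e (k (2*n+1)) - e (k (2*n))) := by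
  constructor
  · intro n hzero
    have h1 : ∑ i ∈ qpairF {n}, qpc (fun _ => (1:ℝ)) i • e (k i)
        = e (k (2*n+1)) - e (k (2*n)) := by
      rw [qsum_pairF e k _ {n}, Finset.sum_singleton, one_smul]
    have h2 := qcoefBound e B d₀ hB hd₀ hk (qpc (fun _ => (1:ℝ)))
      (qmem_pairF (Finset.mem_singleton_self n))
    have hzero' : e (k (2 * n + 1)) - e (k (2 * n)) = 0 := hzero
    rw [h1, qpc_odd, hzero'] at h2
    simp only [norm_zero, mul_zero, abs_one, one_mul] at h2
    linarith
  · refine ⟨B, hB1, fun b m M hmM => ?_⟩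
    have e1 : ∀ t, ∑ n' ∈ Finset.range t,
        b n' • ((fun n => e (k (2*n+1)) - e (k (2*n))) n')
          = ∑ i ∈ Finset.range (2*t), qpc b i • e (k i) := by
      intro t
      rw [← qpairF_range, qsum_pairF]
    rw [e1 m, e1 M]
    exact qsubBasic e B hB hk (qpc b) (by omega)

/-- uniform suppression bound implies unconditionality. -/
lemma quncondOfSuppression (e : ℕ → X) {k : ℕ → ℕ} (K₀ : ℝ) (hK₀ : 0 ≤ K₀)
    (hbasicd : IsBasicSeq (fun n => e (k (2*n+1)) - e (k (2*n))))
    (hsup : ∀ (b : ℕ → ℝ) (F H : Finset ℕ), H ⊆ F →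
      ‖∑ n ∈ H, b n • (e (k (2*n+1)) - e (k (2*n)))‖
        ≤ K₀ * ‖∑ n ∈ F, b n • (e (k (2*n+1)) - e (k (2*n)))‖) :
    IsUncondBasicSeq (fun n => e (k (2*n+1)) - e (k (2*n))) := by
  refine ⟨hbasicd, 1 + 2*K₀, ?_⟩
  intro a ε hε F
  set d : ℕ → X := fun n => e (k (2*n+1)) - e (k (2*n)) with hd
  set H := F.filter (fun n => ε n = -1) with hH
  have hHF : H ⊆ F := Finset.filter_subset _ _
  have hsplit : ∑ n ∈ F, (ε n * a n) • d n
      = ∑ n ∈ F, a n • d n - (2:ℝ) • ∑ n ∈ H, a n • d n := by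
    have hpt : ∀ n ∈ F, (ε n * a n) • d n
        = a n • d n - (2:ℝ) • (if ε n = -1 then a n • d n else 0) := by
      intro n _
      rcases hε n with h | h
      · rw [h]
        norm_num
      · rw [h, if_pos rfl]
        rw [smul_smul]
        module
    rw [Finset.sum_congr rfl hpt, Finset.sum_sub_distrib, ← Finset.smul_sum,
      ← Finset.sum_filter, ← hH]
  rw [hsplit]
  have h1 := hsup a F H hHF
  have h2 : ‖∑ n ∈ F, a n • d n - (2:ℝ) • ∑ n ∈ H, a n • d n‖
      ≤ ‖∑ n ∈ F, a n • d n‖ + 2 * ‖∑ n ∈ H, a n • d n‖ := by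
    calc ‖∑ n ∈ F, a n • d n - (2:ℝ) • ∑ n ∈ H, a n • d n‖
        ≤ ‖∑ n ∈ F, a n • d n‖ + ‖(2:ℝ) • ∑ n ∈ H, a n • d n‖ := norm_sub_le _ _
      _ = ‖∑ n ∈ F, a n • d n‖ + 2 * ‖∑ n ∈ H, a n • d n‖ := by
          rw [norm_smul]; norm_num
  calc ‖∑ n ∈ F, a n • d n - (2:ℝ) • ∑ n ∈ H, a n • d n‖
      ≤ ‖∑ n ∈ F, a n • d n‖ + 2 * ‖∑ n ∈ H, a n • d n‖ := h2
    _ ≤ ‖∑ n ∈ F, a n • d n‖ + 2 * (K₀ * ‖∑ n ∈ F, a n • d n‖) := by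
        have := mul_le_mul_of_nonneg_left h1 (by norm_num : (0:ℝ) ≤ 2)
        linarith
    _ = (1 + 2*K₀) * ‖∑ n ∈ F, a n • d n‖ := by ring

/-- In the case where unit pair-patterns are uniformly large at every placement,
the difference sequence (of consecutive terms) has a lower `ℓ¹` estimate. -/
lemma ql1lower (e : ℕ → X) (D Cu θ : ℝ) (hD0 : 0 < D)
    (hD : ∀ n, ‖e n‖ ≤ D) (hCu1 : 1 ≤ Cu) (hθpos : 0 < θ)
    (huni : ∀ (k l : ℕ → ℕ), StrictMono k → StrictMono l → (∀ n, k n ≤ l n) →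
      ∀ (a : ℕ → ℝ) (F : Finset ℕ),
        ‖∑ n ∈ F, a n • e (l n)‖ ≤ Cu * ‖∑ n ∈ F, a n • e (k n)‖)
    (hθ : ∀ N : ℕ, 1 ≤ N → ∀ p : ℕ → ℕ, StrictMono p →
      θ * N ≤ ‖∑ j ∈ Finset.range N, (e (p (2*j)) - e (p (2*j+1)))‖)
    (b : ℕ → ℝ) (F : Finset ℕ) :
    (θ/4) * ∑ n ∈ F, |b n|
      ≤ Cu * ‖∑ n ∈ F, b n • (e (2*n+1) - e (2*n))‖ := by
  set s : ℝ := θ/8 with hs_def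
  have hs : 0 < s := by rw [hs_def]; linarith
  set mF := F.sup id with hmF
  set M := mF + 1 with hM
  set G := ⌈2*D/s⌉₊ + 1 with hG
  have hG1 : 1 ≤ G := by omega
  set N := G * M with hN
  have hM1 : 1 ≤ M := by omega
  have hN1 : 1 ≤ N := by
    calc 1 = 1 * 1 := by ring
      _ ≤ G * M := Nat.mul_le_mul hG1 hM1
  set p : ℕ → ℕ := fun i => 2*M + i with hp_def
  have hp : StrictMono p := fun i j hij => by simp only [hp_def]; omega
  set P := ∑ j ∈ Finset.range N, (e (p (2*j)) - e (p (2*j+1))) with hP_def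
  have hP : θ * N ≤ ‖P‖ := hθ N hN1 p hp
  have hθN : (0:ℝ) < θ * N := by
    have h9 : (1:ℝ) ≤ (N:ℝ) := by exact_mod_cast hN1
    nlinarith
  have hPne : P ≠ 0 := by
    intro h0
    rw [h0, norm_zero] at hP
    linarith
  obtain ⟨f, hf1, hfP⟩ := exists_dual_vector ℝ P (norm_ne_zero_iff.mpr hPne)
  set w : ℕ → ℝ := fun t => f (e (2*M + t)) with hw_def
  have hwD : ∀ t, |w t| ≤ D := by
    intro t
    have h1 : ‖f (e (2*M + t))‖ ≤ ‖f‖ * ‖e (2*M + t)‖ := f.le_opNorm _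
    rw [hf1, one_mul] at h1
    calc |w t| = ‖f (e (2*M + t))‖ := (Real.norm_eq_abs _).symm
      _ ≤ ‖e (2*M + t)‖ := h1
      _ ≤ D := hD _
  have hfP' : f P = ‖P‖ := by exact_mod_cast hfP
  have hsumw : ∑ j ∈ Finset.range N, (w (2*j) - w (2*j+1)) = ‖P‖ := by
    rw [← hfP', hP_def, map_sum]
    refine Finset.sum_congr rfl fun j _ => ?_
    rw [map_sub]
  set hh : ℕ → ℝ := fun r => -D + r * s with hh_def
  set SS : ℕ → Finset ℕ := fun r =>
    (Finset.range N).filter (fun j => hh r + s ≤ w (2*j) ∧ w (2*j+1) ≤ hh r - s) with hSS_def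
  have hSSsub : ∀ r, SS r ⊆ Finset.range N := fun r => Finset.filter_subset _ _
  -- counting estimate, per pair j
  have hcount : ∀ j ∈ Finset.range N,
      ((w (2*j) - w (2*j+1)) / s - 4 : ℝ)
        ≤ (((Finset.range G).filter (fun r => j ∈ SS r)).card : ℝ) := by
    intro j hjN
    set α : ℝ := w (2*j+1) + s with hα
    set β : ℝ := w (2*j) - s with hβ
    have hwlow : -D ≤ w (2*j+1) := (abs_le.mp (hwD (2*j+1))).1
    have hwhigh : w (2*j) ≤ D := (abs_le.mp (hwD (2*j))).2
    have hαD : 0 ≤ (α + D) / s := by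
      apply div_nonneg _ (le_of_lt hs)
      rw [hα]; linarith
    set r₁ := ⌈(α + D)/s⌉₊ with hr₁
    set r₂ := ⌊(β + D)/s⌋₊ with hr₂
    have key1 : (r₁:ℝ) < (α+D)/s + 1 := Nat.ceil_lt_add_one hαD
    have key1' : (α+D)/s ≤ (r₁:ℝ) := Nat.le_ceil _
    have key2 : (β+D)/s - 1 < (r₂:ℝ) := by
      have := Nat.lt_floor_add_one ((β+D)/s)
      linarith
    have hdiff : (β+D)/s - (α+D)/s = (w (2*j) - w (2*j+1))/s - 2 := by
      rw [hα, hβ]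
      field_simp
      ring
    rcases le_or_gt r₁ r₂ with hle | hlt
    · -- main case
      have hr₁pos : 1 ≤ r₁ := by
        rw [hr₁]
        rw [Nat.one_le_ceil_iff]
        apply div_pos _ hs
        rw [hα]; linarith
      have hβD0 : (0:ℝ) ≤ (β+D)/s := by
        by_contra hcon
        push_neg at hcon
        have h0 : r₂ = 0 := by
          rw [hr₂]
          exact Nat.floor_of_nonpos (le_of_lt hcon)
        omega
      have hfloor_le : (r₂:ℝ) ≤ (β+D)/s := Nat.floor_le hβD0
      have hsub : Finset.Icc r₁ r₂ ⊆ (Finset.range G).filter (fun r => j ∈ SS r) := by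
        intro r hr
        obtain ⟨hr1, hr2⟩ := Finset.mem_Icc.mp hr
        have hrG : r < G := by
          have h4 : (β+D)/s ≤ 2*D/s := by
            gcongr
            rw [hβ]; linarith
          have h5 : (r₂:ℝ) ≤ (⌈2*D/s⌉₊ : ℝ) := le_trans hfloor_le (le_trans h4 (Nat.le_ceil _))
          have h6 : r₂ ≤ ⌈2*D/s⌉₊ := by exact_mod_cast h5
          omega
        refine Finset.mem_filter.2 ⟨Finset.mem_range.2 hrG, ?_⟩
        rw [hSS_def]
        simp only
        refine Finset.mem_filter.2 ⟨hjN, ?_, ?_⟩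
        · -- hh r + s ≤ w (2j)
          have h7 : (r:ℝ) ≤ r₂ := by exact_mod_cast hr2
          have h8 : (r:ℝ) * s ≤ β + D := by
            calc (r:ℝ) * s ≤ (r₂:ℝ) * s := by gcongr
              _ ≤ ((β+D)/s) * s := by gcongr
              _ = β + D := by field_simp
          rw [hh_def]
          simp only
          rw [hβ] at h8
          linarith
        · -- w (2j+1) ≤ hh r - s
          have h7 : (r₁:ℝ) ≤ r := by exact_mod_cast hr1
          have h9 : α + D ≤ (r:ℝ) * s := by
            calc α + D = ((α+D)/s) * s := by field_simp
              _ ≤ (r₁:ℝ) * s := by gcongr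
              _ ≤ (r:ℝ) * s := by gcongr
          rw [hh_def]
          simp only
          rw [hα] at h9
          linarith
      have hcard : (Finset.Icc r₁ r₂).card = r₂ + 1 - r₁ := Nat.card_Icc _ _
      have h10 : r₂ + 1 - r₁ ≤ ((Finset.range G).filter (fun r => j ∈ SS r)).card :=
        hcard ▸ Finset.card_le_card hsub
      have h11 : ((w (2*j) - w (2*j+1)) / s - 4 : ℝ) ≤ (r₂:ℝ) + 1 - r₁ := by
        nlinarith [key1, key2, hdiff]
      have h12 : ((r₂ + 1 - r₁ : ℕ) : ℝ) = (r₂:ℝ) + 1 - r₁ := by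
        have h13 : r₁ ≤ r₂ + 1 := by omega
        push_cast [h13]
        ring
      calc ((w (2*j) - w (2*j+1)) / s - 4 : ℝ) ≤ (r₂:ℝ) + 1 - r₁ := h11
        _ = ((r₂ + 1 - r₁ : ℕ) : ℝ) := h12.symm
        _ ≤ _ := by exact_mod_cast h10
    · -- degenerate case: LHS nonpositive
      have hlt' : (r₂:ℝ) < r₁ := by exact_mod_cast hlt
      have h12 : ((w (2*j) - w (2*j+1)) / s - 4 : ℝ) ≤ 0 := by
        nlinarith [key1, key2, hdiff]
      calc ((w (2*j) - w (2*j+1)) / s - 4 : ℝ) ≤ 0 := h12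
        _ ≤ _ := Nat.cast_nonneg _
  -- total count and pigeonhole
  have hswapN : ∑ r ∈ Finset.range G, (SS r).card
      = ∑ j ∈ Finset.range N, ((Finset.range G).filter (fun r => j ∈ SS r)).card := by
    have h1 : ∀ r ∈ Finset.range G, (SS r).card
        = ∑ j ∈ Finset.range N, (if j ∈ SS r then 1 else 0) := by
      intro r _
      rw [← Finset.card_filter]
      congr 1
      rw [Finset.filter_mem_eq_inter]
      exact (Finset.inter_eq_right.2 (hSSsub r)).symm
    rw [Finset.sum_congr rfl h1, Finset.sum_comm]
    exact Finset.sum_congr rfl fun j _ => (Finset.card_filter _ _).symm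
  have htotal : (4 * N : ℝ) ≤ ((∑ r ∈ Finset.range G, (SS r).card : ℕ) : ℝ) := by
    have hA : ∑ j ∈ Finset.range N, ((w (2*j) - w (2*j+1))/s - 4 : ℝ)
        = ‖P‖/s - 4*N := by
      rw [Finset.sum_sub_distrib, ← Finset.sum_div, hsumw, Finset.sum_const,
        Finset.card_range, nsmul_eq_mul]
      ring
    have hB : (8 * N : ℝ) ≤ ‖P‖/s := by
      rw [le_div_iff₀ hs]
      calc (8 * N : ℝ) * s = θ * N := by rw [hs_def]; ring
        _ ≤ ‖P‖ := hP
    have hC : (4 * N : ℝ) ≤ ∑ j ∈ Finset.range N, ((w (2*j) - w (2*j+1))/s - 4 : ℝ) := by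
      rw [hA]; linarith
    calc (4 * N : ℝ) ≤ ∑ j ∈ Finset.range N, ((w (2*j) - w (2*j+1))/s - 4 : ℝ) := hC
      _ ≤ ∑ j ∈ Finset.range N, (((Finset.range G).filter (fun r => j ∈ SS r)).card : ℝ) :=
          Finset.sum_le_sum hcount
      _ = ((∑ r ∈ Finset.range G, (SS r).card : ℕ) : ℝ) := by
          rw [hswapN]; push_cast; ring
  have hpig : ∃ r, 2*M ≤ (SS r).card := by
    by_contra hno
    push_neg at hno
    have hlt : ∑ r ∈ Finset.range G, (SS r).card < ∑ _r ∈ Finset.range G, 2*M := by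
      apply Finset.sum_lt_sum_of_nonempty
      · exact ⟨0, Finset.mem_range.2 (by omega)⟩
      · intro r _; exact hno r
    rw [Finset.sum_const, Finset.card_range, smul_eq_mul] at hlt
    have hNat : 4*N ≤ ∑ r ∈ Finset.range G, (SS r).card := by exact_mod_cast htotal
    have : G * (2*M) = 2*N := by rw [hN]; ring
    omega
  obtain ⟨r, hrcard⟩ := hpig
  set S := SS r with hS_def
  have hstrad : ∀ j ∈ S, hh r + s ≤ w (2*j) ∧ w (2*j+1) ≤ hh r - s := by
    intro j hj
    exact (Finset.mem_filter.mp hj).2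
  have hSN : ∀ j ∈ S, j < N := fun j hj => Finset.mem_range.mp (hSSsub r hj)
  -- monotone enumeration of straddlers
  set σ : ℕ → ℕ := fun t => if ht : t < S.card then (S.orderEmbOfFin rfl ⟨t, ht⟩ : ℕ) else N + t
    with hσ_def
  have hσS : ∀ t (ht : t < S.card), σ t ∈ S := by
    intro t ht
    rw [hσ_def]
    simp only [dif_pos ht]
    exact Finset.orderEmbOfFin_mem _ _ _
  have hσmono : StrictMono σ := by
    intro t t' htt
    rw [hσ_def]
    simp only
    by_cases h1 : t < S.card
    · by_cases h2 : t' < S.card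
      · rw [dif_pos h1, dif_pos h2]
        exact (S.orderEmbOfFin rfl).strictMono (show (⟨t, h1⟩ : Fin S.card) < ⟨t', h2⟩ from htt)
      · rw [dif_pos h1, dif_neg h2]
        have : (S.orderEmbOfFin rfl ⟨t, h1⟩ : ℕ) ∈ S := Finset.orderEmbOfFin_mem _ _ _
        have := hSN _ this
        omega
    · have h2 : ¬ t' < S.card := by omega
      rw [dif_neg h1, dif_neg h2]
      omega
  have hσge : ∀ t, t ≤ σ t := qsm_le hσmono
  -- the comparison index map
  set li : ℕ → ℕ := fun i => if i % 2 = 0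
      then (if b (i/2) < 0 then 2*σ i else 2*σ i + 1)
      else (if b (i/2) < 0 then 2*σ (i-1) + 1 else 2*σ i) with hli_def
  have li_even : ∀ n, li (2*n) = if b n < 0 then 2*σ (2*n) else 2*σ (2*n) + 1 := by
    intro n
    rw [hli_def]
    simp only
    rw [if_pos (by omega : (2*n) % 2 = 0), (by omega : (2*n)/2 = n)]
  have li_odd : ∀ n, li (2*n+1) = if b n < 0 then 2*σ (2*n) + 1 else 2*σ (2*n+1) := by
    intro n
    rw [hli_def]
    simp only
    rw [if_neg (by omega : ¬ (2*n+1) % 2 = 0), (by omega : (2*n+1)/2 = n),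
      (by omega : 2*n+1-1 = 2*n)]
  have hlimono : StrictMono li := by
    apply strictMono_nat_of_lt_succ
    intro i
    rcases Nat.even_or_odd i with he | ho
    · obtain ⟨n, hn⟩ := he
      have hi : i = 2*n := by omega
      subst hi
      rw [li_even n, show 2*n+1 = 2*n+1 from rfl, li_odd n]
      have h1 : σ (2*n) < σ (2*n+1) := hσmono (by omega)
      by_cases hb : b n < 0
      · rw [if_pos hb, if_pos hb]; omega
      · rw [if_neg hb, if_neg hb]; omega
    · obtain ⟨n, hn⟩ := ho
      have hi : i = 2*n+1 := by omega
      subst hi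
      rw [li_odd n, show 2*n+1+1 = 2*(n+1) from by ring, li_even (n+1)]
      have h1 : σ (2*n) < σ (2*(n+1)) := hσmono (by omega)
      have h2 : σ (2*n+1) < σ (2*(n+1)) := hσmono (by omega)
      by_cases hb : b n < 0
      · rw [if_pos hb]
        by_cases hb' : b (n+1) < 0
        · rw [if_pos hb']; omega
        · rw [if_neg hb']; omega
      · rw [if_neg hb]
        by_cases hb' : b (n+1) < 0
        · rw [if_pos hb']; omega
        · rw [if_neg hb']; omega
  set l : ℕ → ℕ := fun i => 2*M + li i with hl_def
  have hlmono : StrictMono l := fun i j hij => by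
    simp only [hl_def]
    have := hlimono hij
    omega
  have hidl : ∀ i, i ≤ l i := by
    intro i
    have h1 : σ i ≥ i := hσge i
    rcases Nat.even_or_odd i with he | ho
    · obtain ⟨n, hn⟩ := he
      have hi : i = 2*n := by omega
      subst hi
      rw [hl_def]
      simp only
      rw [li_even n]
      by_cases hb : b n < 0
      · rw [if_pos hb]
        have := hσge (2*n)
        omega
      · rw [if_neg hb]
        have := hσge (2*n)
        omega
    · obtain ⟨n, hn⟩ := ho
      have hi : i = 2*n+1 := by omega
      subst hi
      rw [hl_def]
      simp only
      rw [li_odd n]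
      by_cases hb : b n < 0
      · rw [if_pos hb]
        have := hσge (2*n)
        omega
      · rw [if_neg hb]
        have := hσge (2*n+1)
        omega
  -- the f-gap estimate per n ∈ F
  have hterm : ∀ n ∈ F, (θ/4) * |b n| ≤ b n * (w (li (2*n+1)) - w (li (2*n))) := by
    intro n hnF
    have hnmF : n ≤ mF := by
      have := Finset.le_sup (f := id) hnF
      simpa using this
    have hcard1 : 2*n < S.card := by omega
    have hcard2 : 2*n+1 < S.card := by omega
    have hstrad1 := hstrad _ (hσS (2*n) hcard1)
    have hstrad2 := hstrad _ (hσS (2*n+1) hcard2)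
    have h2s : θ/4 = 2*s := by rw [hs_def]; ring
    by_cases hb : b n < 0
    · rw [li_even n, li_odd n, if_pos hb, if_pos hb]
      have hgap : w (2*σ (2*n) + 1) - w (2*σ (2*n)) ≤ -(2*s) := by
        have := hstrad1.1
        have := hstrad1.2
        linarith
      have habs : |b n| = -(b n) := abs_of_neg hb
      rw [h2s, habs]
      nlinarith
    · rw [li_even n, li_odd n, if_neg hb, if_neg hb]
      push_neg at hb
      have hgap : 2*s ≤ w (2*σ (2*n+1)) - w (2*σ (2*n) + 1) := by
        have := hstrad1.2
        have := hstrad2.1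
        linarith
      have habs : |b n| = b n := abs_of_nonneg hb
      rw [h2s, habs]
      nlinarith
  -- assemble
  have hflin : f (∑ n ∈ F, b n • (e (l (2*n+1)) - e (l (2*n))))
      = ∑ n ∈ F, b n * (w (li (2*n+1)) - w (li (2*n))) := by
    rw [map_sum]
    refine Finset.sum_congr rfl fun n _ => ?_
    rw [map_smul, map_sub, smul_eq_mul]
  have hlower : (θ/4) * ∑ n ∈ F, |b n|
      ≤ f (∑ n ∈ F, b n • (e (l (2*n+1)) - e (l (2*n)))) := by
    rw [hflin, Finset.mul_sum]
    exact Finset.sum_le_sum hterm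
  have hfle : f (∑ n ∈ F, b n • (e (l (2*n+1)) - e (l (2*n))))
      ≤ ‖∑ n ∈ F, b n • (e (l (2*n+1)) - e (l (2*n)))‖ := by
    have h1 := f.le_opNorm (∑ n ∈ F, b n • (e (l (2*n+1)) - e (l (2*n))))
    rw [hf1, one_mul] at h1
    calc f _ ≤ |f _| := le_abs_self _
      _ = ‖f (∑ n ∈ F, b n • (e (l (2*n+1)) - e (l (2*n))))‖ := (Real.norm_eq_abs _).symm
      _ ≤ _ := h1
  have hqss1 : ‖∑ n ∈ F, b n • (e (l (2*n+1)) - e (l (2*n)))‖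
      ≤ Cu * ‖∑ n ∈ F, b n • (e (2*n+1) - e (2*n))‖ := by
    have h1 := huni (fun n => n) l strictMono_id hlmono hidl (qpc b) (qpairF F)
    rw [qsum_pairF e l b F, qsum_pairF e (fun n => n) b F] at h1
    exact h1
  calc (θ/4) * ∑ n ∈ F, |b n|
      ≤ f (∑ n ∈ F, b n • (e (l (2*n+1)) - e (l (2*n)))) := hlower
    _ ≤ ‖∑ n ∈ F, b n • (e (l (2*n+1)) - e (l (2*n)))‖ := hfle
    _ ≤ Cu * ‖∑ n ∈ F, b n • (e (2*n+1) - e (2*n))‖ := hqss1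

/-- θ* = 0 case: there is a subsequence along which the difference sequence
satisfies a uniform suppression estimate. -/
lemma qsuppression_zero (e : ℕ → X) (B d₀ Cu : ℝ) (hd₀pos : 0 < d₀) (hB1 : 1 ≤ B)
    (hB : ∀ (a : ℕ → ℝ) (m M : ℕ), m ≤ M →
      ‖∑ n ∈ Finset.range m, a n • e n‖ ≤ B * ‖∑ n ∈ Finset.range M, a n • e n‖)
    (hd₀ : ∀ n, d₀ ≤ ‖e n‖) (hCu1 : 1 ≤ Cu)
    (huni : ∀ (k l : ℕ → ℕ), StrictMono k → StrictMono l → (∀ n, k n ≤ l n) →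
      ∀ (a : ℕ → ℝ) (F : Finset ℕ),
        ‖∑ n ∈ F, a n • e (l n)‖ ≤ Cu * ‖∑ n ∈ F, a n • e (k n)‖)
    (hz : ∀ θ : ℝ, 0 < θ → ∃ N : ℕ, 1 ≤ N ∧ ∃ p : ℕ → ℕ, StrictMono p ∧
      ‖∑ j ∈ Finset.range N, (e (p (2*j)) - e (p (2*j+1)))‖ < θ * N) :
    ∃ k : ℕ → ℕ, StrictMono k ∧ ∀ (b : ℕ → ℝ) (F H : Finset ℕ), H ⊆ F →
      ‖∑ n ∈ H, b n • (e (k (2*n+1)) - e (k (2*n)))‖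
        ≤ (Cu + 4*B/d₀) * ‖∑ n ∈ F, b n • (e (k (2*n+1)) - e (k (2*n)))‖ := by
  have hCu0 : (0:ℝ) < Cu := by linarith
  -- translated smallness
  have htrans : ∀ (θ : ℝ), 0 < θ → ∀ R : ℕ, ∃ N : ℕ, 1 ≤ N ∧ ∃ p : ℕ → ℕ, StrictMono p ∧
      R < p 0 ∧ ‖∑ j ∈ Finset.range N, (e (p (2*j)) - e (p (2*j+1)))‖ ≤ θ * N := by
    intro θ hθ R
    obtain ⟨N, hN1, q, hq, hsmall⟩ := hz (θ/Cu) (by positivity)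
    set p : ℕ → ℕ := fun i => q i + (R+1) with hp_def
    have hpmono : StrictMono p := fun i j hij => by
      have := hq hij; simp only [hp_def]; omega
    have hqp : ∀ i, q i ≤ p i := fun i => by simp only [hp_def]; omega
    refine ⟨N, hN1, p, hpmono, by simp only [hp_def]; omega, ?_⟩
    have e1 : ∀ κ : ℕ → ℕ, ∑ i ∈ qpairF (Finset.range N), qpc (fun _ => (-1:ℝ)) i • e (κ i)
        = ∑ j ∈ Finset.range N, (e (κ (2*j)) - e (κ (2*j+1))) := by
      intro κ
      rw [qsum_pairF]
      refine Finset.sum_congr rfl fun j _ => ?_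
      rw [neg_smul, one_smul, neg_sub]
    have h1 := huni q p hq hpmono hqp (qpc (fun _ => (-1:ℝ))) (qpairF (Finset.range N))
    rw [e1 p, e1 q] at h1
    calc ‖∑ j ∈ Finset.range N, (e (p (2*j)) - e (p (2*j+1)))‖
        ≤ Cu * ‖∑ j ∈ Finset.range N, (e (q (2*j)) - e (q (2*j+1)))‖ := h1
      _ ≤ Cu * (θ/Cu * N) := by
          apply mul_le_mul_of_nonneg_left (le_of_lt hsmall) (le_of_lt hCu0)
      _ = θ * N := by field_simp
  -- recursive construction of master pairs and gap configurations
  have hstep : ∀ (n R : ℕ), ∃ st : ℕ × ℕ × ℕ × (ℕ → ℕ),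
      R < st.1 ∧ st.1 < st.2.1 ∧ st.2.1 < st.2.2.2 0 ∧ StrictMono st.2.2.2 ∧ 1 ≤ st.2.2.1 ∧
      ‖∑ j ∈ Finset.range st.2.2.1, (e (st.2.2.2 (2*j)) - e (st.2.2.2 (2*j+1)))‖
        ≤ (1/2)^n * st.2.2.1 := by
    intro n R
    obtain ⟨N, hN1, p, hp, hp0, hsmall⟩ := htrans ((1/2)^n) (by positivity) (R+2)
    exact ⟨⟨R+1, R+2, N, p⟩, show R < R+1 by omega, show R+1 < R+2 by omega,
      show R+2 < p 0 from hp0, hp, hN1, hsmall⟩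
  set st : ℕ → ℕ × ℕ × ℕ × (ℕ → ℕ) := fun n => Nat.rec (Classical.choose (hstep 0 0))
    (fun n prev => Classical.choose (hstep (n+1) (prev.2.2.2 (2*prev.2.2.1 - 1)))) n with hst
  set uu : ℕ → ℕ := fun n => (st n).1 with huu
  set vv : ℕ → ℕ := fun n => (st n).2.1 with hvv
  set TT : ℕ → ℕ := fun n => (st n).2.2.1 with hTT
  set pp : ℕ → ℕ → ℕ := fun n => (st n).2.2.2 with hpp
  have hspec : ∀ n, uu n < vv n ∧ vv n < pp n 0 ∧ StrictMono (pp n) ∧ 1 ≤ TT n ∧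
      ‖∑ j ∈ Finset.range (TT n), (e (pp n (2*j)) - e (pp n (2*j+1)))‖
        ≤ (1/2)^n * TT n := by
    intro n
    cases n with
    | zero =>
      have h := Classical.choose_spec (hstep 0 0)
      exact ⟨h.2.1, h.2.2.1, h.2.2.2.1, h.2.2.2.2.1, h.2.2.2.2.2⟩
    | succ n =>
      have h := Classical.choose_spec (hstep (n+1) (pp n (2*TT n - 1)))
      exact ⟨h.2.1, h.2.2.1, h.2.2.2.1, h.2.2.2.2.1, h.2.2.2.2.2⟩
  have hgap : ∀ n, pp n (2*TT n - 1) < uu (n+1) := by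
    intro n
    have h := Classical.choose_spec (hstep (n+1) (pp n (2*TT n - 1)))
    exact h.1
  have huv : ∀ n, uu n < vv n := fun n => (hspec n).1
  have hvp : ∀ n, vv n < pp n 0 := fun n => (hspec n).2.1
  have hppm : ∀ n, StrictMono (pp n) := fun n => (hspec n).2.2.1
  have hTT1 : ∀ n, 1 ≤ TT n := fun n => (hspec n).2.2.2.1
  have hsmalln : ∀ n, ‖∑ j ∈ Finset.range (TT n), (e (pp n (2*j)) - e (pp n (2*j+1)))‖
      ≤ (1/2)^n * TT n := fun n => (hspec n).2.2.2.2
  -- the master subsequence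
  set k : ℕ → ℕ := fun i => if i % 2 = 0 then uu (i/2) else vv (i/2) with hk_def
  have hk_even : ∀ n, k (2*n) = uu n := by
    intro n
    rw [hk_def]
    simp only
    rw [if_pos (by omega : (2*n) % 2 = 0), (by omega : (2*n)/2 = n)]
  have hk_odd : ∀ n, k (2*n+1) = vv n := by
    intro n
    rw [hk_def]
    simp only
    rw [if_neg (by omega : ¬ (2*n+1) % 2 = 0), (by omega : (2*n+1)/2 = n)]
  have hwin : ∀ n j, j ≤ 2*TT n - 1 → vv n < pp n j ∧ pp n j ≤ pp n (2*TT n - 1) := by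
    intro n j hj
    constructor
    · exact lt_of_lt_of_le (hvp n) ((hppm n).monotone (Nat.zero_le j))
    · exact (hppm n).monotone hj
  have hkmono : StrictMono k := by
    apply strictMono_nat_of_lt_succ
    intro i
    rcases Nat.even_or_odd i with he | ho
    · obtain ⟨n, hn⟩ := he
      have hi : i = 2*n := by omega
      subst hi
      rw [hk_even n, show 2*n+1 = 2*n+1 from rfl, hk_odd n]
      exact huv n
    · obtain ⟨n, hn⟩ := ho
      have hi : i = 2*n+1 := by omega
      subst hi
      rw [hk_odd n, show 2*n+1+1 = 2*(n+1) from by ring, hk_even (n+1)]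
      have h1 := (hwin n (2*TT n - 1) le_rfl).1
      have h2 := hgap n
      omega
  refine ⟨k, hkmono, ?_⟩
  intro b F H hHF
  set dd : ℕ → X := fun n => e (k (2*n+1)) - e (k (2*n)) with hdd
  set x := ∑ n ∈ F, b n • dd n with hx
  have hxnn : (0:ℝ) ≤ ‖x‖ := norm_nonneg _
  set T := ∏ n ∈ F \ H, TT n with hT
  have hTpos : 0 < T := Finset.prod_pos (fun n _ => hTT1 n)
  have hdvd : ∀ n ∈ F \ H, TT n ∣ T := fun n hn => Finset.dvd_prod_of_mem _ hn
  -- the moved index sequences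
  set ll : ℕ → ℕ → ℕ := fun t i => if i/2 ∈ H then k i
      else pp (i/2) (2*(t % TT (i/2)) + i % 2) with hll
  have hmodlt : ∀ t n, 2*(t % TT n) + 1 ≤ 2*TT n - 1 := by
    intro t n
    have h1 := Nat.mod_lt t (hTT1 n)
    omega
  have hll_even : ∀ t n, ll t (2*n) = if n ∈ H then k (2*n) else pp n (2*(t % TT n)) := by
    intro t n
    rw [hll]
    simp only
    rw [(by omega : (2*n)/2 = n), (by omega : (2*n) % 2 = 0)]
    norm_num
  have hll_odd : ∀ t n, ll t (2*n+1) = if n ∈ H then k (2*n+1) else pp n (2*(t % TT n) + 1) := by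
    intro t n
    rw [hll]
    simp only
    rw [(by omega : (2*n+1)/2 = n), (by omega : (2*n+1) % 2 = 1)]
  -- bounds for the values of ll on the pair n
  have hll_lb : ∀ t n, uu n ≤ ll t (2*n) ∧ uu n ≤ ll t (2*n+1) := by
    intro t n
    rw [hll_even, hll_odd]
    have h1 := huv n
    have h2 := (hwin n _ (by have := hmodlt t n; omega : 2*(t % TT n) ≤ 2*TT n - 1)).1
    have h3 := (hwin n _ (hmodlt t n)).1
    constructor
    · split
      · rw [hk_even]
      · omega
    · split
      · rw [hk_odd]; omega
      · omega
  have hll_ub : ∀ t n, ll t (2*n) ≤ pp n (2*TT n - 1) ∧ ll t (2*n+1) ≤ pp n (2*TT n - 1) := by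
    intro t n
    rw [hll_even, hll_odd]
    have h1 := huv n
    have h2 := (hwin n _ (by have := hmodlt t n; omega : 2*(t % TT n) ≤ 2*TT n - 1))
    have h3 := (hwin n _ (hmodlt t n))
    have h4 := hvp n
    constructor
    · split
      · rw [hk_even]; omega
      · exact h2.2
    · split
      · rw [hk_odd]; omega
      · exact h3.2
  have hllmono : ∀ t, StrictMono (ll t) := by
    intro t
    apply strictMono_nat_of_lt_succ
    intro i
    rcases Nat.even_or_odd i with he | ho
    · obtain ⟨n, hn⟩ := he
      have hi : i = 2*n := by omega
      subst hi
      rw [hll_even, show 2*n+1 = 2*n+1 from rfl, hll_odd]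
      by_cases hnH : n ∈ H
      · rw [if_pos hnH, if_pos hnH, hk_even, hk_odd]
        exact huv n
      · rw [if_neg hnH, if_neg hnH]
        exact hppm n (by omega)
    · obtain ⟨n, hn⟩ := ho
      have hi : i = 2*n+1 := by omega
      subst hi
      have h1 := (hll_ub t n).2
      have h2 := (hll_lb t (n+1)).1
      have h3 := hgap n
      have : ll t (2*n+1+1) = ll t (2*(n+1)) := by norm_num; ring_nf
      omega
  have hkll : ∀ t i, k i ≤ ll t i := by
    intro t i
    rcases Nat.even_or_odd i with he | ho
    · obtain ⟨n, hn⟩ := he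
      have hi : i = 2*n := by omega
      subst hi
      rw [hll_even, hk_even]
      split
      · exact le_rfl
      · have := (hwin n _ (by have := hmodlt t n; omega : 2*(t % TT n) ≤ 2*TT n - 1)).1
        have := huv n
        omega
    · obtain ⟨n, hn⟩ := ho
      have hi : i = 2*n+1 := by omega
      subst hi
      rw [hll_odd, hk_odd]
      split
      · exact le_rfl
      · have := (hwin n _ (hmodlt t n)).1
        omega
  -- the comparison vectors
  set y : ℕ → X := fun t => ∑ n ∈ F, b n • (e (ll t (2*n+1)) - e (ll t (2*n))) with hy
  have hybound : ∀ t, ‖y t‖ ≤ Cu * ‖x‖ := by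
    intro t
    have h1 := huni k (ll t) hkmono (hllmono t) (hkll t) (qpc b) (qpairF F)
    rw [qsum_pairF, qsum_pairF] at h1
    exact h1
  set W : ℕ → X := fun n => ∑ j ∈ Finset.range (TT n), (e (pp n (2*j+1)) - e (pp n (2*j)))
    with hW
  have hWnorm : ∀ n, ‖W n‖ ≤ (1/2)^n * TT n := by
    intro n
    have h1 : W n = -(∑ j ∈ Finset.range (TT n), (e (pp n (2*j)) - e (pp n (2*j+1)))) := by
      rw [hW, ← Finset.sum_neg_distrib]
      refine Finset.sum_congr rfl fun j _ => ?_
      rw [neg_sub]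
    rw [h1, norm_neg]
    exact hsmalln n
  have hyd : ∀ t, y t = (∑ n ∈ H, b n • dd n)
      + ∑ n ∈ F \ H, b n • (e (pp n (2*(t % TT n)+1)) - e (pp n (2*(t % TT n)))) := by
    intro t
    rw [hy]
    simp only
    rw [← Finset.sum_sdiff hHF]
    rw [add_comm]
    congr 1
    · refine Finset.sum_congr rfl fun n hn => ?_
      have hnH : n ∈ H := hn
      rw [hll_even, hll_odd, if_pos hnH, if_pos hnH]
    · refine Finset.sum_congr rfl fun n hn => ?_
      have hnH : n ∉ H := (Finset.mem_sdiff.mp hn).2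
      rw [hll_even, hll_odd, if_neg hnH, if_neg hnH]
  set xH := ∑ n ∈ H, b n • dd n with hxH
  have hsum_t : ∑ t ∈ Finset.range T, y t
      = T • xH + ∑ n ∈ F \ H, b n • ((T / TT n) • W n) := by
    rw [Finset.sum_congr rfl (fun t _ => hyd t), Finset.sum_add_distrib,
      Finset.sum_const, Finset.card_range]
    congr 1
    rw [Finset.sum_comm]
    refine Finset.sum_congr rfl fun n hn => ?_
    rw [← Finset.smul_sum]
    congr 1
    have h5 := qmodsum (fun j => e (pp n (2*j+1)) - e (pp n (2*j))) (TT n) (T / TT n)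
    rw [Nat.div_mul_cancel (hdvd n hn)] at h5
    simp only [hW]
    exact h5
  -- coefficient bound
  have hcoef : ∀ n ∈ F, |b n| ≤ 2*B/d₀ * ‖x‖ := by
    intro n hn
    have h1 := qcoefBound e B d₀ hB hd₀ hkmono (qpc b) (qmem_pairF hn)
    rw [qpc_odd] at h1
    rw [qsum_pairF] at h1
    rw [div_mul_eq_mul_div, le_div_iff₀ hd₀pos]
    calc |b n| * d₀ ≤ 2 * B * ‖∑ n ∈ F, b n • (e (k (2*n+1)) - e (k (2*n)))‖ := h1
      _ = 2 * B * ‖x‖ := rfl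
  -- put it together
  have hmain : (T:ℝ) * ‖xH‖ ≤ (T:ℝ) * ((Cu + 4*B/d₀) * ‖x‖) := by
    have h0 : T • xH = ∑ t ∈ Finset.range T, y t
        - ∑ n ∈ F \ H, b n • ((T / TT n) • W n) := by
      rw [hsum_t]; abel
    have h1 : ‖∑ t ∈ Finset.range T, y t‖ ≤ (T:ℝ) * (Cu * ‖x‖) := by
      calc ‖∑ t ∈ Finset.range T, y t‖ ≤ ∑ t ∈ Finset.range T, ‖y t‖ := norm_sum_le _ _
        _ ≤ ∑ _t ∈ Finset.range T, Cu * ‖x‖ := Finset.sum_le_sum fun t _ => hybound t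
        _ = (T:ℝ) * (Cu * ‖x‖) := by
            rw [Finset.sum_const, Finset.card_range, nsmul_eq_mul]
    have h2 : ‖∑ n ∈ F \ H, b n • ((T / TT n) • W n)‖
        ≤ (T:ℝ) * ((4*B/d₀) * ‖x‖) := by
      calc ‖∑ n ∈ F \ H, b n • ((T / TT n) • W n)‖
          ≤ ∑ n ∈ F \ H, ‖b n • ((T / TT n) • W n)‖ := norm_sum_le _ _
        _ ≤ ∑ n ∈ F \ H, (T:ℝ) * ((2*B/d₀) * ‖x‖) * (1/2)^n := by
            refine Finset.sum_le_sum fun n hn => ?_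
            rw [norm_smul, Real.norm_eq_abs, ← Nat.cast_smul_eq_nsmul ℝ, norm_smul,
              Real.norm_natCast]
            have hb := hcoef n (Finset.mem_sdiff.mp hn).1
            have hW1 := hWnorm n
            have hTT0 : (0:ℝ) ≤ (TT n : ℝ) := Nat.cast_nonneg _
            have hcast : ((T / TT n : ℕ):ℝ) * (TT n : ℝ) = (T:ℝ) := by
              rw [← Nat.cast_mul]
              congr 1
              exact Nat.div_mul_cancel (hdvd n hn)
            calc |b n| * (((T / TT n : ℕ):ℝ) * ‖W n‖)
                ≤ (2*B/d₀ * ‖x‖) * (((T / TT n : ℕ):ℝ) * ((1/2)^n * TT n)) := by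
                  apply mul_le_mul hb _ _ _
                  · apply mul_le_mul_of_nonneg_left hW1 (Nat.cast_nonneg _)
                  · positivity
                  · positivity
              _ = (T:ℝ) * ((2*B/d₀) * ‖x‖) * (1/2)^n := by
                  rw [show ((T / TT n : ℕ):ℝ) * ((1/2:ℝ)^n * TT n)
                      = (((T / TT n : ℕ):ℝ) * (TT n:ℝ)) * (1/2)^n by ring, hcast]
                  ring
        _ = (T:ℝ) * ((2*B/d₀) * ‖x‖) * ∑ n ∈ F \ H, ((1:ℝ)/2)^n := by
            rw [← Finset.mul_sum]
        _ ≤ (T:ℝ) * ((2*B/d₀) * ‖x‖) * 2 := by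
            apply mul_le_mul_of_nonneg_left (qgeomBound _)
            positivity
        _ = (T:ℝ) * ((4*B/d₀) * ‖x‖) := by ring
    calc (T:ℝ) * ‖xH‖ = ‖T • xH‖ := by
          rw [← Nat.cast_smul_eq_nsmul ℝ, norm_smul, Real.norm_natCast]
      _ ≤ ‖∑ t ∈ Finset.range T, y t‖ + ‖∑ n ∈ F \ H, b n • ((T / TT n) • W n)‖ := by
          rw [h0]; exact norm_sub_le _ _
      _ ≤ (T:ℝ) * (Cu * ‖x‖) + (T:ℝ) * ((4*B/d₀) * ‖x‖) := by linarith
      _ = (T:ℝ) * ((Cu + 4*B/d₀) * ‖x‖) := by ring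
  have hTR : (0:ℝ) < (T:ℝ) := by exact_mod_cast hTpos
  have := (mul_le_mul_iff_right₀ hTR).mp hmain
  exact this


end ProofSection

/-- **Corollary 2.7.** A seminormalized quasisubsymmetric basic sequence is either
equivalent to the unit vector basis of `ℓ¹`, or has a subsequence whose difference
sequence `(e (k (2n)) - e (k (2n-1)))ₙ` is an unconditional basic sequence.
(With 0-based indexing the consecutive pairs are `(k (2n+1), k (2n))`.) -/
theorem l1_or_unconditional_differences
    {X : Type*} [NormedAddCommGroup X] [NormedSpace ℝ X] [CompleteSpace X]
    (e : ℕ → X) (hbasic : IsBasicSeq e) (hsemi : Seminormalized e)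
    (hqss : QuasiSubsymmetric e) :
    EquivL1Basis e ∨ ∃ k : ℕ → ℕ, StrictMono k ∧
      IsUncondBasicSeq (fun n => e (k (2 * n + 1)) - e (k (2 * n))) := by
  obtain ⟨hne, B, hB1, hB⟩ := hbasic
  obtain ⟨d₀, D, hd₀pos, hsn⟩ := hsemi
  have hd₀ : ∀ n, d₀ ≤ ‖e n‖ := fun n => (hsn n).1
  have hD : ∀ n, ‖e n‖ ≤ D := fun n => (hsn n).2
  have hD0 : (0:ℝ) < D := lt_of_lt_of_le hd₀pos (le_trans (hd₀ 0) (hD 0))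
  obtain ⟨Cu, hCu1, huni⟩ := quniform e hqss B d₀ D hd₀pos hB1 hB hd₀ hD
  right
  by_cases hθ : ∃ θ : ℝ, 0 < θ ∧ ∀ N : ℕ, 1 ≤ N → ∀ p : ℕ → ℕ, StrictMono p →
      θ * N ≤ ‖∑ j ∈ Finset.range N, (e (p (2*j)) - e (p (2*j+1)))‖
  · -- θ* > 0 : the consecutive differences themselves are ℓ¹-below, hence unconditional
    obtain ⟨θ, hθpos, hθall⟩ := hθ
    refine ⟨fun n => n, strictMono_id, ?_⟩
    have hθall' : ∀ N : ℕ, 1 ≤ N → ∀ p : ℕ → ℕ, StrictMono p →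
        θ * N ≤ ‖∑ j ∈ Finset.range N, (e (p (2*j)) - e (p (2*j+1)))‖ := hθall
    have hsup : ∀ (b : ℕ → ℝ) (F H : Finset ℕ), H ⊆ F →
        ‖∑ n ∈ H, b n • (e (2*n+1) - e (2*n))‖
          ≤ (8*D*Cu/θ) * ‖∑ n ∈ F, b n • (e (2*n+1) - e (2*n))‖ := by
      intro b F H hHF
      have hl1 := ql1lower e D Cu θ hD0 hD hCu1 hθpos huni hθall' b F
      have hS : ∑ n ∈ F, |b n| ≤ (4*Cu/θ) * ‖∑ n ∈ F, b n • (e (2*n+1) - e (2*n))‖ := by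
        rw [div_mul_eq_mul_div, le_div_iff₀ hθpos]
        calc (∑ n ∈ F, |b n|) * θ = 4 * ((θ/4) * ∑ n ∈ F, |b n|) := by ring
          _ ≤ 4 * (Cu * ‖∑ n ∈ F, b n • (e (2*n+1) - e (2*n))‖) := by linarith [hl1]
          _ = 4 * Cu * ‖∑ n ∈ F, b n • (e (2*n+1) - e (2*n))‖ := by ring
      calc ‖∑ n ∈ H, b n • (e (2*n+1) - e (2*n))‖
          ≤ ∑ n ∈ H, ‖b n • (e (2*n+1) - e (2*n))‖ := norm_sum_le _ _
        _ ≤ ∑ n ∈ H, |b n| * (2*D) := by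
            refine Finset.sum_le_sum fun n _ => ?_
            rw [norm_smul, Real.norm_eq_abs]
            have h1 : ‖e (2*n+1) - e (2*n)‖ ≤ 2*D := by
              calc ‖e (2*n+1) - e (2*n)‖ ≤ ‖e (2*n+1)‖ + ‖e (2*n)‖ := norm_sub_le _ _
                _ ≤ 2*D := by linarith [hD (2*n+1), hD (2*n)]
            exact mul_le_mul_of_nonneg_left h1 (abs_nonneg _)
        _ = (2*D) * ∑ n ∈ H, |b n| := by rw [← Finset.sum_mul]; ring
        _ ≤ (2*D) * ∑ n ∈ F, |b n| := by
            apply mul_le_mul_of_nonneg_left _ (by linarith)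
            exact Finset.sum_le_sum_of_subset_of_nonneg hHF (fun _ _ _ => abs_nonneg _)
        _ ≤ (2*D) * ((4*Cu/θ) * ‖∑ n ∈ F, b n • (e (2*n+1) - e (2*n))‖) := by
            apply mul_le_mul_of_nonneg_left hS (by linarith)
        _ = (8*D*Cu/θ) * ‖∑ n ∈ F, b n • (e (2*n+1) - e (2*n))‖ := by ring
    have hK₀ : (0:ℝ) ≤ 8*D*Cu/θ := by positivity
    exact quncondOfSuppression e (8*D*Cu/θ) hK₀
      (qdiffBasic e B d₀ hd₀pos hB1 hB hd₀ strictMono_id) hsup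
  · -- θ* = 0 : gap-averaging gives a suppression-unconditional difference subsequence
    push_neg at hθ
    have hz : ∀ θ : ℝ, 0 < θ → ∃ N : ℕ, 1 ≤ N ∧ ∃ p : ℕ → ℕ, StrictMono p ∧
        ‖∑ j ∈ Finset.range N, (e (p (2*j)) - e (p (2*j+1)))‖ < θ * N := by
      intro θ hθ0
      obtain ⟨N, hN1, p, hp, hlt⟩ := hθ θ hθ0
      exact ⟨N, hN1, p, hp, hlt⟩
    obtain ⟨k, hk, hsup⟩ := qsuppression_zero e B d₀ Cu hd₀pos hB1 hB hd₀ hCu1 huni hz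
    have hK₀ : (0:ℝ) ≤ Cu + 4*B/d₀ := by positivity
    exact ⟨k, hk, quncondOfSuppression e (Cu + 4*B/d₀) hK₀
      (qdiffBasic e B d₀ hd₀pos hB1 hB hd₀ hk) hsup⟩
end
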